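/- arXiv:alg-geom/9608024 — 11 statements merged into one kernel-verified Lean document; each statement's English description precedes it below -/
import Mathlib

section
/- Let ℓ ≥ 1 and m = 2ℓ+1. In the symmetric group on {1, …, m}, let μ = (1 2)(3 4)⋯(2ℓ−1 2ℓ) (the product of the transpositions swapping 2i−1 and 2i for i = 1, …, ℓ) and let τ = (2 3)(4 5)⋯(2ℓ 2ℓ+1) (the product of the transpositions swapping 2i and 2i+1 for i = 1, …, ℓ). Then the composite τ∘μ (apply μ first, then τ) is an m-cycle, i.e. a cycle whose support is all of {1, …, m}. -/
namespace Stmt0Aux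

/-- `(2i, 2i+1)` swaps, extended by `1` beyond `ℓ`. -/
def g (ℓ : ℕ) (n : ℕ) : Equiv.Perm (Fin (2*ℓ+1)) :=
  if h : n < ℓ then Equiv.swap ⟨2*n, by omega⟩ ⟨2*n+1, by omega⟩ else 1

/-- `(2i+1, 2i+2)` swaps, extended by `1` beyond `ℓ`. -/
def gg (ℓ : ℕ) (n : ℕ) : Equiv.Perm (Fin (2*ℓ+1)) :=
  if h : n < ℓ then Equiv.swap ⟨2*n+1, by omega⟩ ⟨2*n+2, by omega⟩ else 1

lemma prodg_apply (ℓ : ℕ) (k : ℕ) (hk : k ≤ ℓ) (x : Fin (2*ℓ+1)) :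
    ((((List.range k).map (g ℓ)).prod) x).val =
      if x.val < 2*k then (if x.val % 2 = 0 then x.val + 1 else x.val - 1) else x.val := by
  induction k generalizing x with
  | zero => simp
  | succ k ih =>
    have hkℓ : k < ℓ := by omega
    rw [List.range_succ, List.map_append, List.prod_append]
    simp only [List.map_cons, List.map_nil, List.prod_cons, List.prod_nil, mul_one]
    rw [Equiv.Perm.mul_apply, ih (by omega)]
    have hy : ((g ℓ k) x).val =
        if x.val = 2*k then 2*k+1 else if x.val = 2*k+1 then 2*k else x.val := by
      rw [g, dif_pos hkℓ, Equiv.swap_apply_def]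
      simp only [apply_ite Fin.val, Fin.ext_iff]
    rw [hy]
    split_ifs <;> omega

lemma prodgg_apply (ℓ : ℕ) (k : ℕ) (hk : k ≤ ℓ) (x : Fin (2*ℓ+1)) :
    ((((List.range k).map (gg ℓ)).prod) x).val =
      if 1 ≤ x.val ∧ x.val < 2*k+1 then (if x.val % 2 = 1 then x.val + 1 else x.val - 1)
      else x.val := by
  induction k generalizing x with
  | zero =>
    simp only [List.range_zero, List.map_nil, List.prod_nil, Equiv.Perm.one_apply]
    rw [if_neg (by omega)]
  | succ k ih =>
    have hkℓ : k < ℓ := by omega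
    rw [List.range_succ, List.map_append, List.prod_append]
    simp only [List.map_cons, List.map_nil, List.prod_cons, List.prod_nil, mul_one]
    rw [Equiv.Perm.mul_apply, ih (by omega)]
    have hy : ((gg ℓ k) x).val =
        if x.val = 2*k+1 then 2*k+2 else if x.val = 2*k+2 then 2*k+1 else x.val := by
      rw [gg, dif_pos hkℓ, Equiv.swap_apply_def]
      simp only [apply_ite Fin.val, Fin.ext_iff]
    rw [hy]
    split_ifs <;> omega

end Stmt0Aux

/-- Let `m = 2ℓ+1`. With `μ = (1 2)(3 4)⋯(2ℓ−1 2ℓ)` and `τ = (2 3)(4 5)⋯(2ℓ 2ℓ+1)`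
(written here 0-indexed on `Fin (2ℓ+1)`), the composite `τ ∘ μ` is an `m`-cycle. -/
theorem stmt0 (ℓ : ℕ) (hℓ : 1 ≤ ℓ)
    (μ τ : Equiv.Perm (Fin (2 * ℓ + 1)))
    (hμ : μ = ((List.finRange ℓ).map (fun (i : Fin ℓ) =>
      Equiv.swap (⟨2 * (i : ℕ), by have := i.isLt; omega⟩ : Fin (2 * ℓ + 1))
                 (⟨2 * (i : ℕ) + 1, by have := i.isLt; omega⟩ : Fin (2 * ℓ + 1)))).prod)
    (hτ : τ = ((List.finRange ℓ).map (fun (i : Fin ℓ) =>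
      Equiv.swap (⟨2 * (i : ℕ) + 1, by have := i.isLt; omega⟩ : Fin (2 * ℓ + 1))
                 (⟨2 * (i : ℕ) + 2, by have := i.isLt; omega⟩ : Fin (2 * ℓ + 1)))).prod) :
    (τ * μ).IsCycle ∧ (τ * μ).support = Finset.univ := by
  have hμ' : μ = ((List.range ℓ).map (Stmt0Aux.g ℓ)).prod := by
    rw [hμ]; congr 1
    apply List.ext_getElem (by simp)
    intro i h1 h2
    simp only [List.getElem_map, List.getElem_finRange, List.getElem_range]
    rw [Stmt0Aux.g, dif_pos (by simpa using h2)]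
    simp
  have hτ' : τ = ((List.range ℓ).map (Stmt0Aux.gg ℓ)).prod := by
    rw [hτ]; congr 1
    apply List.ext_getElem (by simp)
    intro i h1 h2
    simp only [List.getElem_map, List.getElem_finRange, List.getElem_range]
    rw [Stmt0Aux.gg, dif_pos (by simpa using h2)]
    simp
  have hμv : ∀ x : Fin (2*ℓ+1), (μ x).val =
      if x.val < 2*ℓ then (if x.val % 2 = 0 then x.val + 1 else x.val - 1) else x.val := by
    intro x; rw [hμ']; exact Stmt0Aux.prodg_apply ℓ ℓ le_rfl x
  have hτv : ∀ x : Fin (2*ℓ+1), (τ x).val =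
      if 1 ≤ x.val ∧ x.val < 2*ℓ+1 then (if x.val % 2 = 1 then x.val + 1 else x.val - 1)
      else x.val := by
    intro x; rw [hτ']; exact Stmt0Aux.prodgg_apply ℓ ℓ le_rfl x
  have key : ∀ x : Fin (2*ℓ+1), ((τ * μ) x).val =
      if x.val % 2 = 0 then (if x.val = 2*ℓ then 2*ℓ - 1 else x.val + 2)
      else (if x.val = 1 then 0 else x.val - 2) := by
    intro x
    rw [Equiv.Perm.mul_apply, hτv, hμv]
    have := x.isLt
    split_ifs <;> omega
  have hfix : ∀ x : Fin (2*ℓ+1), (τ * μ) x ≠ x := by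
    intro x hx
    have h := key x
    rw [hx] at h
    have := x.isLt
    split_ifs at h <;> omega
  have hE : ∀ j : ℕ, j ≤ 2*ℓ →
      (((τ * μ) ^ j) (⟨0, by omega⟩ : Fin (2*ℓ+1))).val =
        if j ≤ ℓ then 2*j else 4*ℓ+1-2*j := by
    intro j
    induction j with
    | zero => intro _; simp
    | succ j ih =>
      intro hj
      rw [pow_succ', Equiv.Perm.mul_apply, key, ih (by omega)]
      split_ifs <;> omega
  have hsupp : (τ * μ).support = Finset.univ := by
    apply Finset.eq_univ_iff_forall.2
    intro x; simpa using hfix x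
  refine ⟨⟨⟨0, by omega⟩, hfix _, ?_⟩, hsupp⟩
  intro y _
  obtain ⟨j, hj, hje⟩ : ∃ j, j ≤ 2*ℓ ∧ (if j ≤ ℓ then 2*j else 4*ℓ+1-2*j) = y.val := by
    have hy := y.isLt
    rcases Nat.even_or_odd y.val with ⟨c, hc⟩ | ⟨c, hc⟩
    · exact ⟨c, by omega, by rw [if_pos (by omega)]; omega⟩
    · exact ⟨2*ℓ - c, by omega, by rw [if_neg (by omega)]; omega⟩
  exact ⟨(j : ℤ), by rw [zpow_natCast]; exact Fin.ext (by rw [hE j hj]; exact hje)⟩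
end

section
/- Let ℓ ≥ 1 and m = 2ℓ+1, and let τ, μ, τ′, μ′ be permutations of a finite set of size m such that each of τ, μ, τ′, μ′ is a product of ℓ disjoint transpositions (an involution with support of size exactly 2ℓ), and such that both composites τ∘μ and τ′∘μ′ are m-cycles. Then the pairs are simultaneously conjugate: there exists a permutation σ of the same set with τ′ = σ∘τ∘σ⁻¹ and μ′ = σ∘μ∘σ⁻¹. -/
open Equiv Equiv.Perm

/-- A permutation commuting with a full-support cycle is a power of it. -/
lemma centralizer_of_cycle_full {α : Type*} [Fintype α] [DecidableEq α]
    {c g : Equiv.Perm α} (hc : c.IsCycle) (hs : c.support = Finset.univ)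
    (hg : Commute g c) : ∃ n : ℤ, g = c ^ n := by
  obtain ⟨hc', hz⟩ := hc.commute_iff.mp hg
  rw [Subgroup.mem_zpowers_iff] at hz
  obtain ⟨k, hk⟩ := hz
  refine ⟨k, ?_⟩
  rwa [ofSubtype_subtypePerm _ (fun x _ => by simp [hs]), eq_comm] at hk

/-- Let `m = 2ℓ+1`. If `τ, μ, τ', μ'` are permutations of an `m`-element set, each a
product of `ℓ` disjoint transpositions (an involution with support of size exactly `2ℓ`),
and both `τ ∘ μ` and `τ' ∘ μ'` are `m`-cycles, then the pairs `(τ, μ)` and `(τ', μ')`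
are simultaneously conjugate. -/
theorem stmt1 {α : Type*} [Fintype α] [DecidableEq α] (ℓ : ℕ) (hℓ : 1 ≤ ℓ)
    (hcard : Fintype.card α = 2 * ℓ + 1)
    (τ μ τ' μ' : Equiv.Perm α)
    (hτ : τ * τ = 1 ∧ τ.support.card = 2 * ℓ)
    (hμ : μ * μ = 1 ∧ μ.support.card = 2 * ℓ)
    (hτ' : τ' * τ' = 1 ∧ τ'.support.card = 2 * ℓ)
    (hμ' : μ' * μ' = 1 ∧ μ'.support.card = 2 * ℓ)
    (hc : (τ * μ).IsCycle ∧ (τ * μ).support = Finset.univ)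
    (hc' : (τ' * μ').IsCycle ∧ (τ' * μ').support = Finset.univ) :
    ∃ σ : Equiv.Perm α, τ' = σ * τ * σ⁻¹ ∧ μ' = σ * μ * σ⁻¹ := by
  set c := τ * μ with hcdef
  set c' := τ' * μ' with hc'def
  have hτinv : τ⁻¹ = τ := by
    rw [eq_comm, eq_inv_iff_mul_eq_one]; exact hτ.1
  have hμinv : μ⁻¹ = μ := by
    rw [eq_comm, eq_inv_iff_mul_eq_one]; exact hμ.1
  have hτ'inv : τ'⁻¹ = τ' := by
    rw [eq_comm, eq_inv_iff_mul_eq_one]; exact hτ'.1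
  have hμ'inv : μ'⁻¹ = μ' := by
    rw [eq_comm, eq_inv_iff_mul_eq_one]; exact hμ'.1
  -- τ inverts c, τ' inverts c'
  have hinv : τ * c * τ⁻¹ = c⁻¹ := by
    calc τ * c * τ⁻¹ = (τ * τ) * (μ * τ) := by rw [hτinv, hcdef]; group
      _ = μ * τ := by rw [hτ.1, one_mul]
      _ = c⁻¹ := by rw [hcdef, mul_inv_rev, hτinv, hμinv]
  have hinv' : τ' * c' * τ'⁻¹ = c'⁻¹ := by
    calc τ' * c' * τ'⁻¹ = (τ' * τ') * (μ' * τ') := by rw [hτ'inv, hc'def]; group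
      _ = μ' * τ' := by rw [hτ'.1, one_mul]
      _ = c'⁻¹ := by rw [hc'def, mul_inv_rev, hτ'inv, hμ'inv]
  -- c and c' are conjugate
  have hconj : IsConj c c' := hc.1.isConj hc'.1 (by rw [hc.2, hc'.2])
  obtain ⟨σ₀, hσ₀'⟩ := isConj_iff.mp hconj
  -- τ₁ := σ₀ τ σ₀⁻¹ also inverts c'
  set τ₁ := σ₀ * τ * σ₀⁻¹ with hτ₁def
  have hτ₁inv : τ₁ * c' * τ₁⁻¹ = c'⁻¹ := by
    rw [hτ₁def, ← hσ₀']
    calc σ₀ * τ * σ₀⁻¹ * (σ₀ * c * σ₀⁻¹) * (σ₀ * τ * σ₀⁻¹)⁻¹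
        = σ₀ * (τ * c * τ⁻¹) * σ₀⁻¹ := by group
      _ = σ₀ * c⁻¹ * σ₀⁻¹ := by rw [hinv]
      _ = (σ₀ * c * σ₀⁻¹)⁻¹ := by group
  -- hence τ'⁻¹ * τ₁ commutes with c'
  have h1 : τ₁ * c' = c'⁻¹ * τ₁ := by
    have h := hτ₁inv
    rw [mul_inv_eq_iff_eq_mul] at h
    rw [h]
  have h2 : τ' * c' = c'⁻¹ * τ' := by
    have h := hinv'
    rw [mul_inv_eq_iff_eq_mul] at h
    rw [h]
  have h2' : τ'⁻¹ * c'⁻¹ = c' * τ'⁻¹ := by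
    have h := congrArg (fun x => τ'⁻¹ * x * τ'⁻¹) h2
    simp only [mul_assoc] at h
    calc τ'⁻¹ * c'⁻¹ = τ'⁻¹ * c'⁻¹ * (τ' * τ'⁻¹) := by group
      _ = τ'⁻¹ * (c'⁻¹ * (τ' * τ'⁻¹)) := by group
      _ = τ'⁻¹ * (τ' * (c' * τ'⁻¹)) := by rw [← h]
      _ = c' * τ'⁻¹ := by group
  have hcomm : Commute (τ'⁻¹ * τ₁) c' := by
    unfold Commute SemiconjBy
    calc τ'⁻¹ * τ₁ * c' = τ'⁻¹ * (τ₁ * c') := by group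
      _ = τ'⁻¹ * (c'⁻¹ * τ₁) := by rw [h1]
      _ = (τ'⁻¹ * c'⁻¹) * τ₁ := by group
      _ = c' * (τ'⁻¹ * τ₁) := by rw [h2']; group
  obtain ⟨n, hn⟩ := centralizer_of_cycle_full hc'.1 hc'.2 hcomm
  -- so τ₁ = τ' * c'^n
  have hτ₁ : τ₁ = τ' * c' ^ n := by
    rw [← hn]; group
  -- order of c' is 2ℓ+1
  have horder : c' ^ (2 * ℓ + 1 : ℕ) = 1 := by
    have h : orderOf c' = 2 * ℓ + 1 := by
      rw [hc'.1.orderOf, hc'.2, Finset.card_univ, hcard]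
    rw [← h]; exact pow_orderOf_eq_one c'
  -- the conjugator
  set t : ℤ := (ℓ + 1 : ℤ) * n with htdef
  set σ := c' ^ t * σ₀ with hσdef
  have hσc : σ * c * σ⁻¹ = c' := by
    rw [hσdef]
    calc c' ^ t * σ₀ * c * (c' ^ t * σ₀)⁻¹
        = c' ^ t * (σ₀ * c * σ₀⁻¹) * (c' ^ t)⁻¹ := by group
      _ = c' ^ t * c' * (c' ^ t)⁻¹ := by rw [hσ₀']
      _ = c' := by group
  -- τ' conjugation: τ' * c'^j * τ'⁻¹ = c'^(-j)
  have hτ'zpow : ∀ j : ℤ, τ' * c' ^ j * τ'⁻¹ = c' ^ (-j) := by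
    intro j
    rw [← conj_zpow, hinv', inv_zpow, ← zpow_neg]
  have hswap : c' ^ t * τ' = τ' * c' ^ (-t) := by
    have h := hτ'zpow (-t)
    rw [mul_inv_eq_iff_eq_mul, neg_neg] at h
    rw [h]
  have hexp : c' ^ (-t + (n + -t)) = 1 := by
    have he : (-t + (n + -t)) = (-(2 * ℓ + 1 : ℤ)) * n := by
      rw [htdef]; push_cast; ring
    rw [he, neg_mul, zpow_neg, zpow_mul]
    norm_cast
    rw [horder]
    simp
  have hστ : σ * τ * σ⁻¹ = τ' := by
    have key : σ * τ * σ⁻¹ = c' ^ t * τ₁ * (c' ^ t)⁻¹ := by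
      rw [hσdef, hτ₁def]; group
    rw [key, hτ₁, ← mul_assoc, hswap]
    calc τ' * c' ^ (-t) * c' ^ n * (c' ^ t)⁻¹
        = τ' * c' ^ (-t + (n + -t)) := by
          rw [← zpow_neg, mul_assoc, mul_assoc, ← zpow_add, ← zpow_add]
      _ = τ' := by rw [hexp, mul_one]
  refine ⟨σ, hστ.symm, ?_⟩
  have hμc : μ = τ * c := by
    rw [hcdef, ← mul_assoc, hτ.1, one_mul]
  have hμ'c : μ' = τ' * c' := by
    rw [hc'def, ← mul_assoc, hτ'.1, one_mul]
  rw [hμc, hμ'c, ← hστ, ← hσc]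
  group
end

section
/- Let ℓ ≥ 1 and m = 2ℓ. In the symmetric group on {1, …, m}, let μ = (1 2)(3 4)⋯(2ℓ−1 2ℓ) (the product of the transpositions swapping 2i−1 and 2i for i = 1, …, ℓ) and let τ = (2 3)(4 5)⋯(2ℓ−2 2ℓ−1) (the product of the transpositions swapping 2i and 2i+1 for i = 1, …, ℓ−1; τ is the identity when ℓ = 1). Then the composite τ∘μ (apply μ first, then τ) is an m-cycle, i.e. a cycle whose support is all of {1, …, m}. -/
/-!
`μ` swaps `2i ↔ 2i + 1` and `τ` swaps `2i + 1 ↔ 2i + 2` while fixing `0` and `2ℓ - 1`, so `τ ∘ μ`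
moves every even point two steps up and every odd point two steps down, turning around at the
ends. It therefore runs once through `0, 2, …, 2ℓ - 2, 2ℓ - 1, 2ℓ - 3, …, 1`: conjugating by this
enumeration (`zigzag`) turns `τ ∘ μ` into the rotation `finRotate (2ℓ)`, a full cycle.
-/

open Equiv Equiv.Perm

section ListProd

variable {ι α : Type*}

theorem prod_map_apply_eq_self (f : ι → Perm α) (l : List ι) {x : α}
    (h : ∀ j ∈ l, f j x = x) : (l.map f).prod x = x := by
  induction l with
  | nil => rfl
  | cons j l ih =>
    rw [List.map_cons, List.prod_cons, mul_apply, ih fun k hk => h k (List.mem_cons_of_mem _ hk),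
      h j List.mem_cons_self]

theorem prod_map_apply_eq_of_nodup (f : ι → Perm α) {l : List ι} (hl : l.Nodup) {i : ι}
    (hi : i ∈ l) {x : α} (h : ∀ j ∈ l, j ≠ i → f j x = x ∧ f j (f i x) = f i x) :
    (l.map f).prod x = f i x := by
  induction l with
  | nil => simp at hi
  | cons j l ih =>
    obtain ⟨hjl, hl⟩ := List.nodup_cons.mp hl
    rw [List.map_cons, List.prod_cons, mul_apply]
    by_cases hji : j = i
    · subst hji
      rw [prod_map_apply_eq_self f l fun k hk =>
        (h k (List.mem_cons_of_mem _ hk) (ne_of_mem_of_not_mem hk hjl)).1]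
    · have hil : i ∈ l := (List.mem_cons.mp hi).resolve_left (Ne.symm hji)
      rw [ih hl hil fun k hk => h k (List.mem_cons_of_mem _ hk), (h j List.mem_cons_self hji).2]

end ListProd

theorem Fin.val_swap_apply {n : ℕ} (a b z : Fin n) :
    (swap a b z : ℕ) = if (z : ℕ) = a then (b : ℕ) else if (z : ℕ) = b then (a : ℕ) else z := by
  simp only [swap_apply_def, Fin.ext_iff]
  split_ifs <;> rfl

theorem Fin.val_finRotate {n : ℕ} (i : Fin n) :
    (finRotate n i : ℕ) = if (i : ℕ) + 1 = n then 0 else (i : ℕ) + 1 := by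
  obtain ⟨n, rfl⟩ : ∃ m, n = m + 1 := ⟨n - 1, by have := i.pos; omega⟩
  simp only [coe_finRotate, Fin.ext_iff, Fin.val_last]
  split_ifs <;> omega

theorem isCycle_and_support_eq_univ_of_semiconj_finRotate {n : ℕ} (hn : 2 ≤ n)
    {σ e : Perm (Fin n)} (h : Function.Semiconj e (finRotate n) σ) :
    σ.IsCycle ∧ σ.support = Finset.univ := by
  have hconj : σ = e * finRotate n * e⁻¹ :=
    eq_mul_inv_iff_mul_eq.mpr (Equiv.ext fun j => (h j).symm)
  rw [hconj, support_conj, support_finRotate_of_le hn]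
  exact ⟨(isCycle_finRotate_of_le hn).conj, Finset.map_univ_equiv _⟩

theorem val_prod_swap_even_odd (ℓ : ℕ) (x : Fin (2 * ℓ)) :
    (((List.finRange ℓ).map (fun (i : Fin ℓ) =>
      Equiv.swap (⟨2 * (i : ℕ), by omega⟩ : Fin (2 * ℓ))
                 (⟨2 * (i : ℕ) + 1, by omega⟩ : Fin (2 * ℓ)))).prod x : ℕ) =
      if (x : ℕ) % 2 = 0 then (x : ℕ) + 1 else (x : ℕ) - 1 := by
  rw [prod_map_apply_eq_of_nodup _ (List.nodup_finRange ℓ)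
    (List.mem_finRange ⟨x / 2, by omega⟩)]
  · simp only [Fin.val_swap_apply]
    split_ifs <;> omega
  · intro j _ hj
    simp only [ne_eq, Fin.ext_iff] at hj
    simp only [Fin.ext_iff, Fin.val_swap_apply]
    split_ifs <;> omega

theorem val_prod_swap_odd_even (ℓ : ℕ) (x : Fin (2 * ℓ)) :
    (((List.finRange (ℓ - 1)).map (fun (i : Fin (ℓ - 1)) =>
      Equiv.swap (⟨2 * (i : ℕ) + 1, by omega⟩ : Fin (2 * ℓ))
                 (⟨2 * (i : ℕ) + 2, by omega⟩ : Fin (2 * ℓ)))).prod x : ℕ) =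
      if (x : ℕ) = 0 ∨ (x : ℕ) = 2 * ℓ - 1 then (x : ℕ)
      else if (x : ℕ) % 2 = 1 then (x : ℕ) + 1 else (x : ℕ) - 1 := by
  by_cases hx : (x : ℕ) = 0 ∨ (x : ℕ) = 2 * ℓ - 1
  · rw [if_pos hx, prod_map_apply_eq_self]
    intro j _
    simp only [Fin.ext_iff, Fin.val_swap_apply]
    split_ifs <;> omega
  · rw [if_neg hx, prod_map_apply_eq_of_nodup _ (List.nodup_finRange (ℓ - 1))
      (List.mem_finRange ⟨(x - 1) / 2, by omega⟩)]
    · simp only [Fin.val_swap_apply]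
      split_ifs <;> omega
    · intro j _ hj
      simp only [ne_eq, Fin.ext_iff] at hj
      simp only [Fin.ext_iff, Fin.val_swap_apply]
      split_ifs <;> omega

noncomputable def zigzag (ℓ : ℕ) : Perm (Fin (2 * ℓ)) :=
  Equiv.ofBijective
    (fun j => ⟨if (j : ℕ) < ℓ then 2 * j else 4 * ℓ - 1 - 2 * j,
      by split_ifs <;> omega⟩)
    (Finite.injective_iff_bijective.mp fun i j hij => by
      simp only [Fin.mk.injEq] at hij
      ext
      split_ifs at hij <;> omega)

theorem val_zigzag (ℓ : ℕ) (j : Fin (2 * ℓ)) :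
    (zigzag ℓ j : ℕ) = if (j : ℕ) < ℓ then 2 * (j : ℕ) else 4 * ℓ - 1 - 2 * (j : ℕ) :=
  rfl

/-- Let `m = 2ℓ`. With `μ = (1 2)(3 4)⋯(2ℓ−1 2ℓ)` and `τ = (2 3)(4 5)⋯(2ℓ−2 2ℓ−1)`
(written here 0-indexed on `Fin (2ℓ)`; `τ` is the identity when `ℓ = 1`), the composite
`τ ∘ μ` is an `m`-cycle. -/
theorem stmt2 (ℓ : ℕ) (hℓ : 1 ≤ ℓ)
    (μ τ : Equiv.Perm (Fin (2 * ℓ)))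
    (hμ : μ = ((List.finRange ℓ).map (fun (i : Fin ℓ) =>
      Equiv.swap (⟨2 * (i : ℕ), by have := i.isLt; omega⟩ : Fin (2 * ℓ))
                 (⟨2 * (i : ℕ) + 1, by have := i.isLt; omega⟩ : Fin (2 * ℓ)))).prod)
    (hτ : τ = ((List.finRange (ℓ - 1)).map (fun (i : Fin (ℓ - 1)) =>
      Equiv.swap (⟨2 * (i : ℕ) + 1, by have := i.isLt; omega⟩ : Fin (2 * ℓ))
                 (⟨2 * (i : ℕ) + 2, by have := i.isLt; omega⟩ : Fin (2 * ℓ)))).prod) :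
    (τ * μ).IsCycle ∧ (τ * μ).support = Finset.univ := by
  subst hμ hτ
  refine isCycle_and_support_eq_univ_of_semiconj_finRotate (e := zigzag ℓ) (by omega)
    fun j => Fin.ext ?_
  rw [mul_apply, val_prod_swap_odd_even, val_prod_swap_even_odd, val_zigzag, val_zigzag,
    Fin.val_finRotate]
  grind
end

section
/- Let ℓ ≥ 1 and m = 2ℓ, and let τ, μ, τ′, μ′ be permutations of a finite set of size m such that μ and μ′ are each a product of ℓ disjoint transpositions (fixed-point-free involutions), τ and τ′ are each a product of ℓ−1 disjoint transpositions (involutions with support of size exactly 2ℓ−2), and both composites τ∘μ and τ′∘μ′ are m-cycles. Then there exists a permutation σ of the same set with τ′ = σ∘τ∘σ⁻¹ and μ′ = σ∘μ∘σ⁻¹. -/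
/-- Let `m = 2ℓ`. If `μ, μ'` are fixed-point-free involutions (products of `ℓ` disjoint
transpositions), `τ, τ'` are involutions with support of size exactly `2ℓ − 2` (products
of `ℓ−1` disjoint transpositions), and both `τ ∘ μ` and `τ' ∘ μ'` are `m`-cycles, then
the pairs `(τ, μ)` and `(τ', μ')` are simultaneously conjugate. -/
theorem stmt3 {α : Type*} [Fintype α] [DecidableEq α] (ℓ : ℕ) (hℓ : 1 ≤ ℓ)
    (hcard : Fintype.card α = 2 * ℓ)
    (τ μ τ' μ' : Equiv.Perm α)
    (hτ : τ * τ = 1 ∧ τ.support.card = 2 * (ℓ - 1))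
    (hμ : μ * μ = 1 ∧ μ.support.card = 2 * ℓ)
    (hτ' : τ' * τ' = 1 ∧ τ'.support.card = 2 * (ℓ - 1))
    (hμ' : μ' * μ' = 1 ∧ μ'.support.card = 2 * ℓ)
    (hc : (τ * μ).IsCycle ∧ (τ * μ).support = Finset.univ)
    (hc' : (τ' * μ').IsCycle ∧ (τ' * μ').support = Finset.univ) :
    ∃ σ : Equiv.Perm α, τ' = σ * τ * σ⁻¹ ∧ μ' = σ * μ * σ⁻¹ := by
  classical
  obtain ⟨hτ2, -⟩ := hτ
  obtain ⟨hμ2, hμs⟩ := hμ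
  obtain ⟨hτ'2, -⟩ := hτ'
  obtain ⟨hμ'2, hμ's⟩ := hμ'
  obtain ⟨hcyc, hsup⟩ := hc
  obtain ⟨hcyc', hsup'⟩ := hc'
  set c : Equiv.Perm α := τ * μ with hc_def
  set c' : Equiv.Perm α := τ' * μ' with hc'_def
  -- fixed-point-freeness
  have hfpf : ∀ ν : Equiv.Perm α, ν.support.card = 2 * ℓ → ∀ x, ν x ≠ x := by
    intro ν h x
    have : ν.support = Finset.univ :=
      Finset.eq_univ_of_card _ (h.trans hcard.symm)
    exact Equiv.Perm.mem_support.mp (this ▸ Finset.mem_univ x)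
  -- basic involution facts
  have hμinv : μ⁻¹ = μ := inv_eq_of_mul_eq_one_right hμ2
  have hμ'inv : μ'⁻¹ = μ' := inv_eq_of_mul_eq_one_right hμ'2
  have hτcμ : τ = c * μ := by
    rw [hc_def, mul_assoc, hμ2, mul_one]
  have hτ'cμ : τ' = c' * μ' := by
    rw [hc'_def, mul_assoc, hμ'2, mul_one]
  have hμcμ : μ * c * μ = c⁻¹ := by
    have h1 : c * (μ * c * μ) = 1 := by
      have := hτ2
      rw [hτcμ] at this
      calc c * (μ * c * μ) = (c * μ) * (c * μ) := by group
        _ = 1 := this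
    exact (eq_inv_of_mul_eq_one_right h1)
  have hμ'cμ' : μ' * c' * μ' = c'⁻¹ := by
    have h1 : c' * (μ' * c' * μ') = 1 := by
      have := hτ'2
      rw [hτ'cμ] at this
      calc c' * (μ' * c' * μ') = (c' * μ') * (c' * μ') := by group
        _ = 1 := this
    exact (eq_inv_of_mul_eq_one_right h1)
  -- conjugate c to c'
  have hconj : IsConj c c' :=
    hcyc.isConj hcyc' (by rw [hsup, hsup'])
  obtain ⟨ρ, hρ⟩ := isConj_iff.mp hconj
  set μ₁ : Equiv.Perm α := ρ * μ * ρ⁻¹ with hμ₁def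
  have hμ₁2 : μ₁ * μ₁ = 1 := by
    rw [hμ₁def]
    calc (ρ * μ * ρ⁻¹) * (ρ * μ * ρ⁻¹) = ρ * (μ * μ) * ρ⁻¹ := by group
      _ = 1 := by rw [hμ2]; group
  have hμ₁inv : μ₁⁻¹ = μ₁ := inv_eq_of_mul_eq_one_right hμ₁2
  have hμ₁s : μ₁.support.card = 2 * ℓ := by
    rw [hμ₁def, Equiv.Perm.card_support_conj, hμs]
  have hμ₁cμ₁ : μ₁ * c' * μ₁ = c'⁻¹ := by
    rw [← hρ, hμ₁def]
    calc (ρ * μ * ρ⁻¹) * (ρ * c * ρ⁻¹) * (ρ * μ * ρ⁻¹)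
        = ρ * (μ * c * μ) * ρ⁻¹ := by group
      _ = ρ * c⁻¹ * ρ⁻¹ := by rw [hμcμ]
      _ = (ρ * c * ρ⁻¹)⁻¹ := by group
  -- pick a base point and orbit structure
  have hpos : 0 < Fintype.card α := by rw [hcard]; omega
  have : Nonempty α := Fintype.card_pos_iff.mp hpos
  obtain ⟨x₀⟩ := this
  have hmoved : ∀ z : α, c' z ≠ z := fun z =>
    Equiv.Perm.mem_support.mp (hsup' ▸ Finset.mem_univ z)
  have horb : ∀ y : α, ∃ i : ℤ, (c' ^ i) x₀ = y := by
    obtain ⟨x, hx, hall⟩ := hcyc'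
    intro y
    exact ((hall (hmoved x₀)).symm.trans (hall (hmoved y)))
  have horder : orderOf c' = 2 * ℓ := by
    rw [hcyc'.orderOf, hsup', Finset.card_univ, hcard]
  -- characterization of fixing x₀
  have hfix : ∀ j : ℤ, (c' ^ j) x₀ = x₀ ↔ ((2 * ℓ : ℕ) : ℤ) ∣ j := by
    intro j
    constructor
    · intro h
      have hone : c' ^ j = 1 := by
        ext y
        obtain ⟨i, hi⟩ := horb y
        have comm : c' ^ j * c' ^ i = c' ^ i * c' ^ j := by
          rw [← zpow_add, ← zpow_add, add_comm]
        calc (c' ^ j) y = (c' ^ j) ((c' ^ i) x₀) := by rw [hi]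
          _ = (c' ^ j * c' ^ i) x₀ := by rw [Equiv.Perm.mul_apply]
          _ = (c' ^ i * c' ^ j) x₀ := by rw [comm]
          _ = (c' ^ i) ((c' ^ j) x₀) := by rw [Equiv.Perm.mul_apply]
          _ = y := by rw [h, hi]
      rw [← horder]
      exact orderOf_dvd_iff_zpow_eq_one.mpr hone
    · rintro ⟨t, rfl⟩
      have h1 : c' ^ (((2 * ℓ : ℕ) : ℤ) * t) = 1 := by
        rw [zpow_mul, zpow_natCast, ← horder, pow_orderOf_eq_one, one_zpow]
      rw [h1]; rfl
  -- semiconjugation of powers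
  have hswap : ∀ i : ℤ, μ₁ * c' ^ i = c' ^ (-i) * μ₁ := by
    intro i
    have h1 : μ₁ * c' * μ₁⁻¹ = c'⁻¹ := by rw [hμ₁inv]; exact hμ₁cμ₁
    have h2 : μ₁ * c' ^ i * μ₁⁻¹ = c' ^ (-i) := by
      calc μ₁ * c' ^ i * μ₁⁻¹ = (μ₁ * c' * μ₁⁻¹) ^ i := by rw [conj_zpow]
        _ = (c'⁻¹) ^ i := by rw [h1]
        _ = c' ^ (-i) := by rw [inv_zpow, zpow_neg]
    calc μ₁ * c' ^ i = μ₁ * c' ^ i * μ₁⁻¹ * μ₁ := by group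
      _ = c' ^ (-i) * μ₁ := by rw [h2]
  obtain ⟨a, ha⟩ := horb (μ₁ x₀)
  have hμ₁app : ∀ i : ℤ, μ₁ ((c' ^ i) x₀) = (c' ^ (a - i)) x₀ := by
    intro i
    calc μ₁ ((c' ^ i) x₀) = (μ₁ * c' ^ i) x₀ := rfl
      _ = (c' ^ (-i) * μ₁) x₀ := by rw [hswap]
      _ = (c' ^ (-i)) (μ₁ x₀) := rfl
      _ = (c' ^ (-i)) ((c' ^ a) x₀) := by rw [ha]
      _ = (c' ^ (-i) * c' ^ a) x₀ := rfl
      _ = (c' ^ (a - i)) x₀ := by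
          rw [← zpow_add, (by ring : -i + a = a - i)]
  -- a is odd
  have haodd : Odd a := by
    rcases Int.even_or_odd a with he | ho
    · exfalso
      obtain ⟨t, ht⟩ := he
      have h1 : μ₁ ((c' ^ t) x₀) = (c' ^ t) x₀ := by
        rw [hμ₁app t, (by omega : a - t = t)]
      exact hfpf μ₁ hμ₁s _ h1
    · exact ho
  -- μ' * μ₁ centralizes c'
  have hcent : (μ' * μ₁) * c' = c' * (μ' * μ₁) := by
    have h1 : μ₁ * c' = c'⁻¹ * μ₁ := by
      have := hswap 1
      simpa using this
    have h2 : μ' * c'⁻¹ = c' * μ' := by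
      rw [← hμ'cμ']
      calc μ' * (μ' * c' * μ') = (μ' * μ') * c' * μ' := by group
        _ = c' * μ' := by rw [hμ'2, one_mul]
    calc (μ' * μ₁) * c' = μ' * (μ₁ * c') := by rw [mul_assoc]
      _ = μ' * (c'⁻¹ * μ₁) := by rw [h1]
      _ = (μ' * c'⁻¹) * μ₁ := by rw [mul_assoc]
      _ = (c' * μ') * μ₁ := by rw [h2]
      _ = c' * (μ' * μ₁) := by rw [mul_assoc]
  -- hence μ' * μ₁ is a power of c'
  obtain ⟨k, hk⟩ := horb ((μ' * μ₁) x₀)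
  have hco : Commute (μ' * μ₁) c' := hcent
  have hgeq : μ' * μ₁ = c' ^ k := by
    ext y
    obtain ⟨i, hi⟩ := horb y
    have hcz : (μ' * μ₁) * c' ^ i = c' ^ i * (μ' * μ₁) := hco.zpow_right i
    calc (μ' * μ₁) y = ((μ' * μ₁) * c' ^ i) x₀ := by rw [← hi]; rfl
      _ = (c' ^ i * (μ' * μ₁)) x₀ := by rw [hcz]
      _ = (c' ^ i) ((μ' * μ₁) x₀) := rfl
      _ = (c' ^ i) ((c' ^ k) x₀) := by rw [hk]
      _ = (c' ^ i * c' ^ k) x₀ := rfl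
      _ = (c' ^ k * c' ^ i) x₀ := by rw [← zpow_add, ← zpow_add, add_comm]
      _ = (c' ^ k) ((c' ^ i) x₀) := rfl
      _ = (c' ^ k) y := by rw [hi]
  have hμ'eq : μ' = c' ^ k * μ₁ := by
    calc μ' = (μ' * μ₁) * μ₁ := by rw [mul_assoc, hμ₁2, mul_one]
      _ = c' ^ k * μ₁ := by rw [hgeq]
  have hμ'app : ∀ i : ℤ, μ' ((c' ^ i) x₀) = (c' ^ (k + a - i)) x₀ := by
    intro i
    calc μ' ((c' ^ i) x₀) = (c' ^ k) (μ₁ ((c' ^ i) x₀)) := by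
          rw [hμ'eq]; rfl
      _ = (c' ^ k) ((c' ^ (a - i)) x₀) := by rw [hμ₁app]
      _ = (c' ^ k * c' ^ (a - i)) x₀ := rfl
      _ = (c' ^ (k + a - i)) x₀ := by
          rw [← zpow_add, (by ring : k + (a - i) = k + a - i)]
  -- k is even
  have hkeven : Even k := by
    rcases Int.even_or_odd k with he | ho
    · exact he
    · exfalso
      obtain ⟨t, ht⟩ : Even (k + a) := ho.add_odd haodd
      have h1 : μ' ((c' ^ t) x₀) = (c' ^ t) x₀ := by
        rw [hμ'app t, (by omega : k + a - t = t)]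
      exact hfpf μ' hμ's _ h1
  obtain ⟨j, hj⟩ := hkeven
  -- the conjugating permutation
  refine ⟨c' ^ j * ρ, ?_, ?_⟩
  · have hμ'c : c' ^ j * μ₁ * (c' ^ j)⁻¹ = μ' := by
      rw [hμ'eq, hj]
      calc c' ^ j * μ₁ * (c' ^ j)⁻¹ = c' ^ j * (μ₁ * c' ^ (-j)) := by
            rw [mul_assoc, zpow_neg]
        _ = c' ^ j * (c' ^ j * μ₁) := by rw [hswap, neg_neg]
        _ = c' ^ (j + j) * μ₁ := by rw [← mul_assoc, ← zpow_add]
    have hτ₁ : ρ * τ * ρ⁻¹ = c' * μ₁ := by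
      rw [hτcμ, ← hρ, hμ₁def]; group
    calc τ' = c' * μ' := hτ'cμ
      _ = c' * (c' ^ j * μ₁ * (c' ^ j)⁻¹) := by rw [hμ'c]
      _ = c' ^ j * (c' * μ₁) * (c' ^ j)⁻¹ := by
          have : c' * c' ^ j = c' ^ j * c' := (Commute.refl c').zpow_right j
          calc c' * (c' ^ j * μ₁ * (c' ^ j)⁻¹)
              = (c' * c' ^ j) * μ₁ * (c' ^ j)⁻¹ := by group
            _ = (c' ^ j * c') * μ₁ * (c' ^ j)⁻¹ := by rw [this]
            _ = c' ^ j * (c' * μ₁) * (c' ^ j)⁻¹ := by group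
      _ = c' ^ j * (ρ * τ * ρ⁻¹) * (c' ^ j)⁻¹ := by rw [hτ₁]
      _ = c' ^ j * ρ * τ * (c' ^ j * ρ)⁻¹ := by group
  · have hμ'c : c' ^ j * μ₁ * (c' ^ j)⁻¹ = μ' := by
      rw [hμ'eq, hj]
      calc c' ^ j * μ₁ * (c' ^ j)⁻¹ = c' ^ j * (μ₁ * c' ^ (-j)) := by
            rw [mul_assoc, zpow_neg]
        _ = c' ^ j * (c' ^ j * μ₁) := by rw [hswap, neg_neg]
        _ = c' ^ (j + j) * μ₁ := by rw [← mul_assoc, ← zpow_add]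
    calc μ' = c' ^ j * μ₁ * (c' ^ j)⁻¹ := hμ'c.symm
      _ = c' ^ j * (ρ * μ * ρ⁻¹) * (c' ^ j)⁻¹ := by rw [hμ₁def]
      _ = c' ^ j * ρ * μ * (c' ^ j * ρ)⁻¹ := by group
end

section
/- Let γ be a nonzero complex number, let ℓ ≥ 1 and m = 2ℓ+1. Then there exists an odd monic polynomial ν ∈ ℂ[x] of degree m (so ν(−x) = −ν(x); in particular the coefficient of x^{m−1} in ν is zero) such that ν + γ = g₁²·h₁ and ν − γ = g₂²·h₂, where for i = 1, 2 the polynomial g_i is monic of degree ℓ, h_i is monic of degree 1, and the product g_i·h_i is squarefree. (In other words, each of ν+γ and ν−γ has exactly ℓ double roots, all its other roots being simple.) -/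
open Polynomial

namespace Stmt4Aux

open Polynomial.Chebyshev

noncomputable def V (n : ℤ) : ℂ[X] := U ℂ n - U ℂ (n - 1)

lemma V_zero : V 0 = 1 := by
  simp [V, show (0:ℤ) - 1 = -1 by ring, U_neg_one, U_zero]

lemma V_one : V 1 = 2 * X - 1 := by
  simp [V, show (1:ℤ) - 1 = 0 by ring, U_one, U_zero]

lemma V_add_two (n : ℤ) : V (n + 2) = 2 * X * V (n + 1) - V n := by
  have h1 := U_add_two ℂ n
  have h2 := U_add_two ℂ (n - 1)
  rw [show n - 1 + 2 = n + 1 by ring, show n - 1 + 1 = n by ring] at h2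
  simp only [V, show n + 2 - 1 = n + 1 by ring, show n + 1 - 1 = n by ring]
  linear_combination h1 - h2

lemma V_cat : ∀ n : ℕ, V ((n:ℤ)+1) ^ 2 - V n * V ((n:ℤ)+2) = 2 - 2*X := by
  intro n
  induction n with
  | zero =>
    have r := V_add_two 0
    norm_num at r ⊢
    rw [V_zero, V_one] at r ⊢
    rw [r]
    ring
  | succ n ih =>
    have r1 := V_add_two n
    have r2 := V_add_two ((n:ℤ)+1)
    push_cast
    rw [show (n:ℤ)+1+2 = n+3 by ring, show (n:ℤ)+1+1 = n+2 by ring] at r2 ⊢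
    linear_combination ih + V ((n:ℤ)+2) * r1 - V ((n:ℤ)+1) * r2

lemma TV : ∀ n : ℕ, ((X + 1) * V n ^ 2 = T ℂ (2*(n:ℤ)+1) + 1)
    ∧ ((X + 1) * V n * V ((n:ℤ)+1) = T ℂ (2*(n:ℤ)+2) + X) := by
  intro n
  induction n with
  | zero =>
    constructor
    · norm_num [V_zero, T_one]
    · norm_num [V_zero, V_one, T_two]; ring
  | succ n ih =>
    obtain ⟨hA, hB⟩ := ih
    have hc := V_cat n
    have r1 := V_add_two n
    have t1 := T_add_two ℂ (2*(n:ℤ)+1)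
    have t2 := T_add_two ℂ (2*(n:ℤ)+2)
    rw [show 2*(n:ℤ)+1+2 = 2*n+3 by ring, show 2*(n:ℤ)+1+1 = 2*n+2 by ring] at t1
    rw [show 2*(n:ℤ)+2+2 = 2*n+4 by ring, show 2*(n:ℤ)+2+1 = 2*n+3 by ring] at t2
    push_cast
    rw [show 2*((n:ℤ)+1)+1 = 2*n+3 by ring, show 2*((n:ℤ)+1)+2 = 2*n+4 by ring,
      show (n:ℤ)+1+1 = n+2 by ring]
    have g1 : (X + 1) * V ((n:ℤ)+1) ^ 2 = T ℂ (2*(n:ℤ)+3) + 1 := by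
      linear_combination (X+1 : ℂ[X]) * hc + (X+1) * V (n:ℤ) * r1 + 2*X*hB - hA - t1
    refine ⟨g1, ?_⟩
    linear_combination (X+1) * V ((n:ℤ)+1) * r1 + 2*X*g1 - hB - t2

lemma V_deg : ∀ n : ℕ, (V n).natDegree = n ∧ (V n).leadingCoeff = 2 ^ n := by
  intro n
  induction n using Nat.strong_induction_on with
  | _ n ih =>
    match n with
    | 0 => simp only [Nat.cast_zero]; rw [V_zero]; simp
    | 1 =>
      simp only [Nat.cast_one]; rw [V_one]
      constructor
      · compute_degree!
      · rw [leadingCoeff]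
        have : (2*X - 1 : ℂ[X]).natDegree = 1 := by compute_degree!
        rw [this]
        simp [coeff_one]
    | (n+2) =>
      obtain ⟨d1, l1⟩ := ih (n+1) (by omega)
      obtain ⟨d0, l0⟩ := ih n (by omega)
      have hne : V ((n:ℤ)+1) ≠ 0 := by
        intro h
        rw [show ((n:ℤ)+1) = ((n+1 : ℕ):ℤ) by push_cast; ring] at h
        rw [h, leadingCoeff_zero] at l1
        exact absurd l1.symm (pow_ne_zero _ (two_ne_zero))
      have r := V_add_two n
      have hq : (2*X : ℂ[X]) ≠ 0 := by
        intro h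
        have := natDegree_zero (R := ℂ) ▸ h ▸ (by compute_degree! : (2*X : ℂ[X]).natDegree = 1)
        omega
      have h2X : (2*X : ℂ[X]).natDegree = 1 := by compute_degree!
      have l2X : (2*X : ℂ[X]).leadingCoeff = 2 := by
        rw [leadingCoeff, h2X]; simp
      have hmul : (2*X*V ((n:ℤ)+1)).natDegree = n + 2 := by
        rw [natDegree_mul hq hne, h2X]
        rw [show ((n:ℤ)+1) = ((n+1 : ℕ):ℤ) by push_cast; ring, d1]
        omega
      have hml : (2*X*V ((n:ℤ)+1)).leadingCoeff = 2 ^ (n+2) := by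
        rw [leadingCoeff_mul, l2X, show ((n:ℤ)+1) = ((n+1 : ℕ):ℤ) by push_cast; ring, l1]
        ring
      have hlt : (V (n:ℤ)).natDegree < (2*X*V ((n:ℤ)+1)).natDegree := by
        rw [hmul, d0]; omega
      have hdeg : (V ((n:ℤ)+2)).natDegree = n+2 := by
        rw [r, natDegree_sub_eq_left_of_natDegree_lt hlt, hmul]
      constructor
      · rw [show (((n+2:ℕ)):ℤ) = (n:ℤ)+2 by push_cast; ring]; exact hdeg
      · rw [show (((n+2:ℕ)):ℤ) = (n:ℤ)+2 by push_cast; ring, leadingCoeff, hdeg, r]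
        rw [coeff_sub, coeff_eq_zero_of_natDegree_lt (by omega : (V (n:ℤ)).natDegree < n+2),
          sub_zero, ← hmul, coeff_natDegree, hml, hmul]

lemma V_ne_zero (n : ℕ) : V n ≠ 0 := by
  intro h
  have := (V_deg n).2
  rw [h, leadingCoeff_zero] at this
  exact (pow_ne_zero n (two_ne_zero : (2:ℂ) ≠ 0)) this.symm

lemma V_eval_neg_one : ∀ n : ℕ, (V n).eval (-1) = (-1)^n * (2*n+1) := by
  intro n
  induction n using Nat.strong_induction_on with
  | _ n ih =>
    match n with
    | 0 => simp only [Nat.cast_zero]; rw [V_zero]; simp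
    | 1 => simp only [Nat.cast_one]; rw [V_one]; simp; ring
    | (n+2) =>
      have h1 := ih (n+1) (by omega)
      have h0 := ih n (by omega)
      have r := congrArg (eval (-1)) (V_add_two n)
      simp only [eval_sub, eval_mul, eval_ofNat, eval_X] at r
      rw [show ((n:ℤ)+1) = ((n+1 : ℕ):ℤ) by push_cast; ring] at r
      rw [show (((n+2:ℕ)):ℤ) = (n:ℤ)+2 by push_cast; ring, r, h1, h0]
      push_cast
      ring

lemma T_eval_neg : ∀ n : ℕ, ∀ y : ℂ, (T ℂ n).eval (-y) = (-1)^n * (T ℂ n).eval y := by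
  intro n
  induction n using Nat.strong_induction_on with
  | _ n ih =>
    match n with
    | 0 => intro y; simp only [Nat.cast_zero]; rw [T_zero]; simp
    | 1 => intro y; simp only [Nat.cast_one]; rw [T_one]; simp
    | (n+2) =>
      intro y
      have h1 := ih (n+1) (by omega) y
      have h0 := ih n (by omega) y
      have r1 := congrArg (eval (-y)) (T_add_two ℂ n)
      have r2 := congrArg (eval y) (T_add_two ℂ n)
      simp only [eval_sub, eval_mul, eval_ofNat, eval_X] at r1 r2
      rw [show ((n:ℤ)+1) = ((n+1 : ℕ):ℤ) by push_cast; ring] at r1 r2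
      rw [show (((n+2:ℕ)):ℤ) = (n:ℤ)+2 by push_cast; ring, r1, r2, h1, h0]
      ring

lemma two_ell_ne (ℓ : ℕ) : (2*(ℓ:ℂ)+1) ≠ 0 := by
  intro h
  have : ((2*ℓ+1 : ℕ) : ℂ) = 0 := by push_cast; linear_combination h
  rw [Nat.cast_eq_zero] at this
  omega

lemma squarefree_of_eval (p : ℂ[X]) (h : ∀ z : ℂ, p.eval z ≠ 0 ∨ p.derivative.eval z ≠ 0) :
    Squarefree p := by
  apply Polynomial.Separable.squarefree
  rw [Polynomial.Separable]
  rw [Polynomial.isCoprime_iff_aeval_ne_zero_of_isAlgClosed ℂ ℂ p (derivative p)]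
  intro a
  simpa using h a

lemma noCommon (ℓ : ℕ) (z : ℂ) :
    ((X+1) * V ℓ).eval z ≠ 0 ∨ ((X+1) * V ℓ).derivative.eval z ≠ 0 := by
  by_contra hcon
  push_neg at hcon
  obtain ⟨h1, h2⟩ := hcon
  have hA := (TV ℓ).1
  have hd : ((X+1) * V ℓ).derivative = V ℓ + (X+1) * (V ℓ).derivative := by
    simp [derivative_mul]
  rw [eval_mul, eval_add, eval_X, eval_one] at h1
  rw [hd, eval_add, eval_mul, eval_add, eval_X, eval_one] at h2
  by_cases hz : z = -1
  · rw [hz, V_eval_neg_one ℓ] at h2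
    simp at h2
    exact two_ell_ne ℓ (by push_cast at h2 ⊢; linear_combination h2)
  · have hz1 : z + 1 ≠ 0 := fun h => hz (by linear_combination h)
    have hV : (V ℓ).eval z = 0 := (mul_eq_zero.mp h1).resolve_left hz1
    have hV' : (V ℓ).derivative.eval z = 0 := by
      rw [hV, zero_add] at h2
      exact (mul_eq_zero.mp h2).resolve_left hz1
    have hT : (T ℂ (2*(ℓ:ℤ)+1)).eval z = -1 := by
      have e := congrArg (eval z) hA
      simp only [eval_mul, eval_pow, eval_add, eval_X, eval_one] at e
      rw [hV] at e
      linear_combination -e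
    have dA := congrArg derivative hA
    rw [derivative_add, derivative_one, add_zero, T_derivative_eq_U,
      show (2*(ℓ:ℤ)+1-1) = 2*(ℓ:ℤ) by ring] at dA
    have hU : (U ℂ (2*(ℓ:ℤ))).eval z = 0 := by
      have e := congrArg (eval z) dA
      simp only [derivative_mul, derivative_pow, derivative_add, derivative_X, derivative_one,
        eval_mul, eval_add, eval_pow, eval_X, eval_one, eval_intCast] at e
      rw [hV, hV'] at e
      simp at e
      rcases e with e | e
      · exact absurd (show (2*(ℓ:ℂ)+1) = 0 by push_cast at e ⊢; linear_combination e)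
          (two_ell_ne ℓ)
      · exact e
    have hU' : (U ℂ (2*(ℓ:ℤ))).derivative.eval z = 0 := by
      have e := congrArg (eval z) (congrArg derivative dA)
      simp only [derivative_mul, derivative_pow, derivative_add, derivative_X, derivative_one,
        derivative_intCast, eval_mul, eval_add, eval_pow, eval_X, eval_one, eval_intCast,
        eval_zero] at e
      rw [hV, hV'] at e
      simp at e
      rcases e with e | e
      · exact absurd (show (2*(ℓ:ℂ)+1) = 0 by push_cast at e ⊢; linear_combination e)
          (two_ell_ne ℓ)
      · exact e
    have hfin := congrArg (eval z) (add_one_mul_T_eq_poly_in_U (R := ℂ) (2*(ℓ:ℤ)))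
    rw [show (2*(ℓ:ℤ)+1) = 2*(ℓ:ℤ)+1 by ring] at hfin
    simp only [eval_mul, eval_add, eval_sub, eval_X, eval_one, eval_pow, eval_intCast] at hfin
    rw [hT, hU, hU'] at hfin
    apply two_ell_ne ℓ
    push_cast at hfin ⊢
    linear_combination -hfin

lemma build (γ : ℂ) (hγ : γ ≠ 0) (ℓ : ℕ) (a : ℂ) (ha : a ^ (2*ℓ+1) = 2^(2*ℓ) * γ) :
    ∃ g h : ℂ[X], g.Monic ∧ g.natDegree = ℓ ∧ h.Monic ∧ h.natDegree = 1 ∧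
      Squarefree (g * h) ∧
      ∀ x : ℂ, (g^2*h).eval x = γ * ((T ℂ (2*(ℓ:ℤ)+1)).eval (a⁻¹*x) + 1) := by
  have ha0 : a ≠ 0 := by
    intro h
    rw [h, zero_pow (by omega : 2*ℓ+1 ≠ 0)] at ha
    exact (mul_ne_zero (pow_ne_zero _ two_ne_zero) hγ) ha.symm
  have hi0 : a⁻¹ ≠ 0 := inv_ne_zero ha0
  set b : ℂ := a^ℓ / 2^ℓ with hb
  have hb0 : b ≠ 0 := div_ne_zero (pow_ne_zero _ ha0) (pow_ne_zero _ two_ne_zero)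
  set q : ℂ[X] := (V ℓ).comp (C a⁻¹ * X) with hqdef
  have hds : (C a⁻¹ * X : ℂ[X]).natDegree = 1 := natDegree_C_mul_X _ hi0
  have hls : (C a⁻¹ * X : ℂ[X]).leadingCoeff = a⁻¹ := by
    rw [leadingCoeff_mul, leadingCoeff_C, leadingCoeff_X, mul_one]
  have hdq : q.natDegree = ℓ := by
    rw [hqdef, natDegree_comp, hds, (V_deg ℓ).1, mul_one]
  have hlq : q.leadingCoeff = 2^ℓ * a⁻¹^ℓ := by
    rw [hqdef, leadingCoeff_comp (by rw [hds]; exact one_ne_zero), (V_deg ℓ).1,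
      (V_deg ℓ).2, hls]
  have hmg : (C b * q).Monic := by
    show (C b * q).leadingCoeff = 1
    rw [leadingCoeff_mul, leadingCoeff_C, hlq, hb]
    field_simp
    rw [one_div, ← mul_pow, mul_inv_cancel₀ ha0, one_pow]
  have hdg : (C b * q).natDegree = ℓ := by rw [natDegree_C_mul hb0, hdq]
  have hid : C b * q * (X + C a) = C (b*a) * (((X+1) * V ℓ).comp (C a⁻¹ * X)) := by
    rw [mul_comp, add_comp, X_comp, one_comp, ← hqdef]
    have h1 : (b*a) * a⁻¹ = b := by field_simp
    have hC : C (b*a) * (C a⁻¹ * X + 1) = C b * (X + C a) := by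
      have e1 : (C (b*a) * C a⁻¹ : ℂ[X]) = C b := by rw [← Polynomial.C_mul, h1]
      have e2 : (C b * C a : ℂ[X]) = C (b*a) := by rw [← Polynomial.C_mul]
      linear_combination (X : ℂ[X]) * e1 - e2
    linear_combination (-q) * hC
  refine ⟨C b * q, X + C a, hmg, hdg, monic_X_add_C a, natDegree_X_add_C a, ?_, ?_⟩
  · rw [hid]
    apply squarefree_of_eval
    intro z
    have hd : (C (b*a) * (((X+1) * V ℓ).comp (C a⁻¹ * X))).derivative
        = C (b*a) * (C a⁻¹ * (((X+1) * V ℓ).derivative.comp (C a⁻¹ * X))) := by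
      rw [derivative_C_mul, derivative_comp, derivative_C_mul_X]
      try ring
    rw [hd]
    simp only [eval_mul, eval_C, eval_comp, eval_X]
    rcases noCommon ℓ (a⁻¹ * z) with h | h
    · left
      simp only [eval_mul] at h
      exact mul_ne_zero (mul_ne_zero hb0 ha0) h
    · right
      exact mul_ne_zero (mul_ne_zero hb0 ha0) (mul_ne_zero hi0 h)
  · intro x
    have eA := congrArg (eval (a⁻¹*x)) (TV ℓ).1
    simp only [eval_mul, eval_pow, eval_add, eval_X, eval_one] at eA
    have key : b^2 * (x + a) = γ * (a⁻¹*x+1) := by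
      have b2a : b^2 * a = γ := by
        rw [hb]
        field_simp
        linear_combination ha
      field_simp
      linear_combination (x+a) * b2a
    simp only [eval_mul, eval_pow, eval_add, eval_X, eval_C, hqdef, eval_comp]
    set v := (V ℓ).eval (a⁻¹*x) with hv
    linear_combination γ * eA + v^2 * key

end Stmt4Aux

/-- For `γ ≠ 0` and `m = 2ℓ+1` there is an odd monic polynomial `ν` of degree `m`
such that each of `ν + γ` and `ν − γ` has exactly `ℓ` double roots, all other roots
simple: `ν ± γ = g² · h` with `g` monic of degree `ℓ`, `h` monic of degree `1`, and
`g · h` squarefree. -/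
theorem stmt4 (γ : ℂ) (hγ : γ ≠ 0) (ℓ : ℕ) (hℓ : 1 ≤ ℓ) :
    ∃ ν : ℂ[X], ν.Monic ∧ ν.natDegree = 2 * ℓ + 1 ∧
      (∀ x : ℂ, ν.eval (-x) = - ν.eval x) ∧
      (∃ g h : ℂ[X], g.Monic ∧ g.natDegree = ℓ ∧ h.Monic ∧ h.natDegree = 1 ∧
        Squarefree (g * h) ∧ ν + C γ = g ^ 2 * h) ∧
      (∃ g h : ℂ[X], g.Monic ∧ g.natDegree = ℓ ∧ h.Monic ∧ h.natDegree = 1 ∧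
        Squarefree (g * h) ∧ ν - C γ = g ^ 2 * h) := by
  obtain ⟨a, ha⟩ := IsAlgClosed.exists_pow_nat_eq (2^(2*ℓ) * γ : ℂ) (by omega : 0 < 2*ℓ+1)
  obtain ⟨g1, h1, mg1, dg1, mh1, dh1, sf1, ev1⟩ := Stmt4Aux.build γ hγ ℓ a ha
  have ha' : (-a) ^ (2*ℓ+1) = 2^(2*ℓ) * (-γ) := by
    rw [Odd.neg_pow ⟨ℓ, by ring⟩, ha]; ring
  obtain ⟨g2, h2, mg2, dg2, mh2, dh2, sf2, ev2⟩ :=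
    Stmt4Aux.build (-γ) (neg_ne_zero.2 hγ) ℓ (-a) ha'
  have mP : (g1^2*h1).Monic := (mg1.pow 2).mul mh1
  have dP : (g1^2*h1).natDegree = 2*ℓ+1 := by
    rw [(mg1.pow 2).natDegree_mul mh1, natDegree_pow, dg1, dh1]
  have hTneg : ∀ y : ℂ, (Polynomial.Chebyshev.T ℂ (2*(ℓ:ℤ)+1)).eval (-y) = -((Polynomial.Chebyshev.T ℂ (2*(ℓ:ℤ)+1)).eval y) := by
    intro y
    have h := Stmt4Aux.T_eval_neg (2*ℓ+1) y
    rw [show ((2*ℓ+1 : ℕ) : ℤ) = 2*(ℓ:ℤ)+1 by push_cast; ring] at h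
    rw [h, pow_succ, pow_mul]
    norm_num
  refine ⟨g1^2*h1 - C γ, ?_, ?_, ?_, ⟨g1, h1, mg1, dg1, mh1, dh1, sf1, by ring⟩,
    ⟨g2, h2, mg2, dg2, mh2, dh2, sf2, ?_⟩⟩
  · rw [sub_eq_add_neg, ← C_neg]
    apply mP.add_of_left
    apply lt_of_le_of_lt (degree_C_le)
    rw [degree_eq_natDegree mP.ne_zero, dP]
    exact_mod_cast Nat.succ_pos _
  · rw [natDegree_sub_C, dP]
  · intro x
    simp only [eval_sub, eval_C]
    rw [ev1 x, ev1 (-x), mul_neg, hTneg]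
    ring
  · apply Polynomial.funext
    intro x
    simp only [eval_sub, eval_C]
    rw [ev1 x, ev2 x, inv_neg, show ((-a⁻¹)*x) = -(a⁻¹*x) from neg_mul a⁻¹ x, hTneg]
    ring
end

section
/- Let γ be a nonzero complex number, let ℓ ≥ 1 and m = 2ℓ+1. Suppose ν and ν′ are monic polynomials in ℂ[x] of degree m whose coefficient of x^{m−1} is zero, and that each of them satisfies: its sum with γ and its difference with γ can each be written as g²·h with g monic of degree ℓ, h monic of degree 1, and g·h squarefree. Then there exists a ∈ ℂ such that either a^m = 1 and ν′(x) = ν(a·x) identically, or a^m = −1 and ν′(x) = −ν(a·x) identically. -/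
/-!
Put `D = X² - 1`. If `ν + γ = g₁² h₁` and `ν - γ = g₂² h₂` with `h₁, h₂` linear, then
`ν² - γ² = (g₁ g₂)² h₁ h₂`, and `h₁ ≠ h₂` because `ν + γ` and `ν - γ` differ by the unit `2γ`.
An affine substitution `ψ` turns `h₁ h₂` into a multiple of `D`, so `w = ν ∘ ψ / γ` solves the
polynomial Pell equation `w² - D q² = 1`. By descent on `deg w`, its solutions are
`w + q √D = ±(X + √D)ⁿ`, i.e. `w = ±Tₙ`; hence `ν ∘ ψ = ±γ Tₘ`. Doing the same for `ν'` gives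
`ν'(x) = t ν(a x + b)` with `t = ±1`, and comparing the coefficients of `xᵐ` and `xᵐ⁻¹` of these
monic polynomials with vanishing `xᵐ⁻¹` coefficient gives `t aᵐ = 1` and `b = 0`.
-/

open Polynomial

theorem Polynomial.Monic.coeff_comp_linear {R : Type*} [CommRing R] {p : R[X]} {n : ℕ}
    (hp : p.Monic) (hd : p.natDegree = n + 1) (hc : p.coeff n = 0) (a b : R) :
    (p.comp (C a * X + C b)).coeff (n + 1) = a ^ (n + 1) ∧
      (p.comp (C a * X + C b)).coeff n = (n + 1) * a ^ n * b := by
  set r := p - X ^ (n + 1)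
  have hr : r.degree < n := by
    refine (degree_lt_iff_coeff_zero _ _).2 fun k hk ↦ ?_
    rcases hk.eq_or_lt with rfl | hk
    · simp [r, hc]
    rcases (Nat.succ_le_of_lt hk).eq_or_lt with rfl | hk'
    · simp [r, ← hd, hp.coeff_natDegree]
    · simp [r, coeff_eq_zero_of_natDegree_lt (by omega : p.natDegree < k), coeff_X_pow, hk'.ne']
  have hrc : ∀ k, n ≤ k → (r.comp (C a * X + C b)).coeff k = 0 := by
    intro k hk
    rcases eq_or_ne r 0 with hr0 | hr0
    · simp [hr0]
    refine coeff_eq_zero_of_natDegree_lt (natDegree_comp_le.trans_lt ?_)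
    have := (natDegree_lt_iff_degree_lt hr0).2 hr
    nlinarith [natDegree_linear_le (a := a) (b := b)]
  have hlin : (C a * X + C b : R[X]) = (X + C b).comp (C a * X) := by simp [add_comm]
  have hpow : ∀ k, ((C a * X + C b) ^ (n + 1)).coeff k =
      b ^ (n + 1 - k) * (n + 1).choose k * a ^ k := by
    intro k
    rw [hlin, ← pow_comp, comp_C_mul_X_coeff, coeff_X_add_C_pow]
  have hsplit :
      p.comp (C a * X + C b) = (C a * X + C b) ^ (n + 1) + r.comp (C a * X + C b) := by
    rw [← X_pow_comp, ← add_comp, add_sub_cancel]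
  rw [hsplit, coeff_add, coeff_add, hpow, hpow, hrc _ n.le_succ, hrc _ le_rfl]
  constructor
  · simp
  · simp only [add_tsub_cancel_left, pow_one, Nat.choose_succ_self_right, Nat.cast_add,
      Nat.cast_one, add_zero]
    ring

section

variable {K : Type*} [Field K]

def IsPellSolution (w q : K[X]) : Prop :=
  w ^ 2 - (X ^ 2 - 1) * q ^ 2 = 1

namespace IsPellSolution

variable {w q : K[X]}

theorem neg_right (h : IsPellSolution w q) : IsPellSolution w (-q) := by
  rwa [IsPellSolution, neg_sq]

-- `(X w - D q) + (X q - w) √D = (w + q √D) (X - √D)`, and `X - √D` has norm `1`.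
theorem descent (h : IsPellSolution w q) :
    IsPellSolution (X * w - (X ^ 2 - 1) * q) (X * q - w) := by
  unfold IsPellSolution at *
  linear_combination h

theorem natDegree_add_one_eq (h : IsPellSolution w q) (hq : q ≠ 0) :
    q.natDegree + 1 = w.natDegree := by
  have hD : (X ^ 2 - 1 : K[X]).natDegree = 2 := by compute_degree!
  have h1 : (X ^ 2 - 1) * q ^ 2 = w ^ 2 - C 1 := by
    rw [C_1]; unfold IsPellSolution at h; linear_combination -h
  have h2 := congrArg natDegree h1
  rw [natDegree_sub_C, natDegree_mul (ne_zero_of_natDegree_gt (n := 0) (by omega))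
    (pow_ne_zero 2 hq), hD, natDegree_pow, natDegree_pow] at h2
  omega

theorem exists_eq_C_of_natDegree_eq_zero (h : IsPellSolution w q) (hw : w.natDegree = 0) :
    ∃ s : K, s ^ 2 = 1 ∧ w = C s ∧ q = 0 := by
  have hq : q = 0 := by
    by_contra hq
    have := h.natDegree_add_one_eq hq
    omega
  refine ⟨w.coeff 0, ?_, Polynomial.eq_C_of_natDegree_eq_zero hw, hq⟩
  have h1 : C (w.coeff 0 ^ 2) = C 1 := by
    rw [C_pow, ← Polynomial.eq_C_of_natDegree_eq_zero hw, C_1]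
    simpa [IsPellSolution, hq] using h
  exact C_injective h1

theorem natDegree_lt (h : IsPellSolution w q) (hw : 0 < w.natDegree) :
    q.natDegree < w.natDegree := by
  rcases eq_or_ne q 0 with rfl | hq
  · simpa using hw
  · have := h.natDegree_add_one_eq hq
    omega

theorem natDegree_descent_lt (h : IsPellSolution w q) (hq : q.natDegree < w.natDegree)
    (hc : (X * q + w).coeff w.natDegree ≠ 0) :
    (X * w - (X ^ 2 - 1) * q).natDegree < w.natDegree := by
  obtain ⟨N, hN⟩ : ∃ N, w.natDegree = N + 1 := Nat.exists_eq_succ_of_ne_zero (by omega)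
  rw [hN] at hq hc ⊢
  have hsum : (X * q + w).natDegree = N + 1 := by
    refine le_antisymm ((natDegree_add_le _ _).trans (max_le ?_ hN.le))
      (le_natDegree_of_ne_zero hc)
    exact natDegree_mul_le.trans (by rw [natDegree_X]; omega)
  have hsum0 : X * q + w ≠ 0 := by rintro h0; simp [h0] at hsum
  have hprod : (X * q - w) * (X * q + w) = q ^ 2 - 1 := by
    unfold IsPellSolution at h
    linear_combination -h
  have hX : (X * (X * q - w)).natDegree ≤ N := by
    rcases eq_or_ne (X * q - w) 0 with hz | hz
    · simp [hz]
    have h1 := natDegree_mul hz hsum0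
    rw [hprod, hsum] at h1
    have h2 : (q ^ 2 - 1).natDegree ≤ 2 * N :=
      (natDegree_sub_le _ _).trans (max_le (natDegree_pow_le.trans (by omega)) (by simp))
    rw [natDegree_X_mul hz]
    omega
  calc (X * w - (X ^ 2 - 1) * q).natDegree = (q - X * (X * q - w)).natDegree := by
        congr 1; ring
    _ ≤ N := (natDegree_sub_le _ _).trans (max_le (by omega) hX)
    _ < N + 1 := N.lt_succ_self

theorem exists_eq_chebyshev [NeZero (2 : K)] (h : IsPellSolution w q) :
    ∃ n : ℤ, ∃ s : K, s ^ 2 = 1 ∧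
      w = C s * Chebyshev.T K n ∧ q = C s * Chebyshev.U K (n - 1) := by
  induction hN : w.natDegree using Nat.strong_induction_on generalizing w q with
  | _ N ih =>
  rcases N.eq_zero_or_pos with rfl | hpos
  · obtain ⟨s, hs, rfl, rfl⟩ := h.exists_eq_C_of_natDegree_eq_zero hN
    exact ⟨0, s, hs, by simp, by simp⟩
  -- `T n + U (n - 1) √D = (X + √D) ^ n`, so undoing `descent` raises `n` by one.
  have ascent : ∀ q', IsPellSolution w q' → q'.natDegree < w.natDegree →
      (X * q' + w).coeff w.natDegree ≠ 0 → ∃ n : ℤ, ∃ s : K, s ^ 2 = 1 ∧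
        w = C s * Chebyshev.T K n ∧ q' = C s * Chebyshev.U K (n - 1) := by
    intro q' h' hq' hc
    obtain ⟨n, s, hs, hw', hq''⟩ :=
      ih _ (hN ▸ h'.natDegree_descent_lt hq' hc) h'.descent rfl
    have hT := Chebyshev.T_eq_X_mul_T_sub_pol_U K (n - 1)
    have hU := Chebyshev.U_eq_X_mul_U_add_T K (n - 1)
    rw [show n - 1 + 2 = n + 1 by ring, sub_add_cancel] at hT
    rw [sub_add_cancel] at hU
    refine ⟨n + 1, s, hs, ?_, ?_⟩
    · linear_combination X * hw' + (X ^ 2 - 1) * hq'' - C s * hT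
    · rw [add_sub_cancel_right]
      linear_combination X * hq'' + hw' - C s * hU
  have hq := h.natDegree_lt (hN ▸ hpos)
  have hcoeff : (X * q + w).coeff N + (X * -q + w).coeff N = 2 * w.coeff N := by
    simp only [coeff_add, mul_neg, coeff_neg]; ring
  -- Replacing `q` by `-q` (and `n` by `-n`), we may assume that `X q + w` has full degree.
  by_cases hc : (X * q + w).coeff N = 0
  · rw [hc, zero_add] at hcoeff
    have hw0 : w ≠ 0 := ne_zero_of_natDegree_gt (n := 0) (by omega)
    obtain ⟨n, s, hs, hw, hq'⟩ := ascent (-q) h.neg_right (by rwa [natDegree_neg]) (by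
      rw [hN, hcoeff, ← hN]
      exact mul_ne_zero two_ne_zero (leadingCoeff_ne_zero.2 hw0))
    refine ⟨-n, s, hs, by rwa [Chebyshev.T_neg], ?_⟩
    rw [Chebyshev.U_neg_sub_one]
    linear_combination -hq'
  · exact ascent q h hq (hN ▸ hc)

end IsPellSolution

theorem exists_comp_eq_C_mul_chebyshev_T [NeZero (2 : K)] {f g : K[X]} {γ a b : K}
    (hγ : γ ≠ 0) (hab : a ≠ b) (h : f ^ 2 - C γ ^ 2 = g ^ 2 * ((X + C a) * (X + C b))) :
    ∃ e u s : K, e ≠ 0 ∧ s ^ 2 = 1 ∧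
      f.comp (C e * X + C u) = C (s * γ) * Chebyshev.T K f.natDegree := by
  set e := (a - b) / 2 with he_def
  set u := -(a + b) / 2 with hu_def
  set ψ : K[X] := C e * X + C u
  have he : e ≠ 0 := div_ne_zero (sub_ne_zero.2 hab) two_ne_zero
  -- `ψ` sends `1` and `-1` to the roots `-a` and `-b`.
  have hψ : ((X + C a) * (X + C b)).comp ψ = C e ^ 2 * (X ^ 2 - 1) := by
    have ha : C u + C a = C e := by
      rw [← C_add]; congr 1; rw [he_def, hu_def]; field_simp; ring
    have hb : C u + C b = -C e := by
      rw [← C_add, ← C_neg]; congr 1; rw [he_def, hu_def]; field_simp; ring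
    simp only [ψ, mul_comp, add_comp, X_comp, C_comp]
    linear_combination (C e * X + C u + C b) * ha + (C e * X + C e) * hb
  have hγ' : C γ⁻¹ * C γ = (1 : K[X]) := by rw [← C_mul, inv_mul_cancel₀ hγ, C_1]
  have hpell : IsPellSolution (C γ⁻¹ * f.comp ψ) (C γ⁻¹ * C e * g.comp ψ) := by
    have h' := congrArg (·.comp ψ) h
    simp only [sub_comp, mul_comp, pow_comp, C_comp, hψ] at h'
    unfold IsPellSolution
    linear_combination (C γ⁻¹) ^ 2 * h' + (C γ⁻¹ * C γ + 1) * hγ'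
  obtain ⟨n, s, hs, hw, -⟩ := hpell.exists_eq_chebyshev
  have hs0 : s ≠ 0 := by rintro rfl; simp at hs
  have hn : f.natDegree = n.natAbs := by
    have := congrArg natDegree hw
    rwa [natDegree_C_mul (inv_ne_zero hγ), natDegree_comp, natDegree_linear he, mul_one,
      natDegree_C_mul hs0, Chebyshev.natDegree_T] at this
  refine ⟨e, u, s, he, hs, ?_⟩
  rw [hn, Chebyshev.T_natAbs, C_mul]
  linear_combination C γ * hw - f.comp ψ * hγ'

theorem exists_sq_sub_C_sq_eq [NeZero (2 : K)] {f g₁ g₂ h₁ h₂ : K[X]} {γ : K} (hγ : γ ≠ 0)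
    (hh₁ : h₁.Monic) (hh₁d : h₁.natDegree = 1) (hh₂ : h₂.Monic) (hh₂d : h₂.natDegree = 1)
    (hf₁ : f + C γ = g₁ ^ 2 * h₁) (hf₂ : f - C γ = g₂ ^ 2 * h₂) :
    ∃ a b : K, a ≠ b ∧ f ^ 2 - C γ ^ 2 = (g₁ * g₂) ^ 2 * ((X + C a) * (X + C b)) := by
  refine ⟨h₁.coeff 0, h₂.coeff 0, fun hab ↦ ?_, ?_⟩
  · have h₁₂ : h₁ = h₂ := by rw [hh₁.eq_X_add_C hh₁d, hh₂.eq_X_add_C hh₂d, hab]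
    have hdvd : h₁ ∣ C (2 * γ) := by
      refine ⟨g₁ ^ 2 - g₂ ^ 2, ?_⟩
      rw [C_mul, C_ofNat]
      linear_combination hf₁ - hf₂ + g₂ ^ 2 * h₁₂
    have := natDegree_eq_zero_of_isUnit (isUnit_of_dvd_unit hdvd
      (isUnit_C.2 (mul_ne_zero two_ne_zero hγ).isUnit))
    omega
  · rw [← hh₁.eq_X_add_C hh₁d, ← hh₂.eq_X_add_C hh₂d]
    linear_combination (f - C γ) * hf₁ + g₁ ^ 2 * h₁ * hf₂

theorem exists_comp_eq_C_mul_chebyshev_T_of_add_sub [NeZero (2 : K)] {f g₁ g₂ h₁ h₂ : K[X]}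
    {γ : K} (hγ : γ ≠ 0) (hh₁ : h₁.Monic) (hh₁d : h₁.natDegree = 1) (hh₂ : h₂.Monic)
    (hh₂d : h₂.natDegree = 1) (hf₁ : f + C γ = g₁ ^ 2 * h₁) (hf₂ : f - C γ = g₂ ^ 2 * h₂) :
    ∃ e u s : K, e ≠ 0 ∧ s ^ 2 = 1 ∧
      f.comp (C e * X + C u) = C (s * γ) * Chebyshev.T K f.natDegree :=
  have ⟨_, _, hab, h⟩ := exists_sq_sub_C_sq_eq hγ hh₁ hh₁d hh₂ hh₂d hf₁ hf₂
  exists_comp_eq_C_mul_chebyshev_T hγ hab h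

theorem eq_C_mul_comp_of_comp_eq {f f' P : K[X]} {e e' u u' c c' : K} (hc : c ≠ 0)
    (he' : e' ≠ 0) (h : f.comp (C e * X + C u) = C c * P)
    (h' : f'.comp (C e' * X + C u') = C c' * P) :
    f' = C (c' / c) * f.comp (C (e / e') * X + C (u - e / e' * u')) := by
  set ψ' : K[X] := C e'⁻¹ * (X - C u')
  have hinv' : C e' * C e'⁻¹ = (1 : K[X]) := by rw [← C_mul, mul_inv_cancel₀ he', C_1]
  have hinv : (C e' * X + C u').comp ψ' = X := by
    simp only [ψ', add_comp, mul_comp, C_comp, X_comp]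
    linear_combination (X - C u') * hinv'
  have hcomp : (C e * X + C u).comp ψ' = C (e / e') * X + C (u - e / e' * u') := by
    simp only [ψ', add_comp, mul_comp, C_comp, X_comp, div_eq_mul_inv, C_mul, C_sub]
    ring
  calc f' = (f'.comp (C e' * X + C u')).comp ψ' := by rw [comp_assoc, hinv, comp_X]
    _ = C (c' / c) * (f.comp (C e * X + C u)).comp ψ' := by
      rw [h, h', mul_comp, mul_comp, C_comp, C_comp, ← mul_assoc, ← C_mul, div_mul_cancel₀ _ hc]
    _ = _ := by rw [comp_assoc, hcomp]

theorem mul_pow_eq_one_and_eq_zero_of_eq_C_mul_comp [CharZero K] {f f' : K[X]} {n : ℕ}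
    {t a b : K} (hf : f.Monic) (hf' : f'.Monic) (hd : f.natDegree = n + 1)
    (hd' : f'.natDegree = n + 1) (hc : f.coeff n = 0) (hc' : f'.coeff n = 0)
    (h : f' = C t * f.comp (C a * X + C b)) :
    t * a ^ (n + 1) = 1 ∧ b = 0 := by
  obtain ⟨htop, hsub⟩ := hf.coeff_comp_linear hd hc a b
  have h₁ := congrArg (coeff · (n + 1)) h
  have h₂ := congrArg (coeff · n) h
  simp only [coeff_C_mul, htop, hsub] at h₁ h₂
  rw [show f'.coeff (n + 1) = 1 from hd' ▸ hf'.coeff_natDegree] at h₁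
  refine ⟨h₁.symm, ?_⟩
  have ht : t ≠ 0 := left_ne_zero_of_mul_eq_one h₁.symm
  have ha : a ≠ 0 := fun ha ↦ by simp [ha] at h₁
  rw [hc'] at h₂
  simpa [ht, ha, Nat.cast_add_one_ne_zero] using h₂.symm

end

theorem stmt5_general (γ : ℂ) (hγ : γ ≠ 0) (ℓ : ℕ)
    (ν ν' : ℂ[X])
    (hν : ν.Monic ∧ ν.natDegree = 2 * ℓ + 1 ∧ ν.coeff (2 * ℓ) = 0 ∧
      (∃ g h : ℂ[X], g.Monic ∧ g.natDegree = ℓ ∧ h.Monic ∧ h.natDegree = 1 ∧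
        Squarefree (g * h) ∧ ν + C γ = g ^ 2 * h) ∧
      (∃ g h : ℂ[X], g.Monic ∧ g.natDegree = ℓ ∧ h.Monic ∧ h.natDegree = 1 ∧
        Squarefree (g * h) ∧ ν - C γ = g ^ 2 * h))
    (hν' : ν'.Monic ∧ ν'.natDegree = 2 * ℓ + 1 ∧ ν'.coeff (2 * ℓ) = 0 ∧
      (∃ g h : ℂ[X], g.Monic ∧ g.natDegree = ℓ ∧ h.Monic ∧ h.natDegree = 1 ∧
        Squarefree (g * h) ∧ ν' + C γ = g ^ 2 * h) ∧
      (∃ g h : ℂ[X], g.Monic ∧ g.natDegree = ℓ ∧ h.Monic ∧ h.natDegree = 1 ∧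
        Squarefree (g * h) ∧ ν' - C γ = g ^ 2 * h)) :
    ∃ a : ℂ, (a ^ (2 * ℓ + 1) = 1 ∧ ∀ x : ℂ, ν'.eval x = ν.eval (a * x)) ∨
      (a ^ (2 * ℓ + 1) = -1 ∧ ∀ x : ℂ, ν'.eval x = - ν.eval (a * x)) := by
  obtain ⟨hmo, hdeg, hcoeff, ⟨_, _, -, -, hh₁, hh₁d, -, hf₁⟩, ⟨_, _, -, -, hh₂, hh₂d, -, hf₂⟩⟩ := hν
  obtain ⟨hmo', hdeg', hcoeff', ⟨_, _, -, -, hh₁', hh₁d', -, hf₁'⟩,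
    ⟨_, _, -, -, hh₂', hh₂d', -, hf₂'⟩⟩ := hν'
  obtain ⟨e, u, s, he, hs, hψ⟩ :=
    exists_comp_eq_C_mul_chebyshev_T_of_add_sub hγ hh₁ hh₁d hh₂ hh₂d hf₁ hf₂
  obtain ⟨e', u', s', he', hs', hψ'⟩ :=
    exists_comp_eq_C_mul_chebyshev_T_of_add_sub hγ hh₁' hh₁d' hh₂' hh₂d' hf₁' hf₂'
  rw [hdeg] at hψ
  rw [hdeg'] at hψ'
  have hs0 : s ≠ 0 := by rintro rfl; simp at hs
  have hrel := eq_C_mul_comp_of_comp_eq (mul_ne_zero hs0 hγ) he' hψ hψ'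
  obtain ⟨hpow, hb⟩ :=
    mul_pow_eq_one_and_eq_zero_of_eq_C_mul_comp hmo hmo' hdeg hdeg' hcoeff hcoeff' hrel
  set t := s' * γ / (s * γ)
  have ht : t ^ 2 = 1 := by
    rw [div_pow, mul_pow, mul_pow, hs, hs', div_self (by simpa using hγ)]
  have hat : (e / e') ^ (2 * ℓ + 1) = t := by
    linear_combination t * hpow - (e / e') ^ (2 * ℓ + 1) * ht
  refine ⟨e / e', ?_⟩
  rcases sq_eq_one_iff.1 ht with h | h
  · exact Or.inl ⟨hat.trans h, fun x ↦ by rw [hrel, hb, h]; simp⟩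
  · exact Or.inr ⟨hat.trans h, fun x ↦ by rw [hrel, hb, h]; simp⟩

/-- Uniqueness, up to `x ↦ ax` with `aᵐ = 1` (and a global sign with `aᵐ = −1`), of a
monic degree-`m = 2ℓ+1` polynomial with vanishing `x^{m−1}` coefficient such that each of
`ν + γ` and `ν − γ` has exactly `ℓ` double roots and all other roots simple. -/
theorem stmt5 (γ : ℂ) (hγ : γ ≠ 0) (ℓ : ℕ) (hℓ : 1 ≤ ℓ)
    (ν ν' : ℂ[X])
    (hν : ν.Monic ∧ ν.natDegree = 2 * ℓ + 1 ∧ ν.coeff (2 * ℓ) = 0 ∧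
      (∃ g h : ℂ[X], g.Monic ∧ g.natDegree = ℓ ∧ h.Monic ∧ h.natDegree = 1 ∧
        Squarefree (g * h) ∧ ν + C γ = g ^ 2 * h) ∧
      (∃ g h : ℂ[X], g.Monic ∧ g.natDegree = ℓ ∧ h.Monic ∧ h.natDegree = 1 ∧
        Squarefree (g * h) ∧ ν - C γ = g ^ 2 * h))
    (hν' : ν'.Monic ∧ ν'.natDegree = 2 * ℓ + 1 ∧ ν'.coeff (2 * ℓ) = 0 ∧
      (∃ g h : ℂ[X], g.Monic ∧ g.natDegree = ℓ ∧ h.Monic ∧ h.natDegree = 1 ∧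
        Squarefree (g * h) ∧ ν' + C γ = g ^ 2 * h) ∧
      (∃ g h : ℂ[X], g.Monic ∧ g.natDegree = ℓ ∧ h.Monic ∧ h.natDegree = 1 ∧
        Squarefree (g * h) ∧ ν' - C γ = g ^ 2 * h)) :
    ∃ a : ℂ, (a ^ (2 * ℓ + 1) = 1 ∧ ∀ x : ℂ, ν'.eval x = ν.eval (a * x)) ∨
      (a ^ (2 * ℓ + 1) = -1 ∧ ∀ x : ℂ, ν'.eval x = - ν.eval (a * x)) :=
  stmt5_general γ hγ ℓ ν ν' hν hν'
end

section
/- Let γ be a nonzero complex number, let ℓ ≥ 1 and m = 2ℓ. Then there exists an even monic polynomial ν ∈ ℂ[x] of degree m (so ν(−x) = ν(x); in particular the coefficient of x^{m−1} in ν is zero) such that ν + γ = g² for some monic squarefree polynomial g of degree ℓ, and ν − γ = h²·q where h is monic of degree ℓ−1, q is monic of degree 2, and the product h·q is squarefree. (In other words, ν+γ has exactly m/2 double roots and ν−γ has exactly (m−2)/2 double roots, all other roots being simple.) -/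
open Polynomial

open Polynomial.Chebyshev

private lemma sf_helper (p : ℂ[X]) (hp : p ≠ 0)
    (h : ∀ z : ℂ, p.eval z = 0 → p.derivative.eval z ≠ 0) : Squarefree p := by
  classical
  rw [← PerfectField.separable_iff_squarefree, Polynomial.separable_def,
    ← EuclideanDomain.gcd_isUnit_iff]
  by_contra hu
  have hd0 : EuclideanDomain.gcd p p.derivative ≠ 0 := by
    intro h0
    exact hp (EuclideanDomain.gcd_eq_zero_iff.mp h0).1
  have hdeg : (EuclideanDomain.gcd p p.derivative).degree ≠ 0 := fun h0 =>
    hu (Polynomial.isUnit_iff_degree_eq_zero.mpr h0)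
  obtain ⟨z, hz⟩ := IsAlgClosed.exists_root (EuclideanDomain.gcd p p.derivative) hdeg
  have h1 : p.eval z = 0 := by
    obtain ⟨e, he⟩ := EuclideanDomain.gcd_dvd_left p p.derivative
    rw [he, eval_mul, hz, zero_mul]
  have h2 : p.derivative.eval z = 0 := by
    obtain ⟨e, he⟩ := EuclideanDomain.gcd_dvd_right p p.derivative
    rw [he, eval_mul, hz, zero_mul]
  exact h z h1 h2

private lemma V_step (n : ℤ) :
    T ℂ (n+1) * U ℂ (n+1) - T ℂ (n+2) * U ℂ n
      = T ℂ n * U ℂ n - T ℂ (n+1) * U ℂ (n-1) := by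
  have hT := T_add_two ℂ n
  have hU := U_add_one ℂ n
  linear_combination (norm := ring_nf) (T ℂ (n+1)) * hU - (U ℂ n) * hT

private lemma V_one (n : ℤ) :
    T ℂ (n+1) * U ℂ (n+1) - T ℂ (n+2) * U ℂ n = 1 := by
  induction n using Polynomial.Chebyshev.induct with
  | zero =>
    norm_num [T_one, U_one, T_two, U_zero]
    ring
  | one =>
    have h := V_step 1
    norm_num [T_one, U_one, T_two, U_zero] at h ⊢
    rw [h]; ring
  | add_two k ih1 ih2 =>
    have h := V_step (k+2)
    linear_combination (norm := ring_nf) ih1 + h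
  | neg_add_one k ih1 ih2 =>
    have h := V_step (-k)
    linear_combination (norm := ring_nf) ih1 - h

private lemma pell (n : ℤ) :
    T ℂ (n+1)^2 - (X^2 - 1) * U ℂ n^2 = 1 := by
  have h1 := T_eq_U_sub_X_mul_U ℂ (n+1)
  have h2 := one_sub_X_sq_mul_U_eq_pol_in_T ℂ n
  have h3 := V_one n
  linear_combination (norm := ring_nf) (T ℂ (n+1)) * h1 + (U ℂ n) * h2 + h3

private lemma T_double (n : ℤ) : T ℂ (n*2) = 2 * T ℂ n^2 - 1 := by
  have h := T_mul_T ℂ n n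
  rw [show n+n = n*2 by ring, show n-n = 0 by ring, T_zero] at h
  linear_combination (norm := ring_nf) -h

private lemma U_deg : ∀ n : ℕ, (U ℂ n).natDegree = n ∧ (U ℂ n).leadingCoeff = 2 ^ n := by
  intro n
  induction n using Nat.strong_induction_on with
  | _ n ih =>
    match n with
    | 0 => simp [U_zero]
    | 1 =>
      rw [show ((1:ℕ):ℤ) = 1 by norm_num, U_one, show (2:ℂ[X]) * X = C 2 * X by rw [map_ofNat]]
      constructor
      · rw [natDegree_C_mul two_ne_zero, natDegree_X]
      · rw [leadingCoeff_mul, leadingCoeff_C, leadingCoeff_X]; norm_num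
    | (k+2) =>
      obtain ⟨hd1, hl1⟩ := ih (k+1) (by omega)
      obtain ⟨hd2, hl2⟩ := ih k (by omega)
      have hrec : U ℂ ((k:ℤ)+2) = 2 * X * U ℂ ((k:ℤ)+1) - U ℂ (k:ℤ) := U_add_two ℂ k
      have hcast : ((k+2:ℕ):ℤ) = (k:ℤ)+2 := by push_cast; ring
      have hcast1 : ((k+1:ℕ):ℤ) = (k:ℤ)+1 := by push_cast; ring
      rw [hcast, hrec]
      have hU1 : U ℂ ((k:ℤ)+1) ≠ 0 := by
        intro h0
        rw [← hcast1] at h0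
        rw [h0, leadingCoeff_zero] at hl1
        exact pow_ne_zero (k+1) (two_ne_zero (α := ℂ)) hl1.symm
      have hA : (2 * X * U ℂ ((k:ℤ)+1)).natDegree = k+2 := by
        rw [show (2:ℂ[X]) * X * U ℂ ((k:ℤ)+1) = C 2 * (X * U ℂ ((k:ℤ)+1)) by
          rw [map_ofNat]; ring]
        rw [natDegree_C_mul (by norm_num), natDegree_mul X_ne_zero hU1, natDegree_X, ← hcast1, hd1]
        omega
      have hAl : (2 * X * U ℂ ((k:ℤ)+1)).leadingCoeff = 2 ^ (k+2) := by
        rw [show (2:ℂ[X]) * X * U ℂ ((k:ℤ)+1) = C 2 * (X * U ℂ ((k:ℤ)+1)) by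
          rw [map_ofNat]; ring]
        rw [leadingCoeff_mul, leadingCoeff_mul, leadingCoeff_C, leadingCoeff_X, ← hcast1, hl1]
        ring
      have hlt : (U ℂ (k:ℤ)).natDegree < (2 * X * U ℂ ((k:ℤ)+1)).natDegree := by
        rw [hA, hd2]; omega
      constructor
      · rw [natDegree_sub_eq_left_of_natDegree_lt hlt, hA]
      · rw [leadingCoeff_sub_of_degree_lt (degree_lt_degree hlt), hAl]

private lemma T_deg : ∀ n : ℕ, (T ℂ (n+1:ℕ)).natDegree = n+1 ∧ (T ℂ (n+1:ℕ)).leadingCoeff = 2 ^ n := by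
  intro n
  induction n using Nat.strong_induction_on with
  | _ n ih =>
    match n with
    | 0 => simp [T_one]
    | 1 =>
      have h2 : T ℂ ((2:ℕ):ℤ) = C 2 * X^2 - C 1 := by
        rw [show ((2:ℕ):ℤ) = 2 by norm_num, T_two, map_ofNat, C_1]
      have hdlt : (C (1:ℂ)).degree < (C (2:ℂ) * X^2).degree := by
        rw [degree_C one_ne_zero, degree_C_mul two_ne_zero, degree_X_pow]
        norm_num
      have hdeg2 : (C (2:ℂ) * X^2 - C 1).degree = 2 := by
        rw [degree_sub_eq_left_of_degree_lt hdlt, degree_C_mul two_ne_zero, degree_X_pow]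
        rfl
      constructor
      · rw [h2]; exact natDegree_eq_of_degree_eq_some hdeg2
      · rw [h2, leadingCoeff_sub_of_degree_lt hdlt, leadingCoeff_mul, leadingCoeff_C,
          leadingCoeff_X_pow]
        norm_num
    | (k+2) =>
      obtain ⟨hd1, hl1⟩ := ih (k+1) (by omega)
      obtain ⟨hd2, hl2⟩ := ih k (by omega)
      have hrec : T ℂ ((k:ℤ)+1+2) = 2 * X * T ℂ ((k:ℤ)+1+1) - T ℂ ((k:ℤ)+1) := T_add_two ℂ (k+1)
      have hcast : ((k+2+1:ℕ):ℤ) = (k:ℤ)+1+2 := by push_cast; ring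
      have hcast1 : ((k+1+1:ℕ):ℤ) = (k:ℤ)+1+1 := by push_cast; ring
      have hcast2 : ((k+1:ℕ):ℤ) = (k:ℤ)+1 := by push_cast; ring
      rw [hcast, hrec]
      have hU1 : T ℂ ((k:ℤ)+1+1) ≠ 0 := by
        intro h0
        rw [← hcast1] at h0
        rw [h0, leadingCoeff_zero] at hl1
        exact pow_ne_zero (k+1) (two_ne_zero (α := ℂ)) hl1.symm
      have hA : (2 * X * T ℂ ((k:ℤ)+1+1)).natDegree = k+2+1 := by
        rw [show (2:ℂ[X]) * X * T ℂ ((k:ℤ)+1+1) = C 2 * (X * T ℂ ((k:ℤ)+1+1)) by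
          rw [map_ofNat]; ring]
        rw [natDegree_C_mul (by norm_num), natDegree_mul X_ne_zero hU1, natDegree_X, ← hcast1, hd1]
        omega
      have hAl : (2 * X * T ℂ ((k:ℤ)+1+1)).leadingCoeff = 2 ^ (k+2) := by
        rw [show (2:ℂ[X]) * X * T ℂ ((k:ℤ)+1+1) = C 2 * (X * T ℂ ((k:ℤ)+1+1)) by
          rw [map_ofNat]; ring]
        rw [leadingCoeff_mul, leadingCoeff_mul, leadingCoeff_C, leadingCoeff_X, ← hcast1, hl1]
        ring
      have hlt : (T ℂ ((k:ℤ)+1)).natDegree < (2 * X * T ℂ ((k:ℤ)+1+1)).natDegree := by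
        rw [hA, ← hcast2, hd2]; omega
      constructor
      · rw [natDegree_sub_eq_left_of_natDegree_lt hlt, hA]
      · rw [leadingCoeff_sub_of_degree_lt (degree_lt_degree hlt), hAl]

private lemma U_eval_pm_one : ∀ n : ℕ,
    (U ℂ n).eval 1 = n+1 ∧ (U ℂ n).eval (-1) = (-1)^n * (n+1) := by
  intro n
  induction n using Nat.strong_induction_on with
  | _ n ih =>
    match n with
    | 0 => simp [U_zero]
    | 1 =>
      rw [show ((1:ℕ):ℤ) = 1 by norm_num, U_one]
      norm_num
    | (k+2) =>
      obtain ⟨he1, hn1⟩ := ih (k+1) (by omega)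
      obtain ⟨he2, hn2⟩ := ih k (by omega)
      have hcast : ((k+2:ℕ):ℤ) = (k:ℤ)+2 := by push_cast; ring
      have hcast1 : ((k+1:ℕ):ℤ) = (k:ℤ)+1 := by push_cast; ring
      rw [hcast, U_add_two]
      rw [← hcast1] at *
      constructor
      · simp only [eval_sub, eval_mul, eval_ofNat, eval_X, he1, he2]
        push_cast
        ring
      · simp only [eval_sub, eval_mul, eval_ofNat, eval_X, hn1, hn2]
        push_cast
        ring

private lemma U_eval_sq_one (n : ℕ) (w : ℂ) (hw : w^2 = 1) : (U ℂ n).eval w ≠ 0 := by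
  obtain ⟨h1, h2⟩ := U_eval_pm_one n
  have : (w - 1) * (w + 1) = 0 := by linear_combination hw
  rcases mul_eq_zero.mp this with h | h
  · have hw1 : w = 1 := by linear_combination h
    rw [hw1, h1]
    exact Nat.cast_add_one_ne_zero n
  · have hw1 : w = -1 := by linear_combination h
    rw [hw1, h2]
    exact mul_ne_zero (pow_ne_zero _ (by norm_num)) (Nat.cast_add_one_ne_zero n)

/-- For `γ ≠ 0` and `m = 2ℓ` there is an even monic polynomial `ν` of degree `m` such
that `ν + γ = g²` with `g` monic squarefree of degree `ℓ`, and `ν − γ = h² · q` with `h`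
monic of degree `ℓ−1`, `q` monic of degree `2`, and `h · q` squarefree. -/
theorem stmt6 (γ : ℂ) (hγ : γ ≠ 0) (ℓ : ℕ) (hℓ : 1 ≤ ℓ) :
    ∃ ν : ℂ[X], ν.Monic ∧ ν.natDegree = 2 * ℓ ∧
      (∀ x : ℂ, ν.eval (-x) = ν.eval x) ∧
      (∃ g : ℂ[X], g.Monic ∧ Squarefree g ∧ g.natDegree = ℓ ∧ ν + C γ = g ^ 2) ∧
      (∃ h q : ℂ[X], h.Monic ∧ h.natDegree = ℓ - 1 ∧ q.Monic ∧ q.natDegree = 2 ∧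
        Squarefree (h * q) ∧ ν - C γ = h ^ 2 * q) := by
  classical
  have hℓC : (ℓ:ℂ) ≠ 0 := Nat.cast_ne_zero.mpr (by omega)
  obtain ⟨a, ha⟩ := IsAlgClosed.exists_pow_nat_eq (k := ℂ) (γ * 2^(2*ℓ-1)) (n := 2*ℓ) (by omega)
  have hpow2 : ∀ k : ℕ, (2:ℂ)^k ≠ 0 := fun k => pow_ne_zero _ two_ne_zero
  have hrhs : γ * 2^(2*ℓ-1) ≠ 0 := mul_ne_zero hγ (hpow2 _)
  have ha0 : a ≠ 0 := by
    intro h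
    apply hrhs
    rw [← ha, h, zero_pow (by omega)]
  have hai : a⁻¹ ≠ 0 := inv_ne_zero ha0
  set L : ℂ[X] := C a⁻¹ * X with hL
  have hLd : L.natDegree = 1 := by rw [hL, natDegree_C_mul hai, natDegree_X]
  have hLl : L.leadingCoeff = a⁻¹ := by
    rw [hL, leadingCoeff_mul, leadingCoeff_C, leadingCoeff_X, mul_one]
  have hLd0 : L.natDegree ≠ 0 := by omega
  have hLder : derivative L = C a⁻¹ := by rw [hL]; simp
  have hLev : ∀ z : ℂ, L.eval z = a⁻¹ * z := by intro z; rw [hL]; simp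
  -- degree facts
  have hTd2 := (T_deg (2*ℓ-1)).1
  have hTl2 := (T_deg (2*ℓ-1)).2
  rw [show (2*ℓ-1+1 : ℕ) = 2*ℓ by omega] at hTd2 hTl2
  have hTdl := (T_deg (ℓ-1)).1
  have hTll := (T_deg (ℓ-1)).2
  rw [show (ℓ-1+1 : ℕ) = ℓ by omega] at hTdl hTll
  have hc1 : ((ℓ-1:ℕ):ℤ) = (ℓ:ℤ)-1 := by omega
  have hUdl : (U ℂ ((ℓ:ℤ)-1)).natDegree = ℓ-1 := by rw [← hc1]; exact (U_deg (ℓ-1)).1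
  have hUll : (U ℂ ((ℓ:ℤ)-1)).leadingCoeff = 2^(ℓ-1) := by rw [← hc1]; exact (U_deg (ℓ-1)).2
  -- the three polynomials
  set b : ℂ := a^ℓ / 2^(ℓ-1) with hb
  set c : ℂ := a^(ℓ-1) / 2^(ℓ-1) with hc
  have hb0 : b ≠ 0 := div_ne_zero (pow_ne_zero _ ha0) (hpow2 _)
  have hc0 : c ≠ 0 := div_ne_zero (pow_ne_zero _ ha0) (hpow2 _)
  set TL : ℂ[X] := (T ℂ (ℓ:ℕ)).comp L with hTL
  set UL : ℂ[X] := (U ℂ ((ℓ:ℤ)-1)).comp L with hUL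
  refine ⟨C γ * (T ℂ (2*ℓ:ℕ)).comp L, ?_, ?_, ?_,
    ⟨C b * TL, ?_, ?_, ?_, ?_⟩, ⟨C c * UL, X^2 - C (a^2), ?_, ?_, ?_, ?_, ?_, ?_⟩⟩
  · -- ν monic
    show (C γ * (T ℂ (2*ℓ:ℕ)).comp L).leadingCoeff = 1
    rw [leadingCoeff_mul, leadingCoeff_C, leadingCoeff_comp hLd0, hTl2, hLl, hTd2, inv_pow, ha]
    field_simp
  · -- ν degree
    rw [natDegree_C_mul hγ, natDegree_comp, hTd2, hLd, mul_one]
  · -- even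
    intro x
    have hTmul : T ℂ ((2*ℓ:ℕ):ℤ) = (T ℂ (ℓ:ℤ)).comp (T ℂ 2) := by
      rw [show ((2*ℓ:ℕ):ℤ) = (ℓ:ℤ)*2 by push_cast; ring]
      exact T_mul ℂ ℓ 2
    have h2 : ∀ y:ℂ, (T ℂ 2).eval y = 2*y^2 - 1 := by intro y; rw [T_two]; simp
    rw [hTmul]
    simp only [eval_mul, eval_C, eval_comp, hLev, h2]
    ring_nf
  · -- g monic
    show (C b * TL).leadingCoeff = 1
    rw [leadingCoeff_mul, leadingCoeff_C, hTL, leadingCoeff_comp hLd0, hTll, hLl, hTdl, hb, inv_pow]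
    field_simp
  · -- g squarefree
    have hgmon : (C b * TL).leadingCoeff = 1 := by
      rw [leadingCoeff_mul, leadingCoeff_C, hTL, leadingCoeff_comp hLd0, hTll, hLl, hTdl, hb,
        inv_pow]
      field_simp
    apply sf_helper _ (Monic.ne_zero hgmon)
    intro z hz hz'
    have hTw : (T ℂ (ℓ:ℤ)).eval (a⁻¹*z) = 0 := by
      rw [eval_mul, eval_C, hTL, eval_comp, hLev] at hz
      exact (mul_eq_zero.mp hz).resolve_left hb0
    have hUw : (U ℂ ((ℓ:ℤ)-1)).eval (a⁻¹*z) = 0 := by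
      rw [derivative_mul, derivative_C, zero_mul, zero_add, hTL, derivative_comp, hLder,
        T_derivative_eq_U] at hz'
      simp only [eval_mul, eval_C, eval_comp, hLev, eval_intCast] at hz'
      rcases mul_eq_zero.mp hz' with h' | h'
      · exact absurd h' hb0
      rcases mul_eq_zero.mp h' with h'' | h''
      · exact absurd h'' hai
      rcases mul_eq_zero.mp h'' with h3 | h3
      · exact absurd h3 (by push_cast; exact hℓC)
      · exact h3
    have hp := pell ((ℓ:ℤ)-1)
    rw [show (ℓ:ℤ)-1+1 = (ℓ:ℤ) by ring] at hp
    have := congrArg (eval (a⁻¹*z)) hp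
    simp only [eval_sub, eval_mul, eval_pow, eval_one, eval_X, hTw, hUw] at this
    norm_num at this
  · -- g degree
    rw [natDegree_C_mul hb0, hTL, natDegree_comp, hTdl, hLd, mul_one]
  · -- ν + γ = g²
    have hT2 : T ℂ ((2*ℓ:ℕ):ℤ) = 2 * T ℂ (ℓ:ℤ)^2 - 1 := by
      rw [show ((2*ℓ:ℕ):ℤ) = (ℓ:ℤ)*2 by push_cast; ring]
      exact T_double ℓ
    have h2p : ((2:ℂ)^(ℓ-1))^2 * 2 = 2^(2*ℓ-1) := by
      rw [← pow_mul, ← pow_succ]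
      congr 1
      omega
    have hb2 : b^2 = 2*γ := by
      rw [hb, div_pow, div_eq_iff (pow_ne_zero _ (hpow2 _)), ← pow_mul,
        show ℓ*2 = 2*ℓ by ring, ha]
      linear_combination -γ*h2p
    rw [hT2]
    simp only [sub_comp, mul_comp, pow_comp, one_comp, ofNat_comp]
    rw [mul_pow, ← C_pow, hb2, hTL]
    rw [Polynomial.C_mul, map_ofNat]
    ring
  · -- h monic
    show (C c * UL).leadingCoeff = 1
    rw [leadingCoeff_mul, leadingCoeff_C, hUL, leadingCoeff_comp hLd0, hUll, hLl, hUdl, hc,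
      inv_pow]
    field_simp
  · -- h degree
    rw [natDegree_C_mul hc0, hUL, natDegree_comp, hUdl, hLd, mul_one]
  · -- q monic
    exact monic_X_pow_sub_C _ (by norm_num)
  · -- q degree
    rw [natDegree_X_pow_sub_C]
  · -- h*q squarefree
    have hhmon : (C c * UL).leadingCoeff = 1 := by
      rw [leadingCoeff_mul, leadingCoeff_C, hUL, leadingCoeff_comp hLd0, hUll, hLl, hUdl, hc,
        inv_pow]
      field_simp
    have hqmon : (X^2 - C (a^2) : ℂ[X]).Monic := monic_X_pow_sub_C _ (by norm_num)
    apply sf_helper _ (mul_ne_zero (Monic.ne_zero hhmon) hqmon.ne_zero)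
    intro z hz hz'
    have hqev : (X^2 - C (a^2) : ℂ[X]).eval z = z^2 - a^2 := by simp
    have hqder : (derivative (X^2 - C (a^2)) : ℂ[X]).eval z = 2*z := by
      rw [derivative_sub, derivative_C, derivative_X_pow]
      simp
    have hhev : (C c * UL).eval z = c * (U ℂ ((ℓ:ℤ)-1)).eval (a⁻¹*z) := by
      rw [eval_mul, eval_C, hUL, eval_comp, hLev]
    have hUsq : ∀ w : ℂ, w^2 = 1 → (U ℂ ((ℓ:ℤ)-1)).eval w ≠ 0 := by
      intro w hw
      rw [← hc1]
      exact U_eval_sq_one (ℓ-1) w hw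
    rw [eval_mul, hhev, hqev] at hz
    rw [derivative_mul, eval_add, eval_mul, eval_mul, hqev, hqder, hhev] at hz'
    rcases mul_eq_zero.mp hz with hcase | hcase
    · -- h z = 0
      have hUw : (U ℂ ((ℓ:ℤ)-1)).eval (a⁻¹*z) = 0 := (mul_eq_zero.mp hcase).resolve_left hc0
      have hw2 : (a⁻¹*z)^2 ≠ 1 := fun h1 => hUsq _ h1 hUw
      have hq0 : z^2 - a^2 ≠ 0 := by
        intro h0
        apply hw2
        have : z^2 = a^2 := by linear_combination h0
        field_simp [this]; exact this
      -- derivative of h at z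
      have hder : (derivative (C c * UL)).eval z
          = c * (a⁻¹ * (derivative (U ℂ ((ℓ:ℤ)-1))).eval (a⁻¹*z)) := by
        rw [derivative_mul, derivative_C, zero_mul, zero_add, hUL, derivative_comp, hLder]
        simp only [eval_mul, eval_C, eval_comp, hLev]
      rw [hder, hcase] at hz'
      simp only [mul_zero, zero_mul, add_zero] at hz'
      have hU'w : (derivative (U ℂ ((ℓ:ℤ)-1))).eval (a⁻¹*z) = 0 := by
        rcases mul_eq_zero.mp hz' with h' | h'
        · rcases mul_eq_zero.mp h' with h'' | h''
          · exact absurd h'' hc0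
          · exact (mul_eq_zero.mp h'').resolve_left hai
        · exact absurd h' hq0
      have hT0 : (T ℂ (ℓ:ℤ)).eval (a⁻¹*z) = 0 := by
        have hid := add_one_mul_T_eq_poly_in_U (R := ℂ) ((ℓ:ℤ)-1)
        rw [show (ℓ:ℤ)-1+1 = (ℓ:ℤ) by ring] at hid
        have := congrArg (eval (a⁻¹*z)) hid
        simp only [eval_mul, eval_add, eval_sub, eval_one, eval_X, eval_pow, eval_intCast,
          hUw, hU'w] at this
        push_cast at this
        rcases mul_eq_zero.mp (by linear_combination this :
            ((ℓ:ℂ)-1+1) * (T ℂ (ℓ:ℤ)).eval (a⁻¹*z) = 0) with h' | h'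
        · exact absurd (by linear_combination h' : (ℓ:ℂ) = 0) hℓC
        · exact h'
      have hp := pell ((ℓ:ℤ)-1)
      rw [show (ℓ:ℤ)-1+1 = (ℓ:ℤ) by ring] at hp
      have := congrArg (eval (a⁻¹*z)) hp
      simp only [eval_sub, eval_mul, eval_pow, eval_one, eval_X, hT0, hUw] at this
      norm_num at this
    · -- q z = 0
      have hz2 : z^2 = a^2 := by linear_combination hcase
      have hw2 : (a⁻¹*z)^2 = 1 := by field_simp [hz2]; exact hz2
      have hz0 : z ≠ 0 := by
        intro h0
        apply pow_ne_zero 2 ha0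
        rw [← hz2, h0]
        ring
      rw [hcase] at hz'
      simp only [mul_zero, zero_add] at hz'
      rcases mul_eq_zero.mp hz' with h' | h'
      · rcases mul_eq_zero.mp h' with h'' | h''
        · exact absurd h'' hc0
        · exact hUsq _ hw2 h''
      · rcases mul_eq_zero.mp h' with h'' | h''
        · exact absurd h'' two_ne_zero
        · exact absurd h'' hz0
  · -- ν - γ = h² q
    have hT2 : T ℂ ((2*ℓ:ℕ):ℤ) = 2 * T ℂ (ℓ:ℤ)^2 - 1 := by
      rw [show ((2*ℓ:ℕ):ℤ) = (ℓ:ℤ)*2 by push_cast; ring]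
      exact T_double ℓ
    have hp := pell ((ℓ:ℤ)-1)
    rw [show (ℓ:ℤ)-1+1 = (ℓ:ℤ) by ring] at hp
    have hkey : T ℂ ((2*ℓ:ℕ):ℤ) - 1 = 2*(X^2-1)*U ℂ ((ℓ:ℤ)-1)^2 := by
      linear_combination hT2 + 2*hp
    have h2p : ((2:ℂ)^(ℓ-1))^2 * 2 = 2^(2*ℓ-1) := by
      rw [← pow_mul, ← pow_succ]
      congr 1
      omega
    have hca : c^2 * a^2 = 2*γ := by
      rw [hc, div_pow, div_mul_eq_mul_div, div_eq_iff (pow_ne_zero _ (hpow2 _)), ← pow_mul,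
        ← pow_add, show (ℓ-1)*2+2 = 2*ℓ by omega, ha]
      linear_combination -γ*h2p
    have hc2 : (2:ℂ)*γ*(a⁻¹)^2 = c^2 := by
      rw [← hca]
      field_simp
    have hconst : C γ * (2*((C a⁻¹*X)^2 - 1)) = C (c^2) * (X^2 - C (a^2)) := by
      calc C γ * (2*((C a⁻¹*X)^2 - 1))
          = C (2*γ*(a⁻¹)^2) * X^2 - C (2*γ) := by
            simp only [Polynomial.C_mul, C_pow, map_ofNat]; ring
        _ = C (c^2) * X^2 - C (c^2*a^2) := by rw [hc2, hca]
        _ = C (c^2) * (X^2 - C (a^2)) := by simp only [Polynomial.C_mul]; ring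
    have hconst' : C γ * (2*((C a⁻¹*X)^2 - 1)) = C c ^ 2 * (X^2 - C (a^2)) := by
      rw [hconst, C_pow]
    have hstep : C γ * (T ℂ (2*ℓ:ℕ)).comp L - C γ
        = C γ * ((T ℂ ((2*ℓ:ℕ):ℤ) - 1).comp L) := by
      rw [sub_comp, one_comp]
      ring
    rw [hstep, hkey]
    have expand : ((2*(X^2-1)*U ℂ ((ℓ:ℤ)-1)^2).comp L) = 2*((C a⁻¹*X)^2 - 1) * UL^2 := by
      simp only [hUL, hL, mul_comp, sub_comp, pow_comp, one_comp, ofNat_comp, X_comp]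
      norm_num
    rw [expand]
    have hrhs2 : (C c * UL)^2 * (X^2 - C (a^2)) = (C c ^ 2 * (X^2 - C (a^2))) * UL^2 := by
      ring
    rw [hrhs2, ← hconst']
    ring
end

section
/- Let γ be a nonzero complex number, let ℓ ≥ 1 and m = 2ℓ. Suppose ν and ν′ are monic polynomials in ℂ[x] of degree m whose coefficient of x^{m−1} is zero, and each satisfies: its sum with γ is the square of a monic squarefree polynomial of degree ℓ, and its difference with γ can be written as h²·q with h monic of degree ℓ−1, q monic of degree 2, and h·q squarefree. Then there exists a ∈ ℂ with a^m = 1 such that ν′(x) = ν(a·x) identically. -/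
open Polynomial
open Finset

lemma mono_of_mul_eq {A B : ℂ[X]} {c : ℂ} {n : ℕ}
    (hc : c ≠ 0) (h : A * B = C c * X ^ n) :
    A = C A.leadingCoeff * X ^ A.natDegree := by
  have hne : C c * (X:ℂ[X]) ^ n ≠ 0 :=
    mul_ne_zero (by simpa using hc) (pow_ne_zero _ X_ne_zero)
  have hA : A ≠ 0 := fun h0 => hne (by rw [← h, h0, zero_mul])
  have hsplit : Splits A := IsAlgClosed.splits A
  have hcard : A.roots.card = A.natDegree := (splits_iff_card_roots).mp hsplit
  have hroots : A.roots = Multiset.replicate A.natDegree 0 := by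
    rw [Multiset.eq_replicate]
    refine ⟨hcard, fun b hb => ?_⟩
    have hb' : eval b A = 0 := isRoot_of_mem_roots hb
    have h0 : c * b ^ n = 0 := by
      have : eval b (A * B) = eval b (C c * X ^ n) := by rw [h]
      simpa [hb'] using this.symm
    by_contra hb0
    exact (mul_ne_zero hc (pow_ne_zero _ hb0)) h0
  have := hsplit.eq_prod_roots
  rw [hroots] at this
  simpa [Multiset.map_replicate, Multiset.prod_replicate] using this

lemma exists_param (r : ℂ) (hr : r ≠ 0) (y : ℂ) :
    ∃ z : ℂ, z ≠ 0 ∧ r * (z + z⁻¹) / 2 = y := by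
  obtain ⟨z, hz⟩ := Complex.exists_root (f := X ^ 2 - C (2 * y / r) * X + 1) (by
    have h2 : (X ^ 2 - C (2 * y / r) * X + 1 : ℂ[X]).degree = 2 := by
      compute_degree!
    rw [h2]; norm_num)
  have hz' : z ^ 2 - (2 * y / r) * z + 1 = 0 := by
    simpa using hz
  have hz0 : z ≠ 0 := by
    rintro rfl; simp at hz'
  refine ⟨z, hz0, ?_⟩
  field_simp [hz0] at hz' ⊢
  linear_combination hz'

noncomputable def tw (p : ℂ[X]) (n : ℕ) (Q : ℂ[X]) : ℂ[X] :=
  ∑ k ∈ Finset.range (n+1), C (p.coeff k / 2 ^ k) * Q ^ k * X ^ (n - k)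

lemma eval_tw (p : ℂ[X]) (n : ℕ) (hn : p.natDegree ≤ n) (r s z : ℂ) (hz : z ≠ 0) :
    (tw p n (C r * X ^ 2 + C (2*s) * X + C r)).eval z
      = z ^ n * p.eval (s + r * (z + z⁻¹) / 2) := by
  rw [tw, eval_finset_sum,
    eval_eq_sum_range' (lt_of_le_of_lt hn (Nat.lt_succ_self n)), Finset.mul_sum]
  generalize hx : s + r * (z + z⁻¹) / 2 = x
  have hq : r * z ^ 2 + 2 * s * z + r = 2 * z * x := by
    rw [← hx]; field_simp; ring
  refine Finset.sum_congr rfl fun k hk => ?_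
  have hk' : k ≤ n := Nat.lt_succ_iff.mp (Finset.mem_range.mp hk)
  have hzz : z ^ k * z ^ (n - k) = z ^ n := by
    rw [← pow_add]; congr 1; omega
  simp only [eval_mul, eval_pow, eval_C, eval_add, eval_X]
  rw [show r * z ^ 2 + 2 * s * z + r = 2 * z * x from hq, mul_pow, mul_pow, ← hzz]
  have h2 : (2:ℂ) ^ k ≠ 0 := pow_ne_zero _ two_ne_zero
  field_simp

lemma tw_coeff_top (p : ℂ[X]) (n : ℕ) (hmon : p.coeff n = 1) (r s : ℂ) (hr : r ≠ 0) :
    (tw p n (C r * X ^ 2 + C (2*s) * X + C r)).coeff (2*n) = r ^ n / 2 ^ n := by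
  set Q : ℂ[X] := C r * X ^ 2 + C (2*s) * X + C r with hQ
  have hQd : Q.natDegree = 2 := natDegree_quadratic hr
  have hQl : Q.leadingCoeff = r := leadingCoeff_quadratic hr
  rw [tw, finset_sum_coeff]
  rw [Finset.sum_eq_single n]
  · rw [Nat.sub_self, pow_zero, mul_one, hmon, coeff_C_mul]
    have := coeff_pow_mul_natDegree Q n
    rw [hQd] at this
    rw [show 2*n = n*2 by ring, this, hQl]
    ring
  · intro k hk hkn
    have hk' : k ≤ n := Nat.lt_succ_iff.mp (Finset.mem_range.mp hk)
    have hklt : k < n := lt_of_le_of_ne hk' hkn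
    apply coeff_eq_zero_of_natDegree_lt
    calc (C (p.coeff k / 2^k) * Q ^ k * X ^ (n-k)).natDegree
        ≤ (C (p.coeff k / 2^k) * Q ^ k).natDegree + (X ^ (n-k) : ℂ[X]).natDegree :=
          natDegree_mul_le
      _ ≤ (Q ^ k).natDegree + (X ^ (n-k) : ℂ[X]).natDegree := by
          gcongr; exact natDegree_C_mul_le _ _
      _ = k * 2 + (n - k) := by rw [natDegree_pow, hQd, natDegree_X_pow]
      _ < 2 * n := by omega
  · intro h; exact absurd (Finset.self_mem_range_succ n) h

lemma tw_coeff_zero (p : ℂ[X]) (n : ℕ) (hmon : p.coeff n = 1) (r s : ℂ) :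
    (tw p n (C r * X ^ 2 + C (2*s) * X + C r)).coeff 0 = r ^ n / 2 ^ n := by
  set Q : ℂ[X] := C r * X ^ 2 + C (2*s) * X + C r with hQ
  rw [tw, finset_sum_coeff]
  rw [Finset.sum_eq_single n]
  · rw [Nat.sub_self, pow_zero, mul_one, hmon, coeff_C_mul,
      coeff_zero_eq_eval_zero, eval_pow]
    have : Q.eval 0 = r := by rw [hQ]; simp
    rw [this]; ring
  · intro k hk hkn
    have hk' : k ≤ n := Nat.lt_succ_iff.mp (Finset.mem_range.mp hk)
    have hklt : k < n := lt_of_le_of_ne hk' hkn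
    rw [coeff_mul_X_pow', if_neg (by omega)]
  · intro h; exact absurd (Finset.self_mem_range_succ n) h

lemma s_eq_zero_aux (p : ℂ[X]) (m : ℕ) (hm : 2 ≤ m) (heven : Even m)
    (hd : p.natDegree = m) (hmon : p.coeff m = 1) (hc : p.coeff (m-1) = 0) (s : ℂ)
    (hcomp : p.comp (C s + X) = p.comp (C s - X)) : s = 0 := by
  obtain ⟨d, hdm⟩ : ∃ d, m = d + 1 := ⟨m - 1, by omega⟩
  subst hdm
  rw [Nat.add_sub_cancel] at hc
  have e1 : p.comp (C s + X) = ∑ k ∈ range (d+1+1), C (p.coeff k) * (C s + X) ^ k := by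
    rw [comp, eval₂_eq_sum_range' (C : ℂ →+* ℂ[X]) (by omega : p.natDegree < d+1+1)]
  have e2 : p.comp (C s - X) = ∑ k ∈ range (d+1+1), C (p.coeff k) * (C s - X) ^ k := by
    rw [comp, eval₂_eq_sum_range' (C : ℂ →+* ℂ[X]) (by omega : p.natDegree < d+1+1)]
  have hco := congrArg (fun u : ℂ[X] => u.coeff d) hcomp
  simp only [e1, e2, finset_sum_coeff] at hco
  have hL : ∀ k ∈ range (d+1+1),
      (C (p.coeff k) * (C s + X) ^ k).coeff d
        = p.coeff k * (s ^ (k - d) * (k.choose d : ℂ)) := by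
    intro k _
    rw [show (C s + X : ℂ[X]) = X + C s from add_comm _ _, coeff_C_mul, coeff_X_add_C_pow]
  have hR : ∀ k ∈ range (d+1+1),
      (C (p.coeff k) * (C s - X) ^ k).coeff d
        = p.coeff k * ((-1)^k * ((-s) ^ (k - d) * (k.choose d : ℂ))) := by
    intro k _
    rw [show (C s - X : ℂ[X]) = -(X + C (-s)) by rw [map_neg]; ring, neg_pow,
      mul_comm ((-1 : ℂ[X])^k), ← mul_assoc,
      show ((-1:ℂ[X]))^k = C ((-1:ℂ)^k) by rw [C_pow, map_neg, C_1],
      coeff_mul_C, coeff_C_mul, coeff_X_add_C_pow]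
    ring
  rw [Finset.sum_congr rfl hL, Finset.sum_congr rfl hR] at hco
  rw [Finset.sum_range_succ, Finset.sum_range_succ, Finset.sum_range_succ,
    Finset.sum_range_succ] at hco
  have hz : ∀ k ∈ range d, p.coeff k * (s ^ (k - d) * (k.choose d : ℂ)) = 0 := by
    intro k hk
    rw [Nat.choose_eq_zero_of_lt (mem_range.mp hk)]
    simp
  have hz' : ∀ k ∈ range d, p.coeff k * ((-1)^k * ((-s) ^ (k - d) * (k.choose d : ℂ))) = 0 := by
    intro k hk
    rw [Nat.choose_eq_zero_of_lt (mem_range.mp hk)]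
    simp
  rw [Finset.sum_eq_zero hz, Finset.sum_eq_zero hz'] at hco
  have hm1 : ((-1 : ℂ))^(d+1) = 1 := heven.neg_one_pow
  have hch : ((d+1).choose d : ℂ) = (d+1 : ℂ) := by
    rw [Nat.choose_succ_self_right]; push_cast; ring
  rw [show d+1-d = 1 from by omega, hch, hm1, hmon, hc] at hco
  have hdd : ((d:ℂ)+1) ≠ 0 := by
    have : ((d+1 : ℕ) : ℂ) ≠ 0 := Nat.cast_ne_zero.mpr (by omega)
    push_cast at this; exact this
  have h2 : s * ((d:ℂ)+1) * 2 = 0 := by linear_combination hco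
  rcases mul_eq_zero.mp h2 with h3 | h3
  · rcases mul_eq_zero.mp h3 with h4 | h4
    · exact h4
    · exact absurd h4 hdd
  · exact absurd h3 two_ne_zero

lemma key (γ : ℂ) (hγ : γ ≠ 0) (ℓ : ℕ) (hℓ : 1 ≤ ℓ) (ν : ℂ[X])
    (h1 : ν.Monic) (h2 : ν.natDegree = 2 * ℓ) (h3 : ν.coeff (2 * ℓ - 1) = 0)
    (h4 : ∃ g : ℂ[X], g.Monic ∧ Squarefree g ∧ g.natDegree = ℓ ∧ ν + C γ = g ^ 2)
    (h5 : ∃ h q : ℂ[X], h.Monic ∧ h.natDegree = ℓ - 1 ∧ q.Monic ∧ q.natDegree = 2 ∧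
        Squarefree (h * q) ∧ ν - C γ = h ^ 2 * q) :
    ∃ r : ℂ, r ≠ 0 ∧ 2 * (r ^ (2*ℓ) / 2 ^ (2*ℓ)) = γ ∧
      ∀ z : ℂ, z ≠ 0 → ν.eval (r * (z + z⁻¹) / 2) = γ / 2 * (z ^ (2*ℓ) + (z⁻¹) ^ (2*ℓ)) := by
  obtain ⟨g, hgM, hgSF, hgd, hgeq⟩ := h4
  obtain ⟨h, q, hhM, hhd, hqM, hqd, hSF, hheq⟩ := h5
  -- roots of q
  have hqsf : Squarefree q := hSF.squarefree_of_dvd (Dvd.intro_left h rfl)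
  have hqsplit : Splits q := IsAlgClosed.splits q
  have hcard : q.roots.card = 2 := by rw [splits_iff_card_roots.mp hqsplit, hqd]
  obtain ⟨e₁, e₂, he⟩ := Multiset.card_eq_two.mp hcard
  have hqfact : q = (X - C e₁) * (X - C e₂) := by
    have hq2 := prod_multiset_X_sub_C_of_monic_of_roots_card_eq hqM (by rw [hcard, hqd])
    rw [he] at hq2
    simpa using hq2.symm
  have hne : e₁ ≠ e₂ := by
    rintro rfl
    have hdvd : (X - C e₁) * (X - C e₁) ∣ q := by rw [hqfact]
    exact (not_isUnit_X_sub_C e₁) (hqsf _ hdvd)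
  set r : ℂ := (e₁ - e₂)/2 with hrdef
  set s : ℂ := (e₁ + e₂)/2 with hsdef
  have hr : r ≠ 0 := div_ne_zero (sub_ne_zero.mpr hne) two_ne_zero
  have he₁ : e₁ = s + r := by rw [hrdef, hsdef]; ring
  have he₂ : e₂ = s - r := by rw [hrdef, hsdef]; ring
  set Q : ℂ[X] := C r * X ^ 2 + C (2*s) * X + C r with hQdef
  set P : ℂ[X] := tw ν (2*ℓ) Q with hPdef
  set G : ℂ[X] := tw g ℓ Q with hGdef
  set H : ℂ[X] := tw h (ℓ-1) Q with hHdef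
  set K : ℂ[X] := C (r/2) * (X^2 - 1) * H with hKdef
  have hinf : {z : ℂ | z ≠ 0}.Infinite := by
    rw [← Set.compl_singleton_eq]
    exact (Set.finite_singleton 0).infinite_compl
  have hmon : ν.coeff (2*ℓ) = 1 := by rw [← h2]; exact h1.coeff_natDegree
  -- I1
  have I1 : P + C γ * X ^ (2*ℓ) = G ^ 2 := by
    apply eq_of_infinite_eval_eq
    apply Set.Infinite.mono _ hinf
    intro z hz
    have hz : z ≠ 0 := hz
    simp only [Set.mem_setOf_eq, eval_add, eval_mul, eval_pow, eval_C, eval_X]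
    rw [hPdef, hGdef, eval_tw ν (2*ℓ) h2.le r s z hz, eval_tw g ℓ hgd.le r s z hz]
    have hgev : ν.eval (s + r * (z + z⁻¹) / 2) + γ
        = (g.eval (s + r * (z + z⁻¹) / 2)) ^ 2 := by
      have := congrArg (eval (s + r * (z + z⁻¹) / 2)) hgeq
      simpa using this
    linear_combination z ^ (2*ℓ) * hgev
  -- I2
  have I2 : P - C γ * X ^ (2*ℓ) = K ^ 2 := by
    apply eq_of_infinite_eval_eq
    apply Set.Infinite.mono _ hinf
    intro z hz
    have hz : z ≠ 0 := hz
    simp only [Set.mem_setOf_eq, eval_sub, eval_add, eval_mul, eval_pow, eval_C,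
      eval_X, eval_one, hKdef]
    rw [hPdef, hHdef, eval_tw ν (2*ℓ) h2.le r s z hz,
      eval_tw h (ℓ-1) hhd.le r s z hz]
    have hhev : ν.eval (s + r * (z + z⁻¹) / 2) - γ
        = (h.eval (s + r * (z + z⁻¹) / 2)) ^ 2 * q.eval (s + r * (z + z⁻¹) / 2) := by
      have := congrArg (eval (s + r * (z + z⁻¹) / 2)) hheq
      simpa using this
    have hqev : q.eval (s + r * (z + z⁻¹) / 2)
        = (s + r * (z + z⁻¹) / 2 - e₁) * (s + r * (z + z⁻¹) / 2 - e₂) := by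
      rw [hqfact]; simp
    have key2 : (s + r * (z + z⁻¹) / 2 - e₁) * (s + r * (z + z⁻¹) / 2 - e₂) * z^2
        = (r/2 * (z^2-1))^2 := by
      rw [he₁, he₂]; field_simp; ring
    have hz2 : (z:ℂ)^(2*ℓ) = (z^(ℓ-1))^2 * z^2 := by
      rw [← pow_mul, ← pow_add]; congr 1; omega
    rw [hqev] at hhev
    rw [hz2]
    linear_combination ((z^(ℓ-1))^2 * z^2) * hhev
      + ((h.eval (s + r * (z + z⁻¹) / 2))^2 * (z^(ℓ-1))^2) * key2
  -- I3
  have hC2γ : (C (2*γ) : ℂ[X]) = 2 * C γ := by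
    rw [C_mul, map_ofNat]
  have I3 : (G - K) * (G + K) = C (2*γ) * X ^ (2*ℓ) := by
    rw [hC2γ]
    linear_combination I2 - I1
  have h2γ : (2:ℂ) * γ ≠ 0 := mul_ne_zero two_ne_zero hγ
  set A : ℂ[X] := G - K with hAdef
  set B : ℂ[X] := G + K with hBdef
  set α : ℂ := A.leadingCoeff with hαdef
  set β : ℂ := B.leadingCoeff with hβdef
  set i : ℕ := A.natDegree with hidef
  set j : ℕ := B.natDegree with hjdef
  have hAB : A * B = C (2*γ) * X ^ (2*ℓ) := I3
  have hBA : B * A = C (2*γ) * X ^ (2*ℓ) := by rw [mul_comm]; exact I3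
  have hAm : A = C α * X ^ i := mono_of_mul_eq h2γ hAB
  have hBm : B = C β * X ^ j := mono_of_mul_eq h2γ hBA
  have hab : α * β = 2 * γ := by
    have := congrArg (eval 1) hAB
    rw [hAm, hBm] at this
    simpa using this
  have hα : α ≠ 0 := fun h0 => h2γ (by rw [← hab, h0, zero_mul])
  have hβ : β ≠ 0 := fun h0 => h2γ (by rw [← hab, h0, mul_zero])
  have hij : i + j = 2*ℓ := by
    have hI3' : C (α*β) * X ^ (i+j) = C (2*γ) * X ^ (2*ℓ) := by
      rw [← hAB, hAm, hBm, C_mul, pow_add]; ring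
    have := congrArg natDegree hI3'
    rwa [natDegree_C_mul_X_pow _ _ (by rw [hab]; exact h2γ),
      natDegree_C_mul_X_pow _ _ h2γ] at this
  -- P4
  have hCab : (C α : ℂ[X]) * C β = 2 * C γ := by
    rw [← C_mul, hab, hC2γ]
  have I1' : P + C γ * (X^i * X^j) = G^2 := by rw [← pow_add, hij]; exact I1
  have h2G : 2 * G = C α * X ^ i + C β * X ^ j := by
    rw [← hAm, ← hBm, hAdef, hBdef]; ring
  have P4 : 4 * P = (C α)^2 * (X^i)^2 + (C β)^2 * (X^j)^2 := by
    linear_combination 4 * I1' + (2*G + C α * X^i + C β * X^j) * h2G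
      + 2 * (X^i * X^j) * hCab
  have P4' : 4 * P = C (α^2) * X^(2*i) + C (β^2) * X^(2*j) := by
    rw [C_pow, C_pow, show 2*i = i*2 from mul_comm 2 i, show 2*j = j*2 from mul_comm 2 j,
      pow_mul, pow_mul]
    exact P4
  -- coefficient extraction
  have c2m : P.coeff (2*(2*ℓ)) = r^(2*ℓ)/2^(2*ℓ) := tw_coeff_top ν (2*ℓ) hmon r s hr
  have c0 : P.coeff 0 = r^(2*ℓ)/2^(2*ℓ) := tw_coeff_zero ν (2*ℓ) hmon r s
  have hrm : r^(2*ℓ)/2^(2*ℓ) ≠ 0 :=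
    div_ne_zero (pow_ne_zero _ hr) (pow_ne_zero _ two_ne_zero)
  have hcoeff : ∀ N : ℕ, 4 * P.coeff N
      = (if N = 2*i then α^2 else 0) + (if N = 2*j then β^2 else 0) := by
    intro N
    have := congrArg (fun u : ℂ[X] => u.coeff N) P4'
    simp only [coeff_add, coeff_C_mul, coeff_X_pow] at this
    rw [show (4 * P).coeff N = 4 * P.coeff N by
      rw [show (4:ℂ[X]) = C 4 from (map_ofNat C 4).symm, coeff_C_mul]] at this
    rw [this]
    split_ifs <;> ring
  have htop := hcoeff (2*(2*ℓ))
  rw [c2m] at htop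
  have hbot := hcoeff 0
  rw [c0] at hbot
  have hcases : i = 2*ℓ ∧ j = 0 ∨ i = 0 ∧ j = 2*ℓ := by
    by_cases hi2 : 2*(2*ℓ) = 2*i
    · left; omega
    · by_cases hj2 : 2*(2*ℓ) = 2*j
      · right; omega
      · exfalso
        rw [if_neg hi2, if_neg hj2, add_zero] at htop
        have : r^(2*ℓ)/2^(2*ℓ) = 0 := by linear_combination htop / 4
        exact hrm this
  have Pfin : P = C (r^(2*ℓ)/2^(2*ℓ)) * (1 + X^(2*(2*ℓ))) := by
    have h4 : (4:ℂ[X]) ≠ 0 := by norm_num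
    apply mul_left_cancel₀ h4
    rcases hcases with ⟨hi', hj'⟩ | ⟨hi', hj'⟩
    · have hα2 : α^2 = 4*(r^(2*ℓ)/2^(2*ℓ)) := by
        rw [if_pos (by omega), if_neg (by omega), add_zero] at htop
        linear_combination -htop
      have hβ2 : β^2 = 4*(r^(2*ℓ)/2^(2*ℓ)) := by
        rw [if_neg (by omega), if_pos (by omega), zero_add] at hbot
        linear_combination -hbot
      rw [P4', hi', hj', hα2, hβ2,
        show (4:ℂ[X]) = C 4 from (map_ofNat C 4).symm, C_mul]
      ring
    · have hβ2 : β^2 = 4*(r^(2*ℓ)/2^(2*ℓ)) := by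
        rw [if_neg (by omega), if_pos (by omega), zero_add] at htop
        linear_combination -htop
      have hα2 : α^2 = 4*(r^(2*ℓ)/2^(2*ℓ)) := by
        rw [if_pos (by omega), if_neg (by omega), add_zero] at hbot
        linear_combination -hbot
      rw [P4', hi', hj', hα2, hβ2,
        show (4:ℂ[X]) = C 4 from (map_ofNat C 4).symm, C_mul]
      ring
  have hγc : 2 * (r^(2*ℓ)/2^(2*ℓ)) = γ := by
    have harg : s + r * (1 + (1:ℂ)⁻¹) / 2 = e₁ := by rw [he₁]; norm_num
    have hP1 : P.eval 1 = ν.eval e₁ := by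
      rw [hPdef, eval_tw ν (2*ℓ) h2.le r s 1 one_ne_zero, harg, one_pow, one_mul]
    have hP1' : P.eval 1 = r^(2*ℓ)/2^(2*ℓ) * 2 := by
      rw [Pfin]; norm_num
    have hq0 : q.eval e₁ = 0 := by rw [hqfact]; simp
    have hνe₁ : ν.eval e₁ = γ := by
      have hev := congrArg (eval e₁) hheq
      simp only [eval_sub, eval_mul, eval_pow, eval_C, hq0, mul_zero] at hev
      linear_combination hev
    linear_combination hP1 - hP1' + hνe₁
  have model : ∀ z : ℂ, z ≠ 0 →
      ν.eval (s + r * (z + z⁻¹) / 2) = γ/2 * (z^(2*ℓ) + (z⁻¹)^(2*ℓ)) := by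
    intro z hz
    have hev := eval_tw ν (2*ℓ) h2.le r s z hz
    rw [← hPdef, Pfin] at hev
    simp only [eval_mul, eval_add, eval_one, eval_pow, eval_C, eval_X] at hev
    have hzm : (z:ℂ)^(2*ℓ) ≠ 0 := pow_ne_zero _ hz
    apply mul_left_cancel₀ hzm
    rw [← hev]
    have hzz : z^(2*ℓ) * (z⁻¹)^(2*ℓ) = 1 := by
      rw [← mul_pow, mul_inv_cancel₀ hz, one_pow]
    linear_combination ((1 + z^(2*(2*ℓ)))/2) * hγc - (γ/2) * hzz
  have heq_comp : ν.comp (C s + X) = ν.comp (C s - X) := by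
    apply eq_of_infinite_eval_eq
    apply Set.Infinite.mono _ hinf
    intro y hy
    simp only [Set.mem_setOf_eq, eval_comp, eval_add, eval_sub, eval_C, eval_X]
    obtain ⟨z, hz0, hzy⟩ := exists_param r hr y
    rw [← hzy]
    have hminus : s - r * (z + z⁻¹) / 2 = s + r * ((-z) + (-z)⁻¹) / 2 := by
      rw [inv_neg]; ring
    have heven : Even (2*ℓ) := even_two_mul ℓ
    rw [hminus, model z hz0, model (-z) (neg_ne_zero.mpr hz0),
      heven.neg_pow, inv_neg, heven.neg_pow]
  have hs0 : s = 0 :=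
    s_eq_zero_aux ν (2*ℓ) (by omega) (even_two_mul ℓ) h2 hmon h3 s heq_comp
  refine ⟨r, hr, hγc, ?_⟩
  intro z hz
  have hmz := model z hz
  rwa [hs0, zero_add] at hmz



/-- Uniqueness, up to `x ↦ ax` with `aᵐ = 1`, of a monic degree-`m = 2ℓ` polynomial with
vanishing `x^{m−1}` coefficient such that `ν + γ` is the square of a monic squarefree
polynomial of degree `ℓ` and `ν − γ = h² · q` with `h` monic of degree `ℓ−1`, `q` monic
of degree `2`, and `h · q` squarefree. -/
theorem stmt7 (γ : ℂ) (hγ : γ ≠ 0) (ℓ : ℕ) (hℓ : 1 ≤ ℓ)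
    (ν ν' : ℂ[X])
    (hν : ν.Monic ∧ ν.natDegree = 2 * ℓ ∧ ν.coeff (2 * ℓ - 1) = 0 ∧
      (∃ g : ℂ[X], g.Monic ∧ Squarefree g ∧ g.natDegree = ℓ ∧ ν + C γ = g ^ 2) ∧
      (∃ h q : ℂ[X], h.Monic ∧ h.natDegree = ℓ - 1 ∧ q.Monic ∧ q.natDegree = 2 ∧
        Squarefree (h * q) ∧ ν - C γ = h ^ 2 * q))
    (hν' : ν'.Monic ∧ ν'.natDegree = 2 * ℓ ∧ ν'.coeff (2 * ℓ - 1) = 0 ∧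
      (∃ g : ℂ[X], g.Monic ∧ Squarefree g ∧ g.natDegree = ℓ ∧ ν' + C γ = g ^ 2) ∧
      (∃ h q : ℂ[X], h.Monic ∧ h.natDegree = ℓ - 1 ∧ q.Monic ∧ q.natDegree = 2 ∧
        Squarefree (h * q) ∧ ν' - C γ = h ^ 2 * q)) :
    ∃ a : ℂ, a ^ (2 * ℓ) = 1 ∧ ∀ x : ℂ, ν'.eval x = ν.eval (a * x) := by
  obtain ⟨h1, h2, h3, h4, h5⟩ := hν
  obtain ⟨h1', h2', h3', h4', h5'⟩ := hν'
  obtain ⟨r, hr, hγr, hmod⟩ := key γ hγ ℓ hℓ ν h1 h2 h3 h4 h5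
  obtain ⟨r', hr', hγr', hmod'⟩ := key γ hγ ℓ hℓ ν' h1' h2' h3' h4' h5'
  have hpow : r'^(2*ℓ) = r^(2*ℓ) := by
    have h2m : ((2:ℂ))^(2*ℓ) ≠ 0 := pow_ne_zero _ two_ne_zero
    field_simp at hγr hγr'
    linear_combination (hγr' - hγr)/2
  refine ⟨r / r', ?_, ?_⟩
  · rw [div_pow, hpow]
    exact div_self (pow_ne_zero _ hr)
  · intro x
    obtain ⟨z, hz0, hzx⟩ := exists_param r' hr' x
    have harg : r / r' * (r' * (z + z⁻¹) / 2) = r * (z + z⁻¹) / 2 := by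
      field_simp
    rw [← hzx, hmod' z hz0, harg, hmod z hz0]
end

section
/- Let m ≥ 1. Every monic polynomial p ∈ ℂ[x] of degree 2m whose coefficient of x^{2m−1} is zero can be written in exactly one way as p = ν² − 4r, where ν ∈ ℂ[x] is monic of degree m with vanishing coefficient of x^{m−1}, and r ∈ ℂ[x] has degree strictly less than m (with r = 0 allowed). Both existence and uniqueness of the pair (ν, r) hold. -/
open Polynomial

lemma key_s8 (m : ℕ) (p : ℂ[X]) :
    ∀ n : ℕ, n ≤ 2 * m → ∀ ν : ℂ[X], ν.Monic → ν.natDegree = m →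
      (p - ν ^ 2).degree < n →
      ∃ ν' : ℂ[X], ν'.Monic ∧ ν'.natDegree = m ∧ (p - ν' ^ 2).degree < m := by
  intro n
  induction n with
  | zero =>
    intro _ ν hν hνd hlt
    exact ⟨ν, hν, hνd, lt_of_lt_of_le hlt (by exact_mod_cast Nat.zero_le m)⟩
  | succ n ih =>
    intro hn ν hν hνd hlt
    by_cases hnm : n < m
    · exact ⟨ν, hν, hνd, lt_of_lt_of_le hlt (by exact_mod_cast hnm)⟩
    push_neg at hnm
    by_cases hstep : (p - ν ^ 2).degree < n
    · exact ih (le_of_lt hn) ν hν hνd hstep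
    push_neg at hstep
    set e := p - ν ^ 2 with he_def
    have hed : e.degree = n := le_antisymm
      (by exact_mod_cast Order.lt_succ_iff.mp (by exact_mod_cast hlt)) hstep
    have hn2m : n < 2 * m := lt_of_lt_of_le (Nat.lt_succ_self n) hn
    have hnmm : n - m < m := by omega
    have he0 : e ≠ 0 := fun h => by simp [h] at hed
    set c : ℂ := e.coeff n with hc_def
    have hend : e.natDegree = n := natDegree_eq_of_degree_eq_some hed
    have hc0 : c ≠ 0 := by
      rw [hc_def, ← hend]; exact mt leadingCoeff_eq_zero.mp he0
    set t : ℂ[X] := C (c / 2) * X ^ (n - m) with ht_def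
    have htdle : t.degree ≤ (n - m : ℕ) := degree_C_mul_X_pow_le _ _
    have htd : t.degree < m :=
      lt_of_le_of_lt htdle (by exact_mod_cast hnmm)
    set ν' : ℂ[X] := ν + t with hν'_def
    have hνdeg : ν.degree = m := by rw [degree_eq_natDegree hν.ne_zero, hνd]
    have hν' : ν'.Monic := hν.add_of_left (by rwa [hνdeg])
    have hν'd : ν'.natDegree = m := by
      have : ν'.degree = m := by
        rw [hν'_def, degree_add_eq_left_of_degree_lt (by rwa [hνdeg]), hνdeg]
      exact natDegree_eq_of_degree_eq_some this
    have h2 : C c * X ^ (n - m) = 2 * t := by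
      rw [ht_def]
      have : (C c : ℂ[X]) = 2 * C (c / 2) := by
        rw [show (2 : ℂ[X]) = C 2 from (map_ofNat C 2).symm, ← C_mul, mul_div_cancel₀ c two_ne_zero]
      rw [this]; ring
    have hsplit : p - ν' ^ 2 = (e - C c * X ^ (n - m) * ν) - t ^ 2 := by
      rw [he_def, hν'_def, h2]; ring
    -- degree of the first chunk
    have hAdeg : (C c * X ^ (n - m) * ν).degree = (n : WithBot ℕ) := by
      rw [mul_assoc, degree_C_mul hc0, degree_mul, degree_X_pow, hνdeg]
      rw [← Nat.cast_add, Nat.sub_add_cancel hnm]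
    have hA : (e - C c * X ^ (n - m) * ν).degree < (n : WithBot ℕ) := by
      have hlc : e.leadingCoeff = (C c * X ^ (n - m) * ν).leadingCoeff := by
        rw [leadingCoeff, hend, ← hc_def, leadingCoeff_mul, leadingCoeff_mul,
          leadingCoeff_C, leadingCoeff_X_pow, hν.leadingCoeff]
        ring
      have := degree_sub_lt (hed.trans hAdeg.symm) he0 hlc
      rwa [hed] at this
    have hB : (t ^ 2).degree < n := by
      have : (t ^ 2).degree ≤ ((n - m : ℕ) : WithBot ℕ) + ((n - m : ℕ) : WithBot ℕ) := by
        rw [pow_two]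
        exact le_trans (degree_mul_le _ _) (add_le_add htdle htdle)
      refine lt_of_le_of_lt this ?_
      exact_mod_cast (by omega : (n - m) + (n - m) < n)
    have hfin : (p - ν' ^ 2).degree < n := by
      rw [hsplit]
      exact lt_of_le_of_lt (degree_sub_le _ _) (max_lt hA hB)
    exact ih (le_of_lt hn) ν' hν' hν'd hfin

/-- Every monic polynomial `p` of degree `2m` with vanishing `x^{2m−1}` coefficient can
be written in exactly one way as `p = ν² − 4r` with `ν` monic of degree `m`, vanishing
`x^{m−1}` coefficient, and `deg r < m`. -/
theorem stmt8 (m : ℕ) (hm : 1 ≤ m) (p : ℂ[X]) (hp : p.Monic)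
    (hdeg : p.natDegree = 2 * m) (hcoeff : p.coeff (2 * m - 1) = 0) :
    ∃! νr : ℂ[X] × ℂ[X],
      νr.1.Monic ∧ νr.1.natDegree = m ∧ νr.1.coeff (m - 1) = 0 ∧
      νr.2.degree < (m : ℕ) ∧ p = νr.1 ^ 2 - 4 * νr.2 := by
  have hpdeg : p.degree = (2 * m : ℕ) := by rw [degree_eq_natDegree hp.ne_zero, hdeg]
  -- start the descent with ν = X^m
  have hX : (X ^ m : ℂ[X]).Monic := monic_X_pow m
  have hstart : (p - (X ^ m : ℂ[X]) ^ 2).degree < (2 * m : ℕ) := by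
    have h1 : ((X ^ m : ℂ[X]) ^ 2).degree = (2 * m : ℕ) := by
      rw [← pow_mul, degree_X_pow, mul_comm]
    have := degree_sub_lt (hpdeg.trans h1.symm) hp.ne_zero
      (by rw [hp.leadingCoeff, (hX.pow 2).leadingCoeff])
    rwa [hpdeg] at this
  obtain ⟨ν, hν, hνd, herr⟩ := key_s8 m p (2 * m) le_rfl (X ^ m) hX (natDegree_X_pow m) hstart
  -- define r
  set r : ℂ[X] := C (4⁻¹ : ℂ) * (ν ^ 2 - p) with hr_def
  have hrd : r.degree < (m : ℕ) := by
    calc r.degree ≤ (C (4⁻¹ : ℂ)).degree + (ν ^ 2 - p).degree := degree_mul_le _ _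
    _ ≤ 0 + (ν ^ 2 - p).degree := add_le_add degree_C_le le_rfl
    _ = (ν ^ 2 - p).degree := zero_add _
    _ = (p - ν ^ 2).degree := by rw [← degree_neg (p - ν ^ 2)]; ring_nf
    _ < m := herr
  have hpr : p = ν ^ 2 - 4 * r := by
    rw [hr_def, show (4 : ℂ[X]) = C 4 from (map_ofNat C 4).symm, ← mul_assoc, ← C_mul]
    norm_num
  -- coefficient of ν at m-1 vanishes
  have hν1 : ν.coeff (m - 1) = 0 := by
    set q : ℂ[X] := ν - X ^ m with hq_def
    have hqd : q.degree < (m : ℕ) := by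
      have h := degree_sub_lt (p := ν) (q := X ^ m)
        (by rw [degree_X_pow, degree_eq_natDegree hν.ne_zero, hνd])
        hν.ne_zero (by rw [hν.leadingCoeff, leadingCoeff_X_pow])
      rwa [degree_eq_natDegree hν.ne_zero, hνd] at h
    have hνq : ν = X ^ m + q := by rw [hq_def]; ring
    have hsq : (ν ^ 2).coeff (2 * m - 1) = 2 * ν.coeff (m - 1) := by
      have hexp : ν ^ 2 = X ^ (2 * m) + 2 * (X ^ m * q) + q ^ 2 := by
        rw [hνq]; ring
      have hq2 : (q ^ 2).coeff (2 * m - 1) = 0 := by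
        rcases eq_or_ne q 0 with h | h
        · simp [h]
        · apply coeff_eq_zero_of_natDegree_lt
          have hql : q.natDegree < m := (natDegree_lt_iff_degree_lt h).mpr hqd
          calc (q ^ 2).natDegree ≤ 2 * q.natDegree := natDegree_pow_le
          _ < 2 * m - 1 := by omega
      have hXq : (X ^ m * q).coeff (2 * m - 1) = q.coeff (m - 1) := by
        have h : 2 * m - 1 = (m - 1) + m := by omega
        rw [h, coeff_X_pow_mul]
      have hXm : (X ^ (2 * m) : ℂ[X]).coeff (2 * m - 1) = 0 := by
        rw [coeff_X_pow, if_neg (by omega)]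
      have hqν : q.coeff (m - 1) = ν.coeff (m - 1) := by
        rw [hq_def, coeff_sub, coeff_X_pow, if_neg (by omega)]; ring
      rw [hexp, coeff_add, coeff_add, hXm, hq2, coeff_ofNat_mul, hXq, hqν]
      ring
    have hr1 : r.coeff (2 * m - 1) = 0 :=
      coeff_eq_zero_of_degree_lt (lt_of_lt_of_le hrd (by exact_mod_cast by omega : ((m : ℕ) : WithBot ℕ) ≤ (2 * m - 1 : ℕ)))
    have := hcoeff
    rw [hpr, coeff_sub, coeff_ofNat_mul, hr1, mul_zero, sub_zero, hsq] at this
    rcases mul_eq_zero.mp this with h | h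
    · exact absurd h two_ne_zero
    · exact h
  refine ⟨(ν, r), ⟨hν, hνd, hν1, hrd, hpr⟩, ?_⟩
  rintro ⟨ν₂, r₂⟩ ⟨hν₂, hν₂d, -, hr₂d, hpr₂⟩
  have hνeq : ν₂ = ν := by
    by_contra hne
    have hsub0 : ν₂ - ν ≠ 0 := sub_ne_zero.mpr hne
    have haddd : (ν₂ + ν).degree = (m : ℕ) := by
      have h1 : (ν₂ + ν).coeff m = 2 := by
        have := hν₂.coeff_natDegree
        rw [coeff_add, ← hν₂d, hν₂.coeff_natDegree, hν₂d, ← hνd, hν.coeff_natDegree]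
        norm_num
      have hle : (ν₂ + ν).degree ≤ (m : ℕ) := by
        refine le_trans (degree_add_le _ _) (max_le ?_ ?_) <;>
          rw [degree_eq_natDegree (by first | exact hν₂.ne_zero | exact hν.ne_zero)] <;>
          simp [hν₂d, hνd]
      exact le_antisymm hle (le_degree_of_ne_zero (by rw [h1]; norm_num))
    have hprod : ((ν₂ - ν) * (ν₂ + ν)).degree = (ν₂ - ν).degree + (m : ℕ) := by
      rw [degree_mul, haddd]
    have hge : ((m : ℕ) : WithBot ℕ) ≤ ((ν₂ - ν) * (ν₂ + ν)).degree := by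
      rw [hprod]
      calc ((m : ℕ) : WithBot ℕ) = 0 + (m : ℕ) := by rw [zero_add]
      _ ≤ (ν₂ - ν).degree + (m : ℕ) := by
          exact add_le_add (zero_le_degree_iff.mpr hsub0) le_rfl
    have heq : (ν₂ - ν) * (ν₂ + ν) = 4 * r₂ - 4 * r := by
      have := hpr₂.symm.trans hpr
      ring_nf
      ring_nf at this
      linear_combination this
    have h4deg : ∀ s : ℂ[X], s.degree < (m : ℕ) → ((4 : ℂ[X]) * s).degree < (m : ℕ) := by
      intro s hs
      rw [show (4 : ℂ[X]) = C 4 from (map_ofNat C 4).symm]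
      calc (C (4 : ℂ) * s).degree ≤ (C (4 : ℂ)).degree + s.degree := degree_mul_le _ _
      _ ≤ 0 + s.degree := add_le_add degree_C_le le_rfl
      _ = s.degree := zero_add _
      _ < m := hs
    have hlt : ((ν₂ - ν) * (ν₂ + ν)).degree < (m : ℕ) := by
      rw [heq]
      exact lt_of_le_of_lt (degree_sub_le _ _) (max_lt (h4deg r₂ hr₂d) (h4deg r hrd))
    exact absurd hge (not_le.mpr hlt)
  have hreq : r₂ = r := by
    have h4 : (4 : ℂ[X]) * r₂ = 4 * r := by
      have := hpr₂.symm.trans hpr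
      rw [hνeq] at this
      linear_combination -this
    exact mul_left_cancel₀ (by norm_num) h4
  simp [Prod.ext_iff, hνeq, hreq]
end

section
/- Let ℓ ≥ 1 and m = 2ℓ+1. Let ν₀ = x^m + c_{m−2}x^{m−2} + c_{m−4}x^{m−4} + ⋯ + c₁x ∈ ℂ[x] be an odd monic polynomial of degree m (only odd powers of x occur) such that ν₀ + 1 = g₁²·h₁ and ν₀ − 1 = g₂²·h₂, where for i = 1,2 the polynomial g_i is monic of degree ℓ, h_i is monic of degree 1, and g_i·h_i is squarefree. Let α₀, …, α_{m−2} ∈ ℂ and β ∈ ℂ with β ≠ 0, and set δ = (x^m + α_{m−2}x^{m−2} + ⋯ + α₁x + α₀)² − 4β. Then δ can be written as δ = G²·Q with G monic squarefree of degree m−1, Q monic squarefree of degree 2, and G coprime to Q (i.e., δ has exactly m−1 double roots and two simple roots) if and only if there exists t ∈ ℂ, t ≠ 0, such that β = t^m/4, α_j = 0 for all even indices j, and α_{m−2i} = tⁱ·c_{m−2i} for every i = 1, …, ℓ. -/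
open Polynomial

lemma coeff_comp_CX (f : ℂ[X]) (u : ℂ) (j : ℕ) :
    (f.comp (C u * X)).coeff j = f.coeff j * u ^ j := by
  induction f using Polynomial.induction_on' with
  | add p q hp hq => simp [add_comp, hp, hq, add_mul]
  | monomial n a =>
      rw [monomial_comp]
      simp only [mul_pow, ← C_pow]
      rw [show C a * (C (u ^ n) * X ^ n) = C (a * u ^ n) * X ^ n by rw [C_mul]; ring]
      simp only [coeff_C_mul, coeff_X_pow, coeff_monomial]
      by_cases h : n = j
      · subst h; simp
      · simp [h, Ne.symm h]

lemma comp_CX_comp_CX (f : ℂ[X]) {u : ℂ} (hu : u ≠ 0) :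
    (f.comp (C u * X)).comp (C u⁻¹ * X) = f := by
  rw [comp_assoc]
  have h : (C u * X).comp (C u⁻¹ * X) = X := by
    rw [mul_comp, C_comp, X_comp, ← mul_assoc, ← C_mul, mul_inv_cancel₀ hu, C_1, one_mul]
  rw [h, comp_X]

lemma squarefree_comp_CX {f : ℂ[X]} {u : ℂ} (hu : u ≠ 0) (hf : Squarefree f) :
    Squarefree (f.comp (C u * X)) := by
  intro d hd
  have hd' : (d.comp (C u⁻¹ * X)) * (d.comp (C u⁻¹ * X)) ∣ f := by
    obtain ⟨w, hw⟩ := hd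
    refine ⟨w.comp (C u⁻¹ * X), ?_⟩
    have h2 := congrArg (fun p : ℂ[X] => p.comp (C u⁻¹ * X)) hw
    simp only [mul_comp] at h2
    rw [comp_CX_comp_CX f hu] at h2
    exact h2
  have hu1 := hf _ hd'
  obtain ⟨r, hr, hrd⟩ := Polynomial.isUnit_iff.1 hu1
  have hd2 : d = C r := by
    have h3 := congrArg (fun p : ℂ[X] => p.comp (C u * X)) hrd
    simp only [C_comp] at h3
    have h4 : u⁻¹ ≠ 0 := inv_ne_zero hu
    have := comp_CX_comp_CX d h4
    rw [inv_inv] at this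
    rw [← this, h3]
  rw [hd2]
  exact isUnit_C.2 hr

lemma isCoprime_comp_CX {f g : ℂ[X]} (u : ℂ) (h : IsCoprime f g) :
    IsCoprime (f.comp (C u * X)) (g.comp (C u * X)) := by
  obtain ⟨a, b, hab⟩ := h
  exact ⟨a.comp (C u * X), b.comp (C u * X), by
    rw [← mul_comp, ← mul_comp, ← add_comp, hab, one_comp]⟩

lemma squarefree_C_mul {f : ℂ[X]} {a : ℂ} (ha : a ≠ 0) (hf : Squarefree f) :
    Squarefree (C a * f) := by
  intro d hd
  refine hf d (hd.trans ⟨C a⁻¹, ?_⟩)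
  rw [mul_comm (C a) f, mul_assoc, ← C_mul, mul_inv_cancel₀ ha, C_1, mul_one]

-- coefficient helpers
lemma coeff_mul_CX (f : ℂ[X]) (a : ℂ) (k : ℕ) :
    (f * (C a * X)).coeff (k + 1) = a * f.coeff k := by
  rw [show f * (C a * X) = C a * f * X by ring, coeff_mul_X, coeff_C_mul]

lemma coeff_mul_CX_zero (f : ℂ[X]) (a : ℂ) :
    (f * (C a * X)).coeff 0 = 0 := by
  rw [show f * (C a * X) = C a * f * X by ring, coeff_mul_X_zero]

lemma coeff_mul_X2 (f : ℂ[X]) (k : ℕ) :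
    (f * X ^ 2).coeff (k + 2) = f.coeff k := by
  rw [show f * X ^ 2 = f * X * X by ring, coeff_mul_X, coeff_mul_X]

lemma coeff_mul_X2_zero (f : ℂ[X]) : (f * X ^ 2).coeff 0 = 0 := by
  rw [show f * X ^ 2 = f * X * X by ring, coeff_mul_X_zero]

lemma coeff_mul_X2_one (f : ℂ[X]) : (f * X ^ 2).coeff 1 = 0 := by
  rw [show f * X ^ 2 = f * X * X by ring, show (1 : ℕ) = 0 + 1 from rfl, coeff_mul_X,
    coeff_mul_X_zero]

-- second order ODE from first-order one
lemma lemB {P Q : ℂ[X]} {γ : ℂ} {m : ℕ}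
    (hP'0 : derivative P ≠ 0)
    (ode1 : (derivative P) ^ 2 * Q = C ((m : ℂ) ^ 2) * (P ^ 2 - C γ)) :
    C 2 * derivative (derivative P) * Q + derivative P * derivative Q
      = C (2 * (m : ℂ) ^ 2) * P := by
  have h := congrArg derivative ode1
  simp only [derivative_mul, derivative_pow, derivative_C, derivative_sub] at h
  apply mul_left_cancel₀ hP'0
  push_cast at h
  have hC2 : (C 2 : ℂ[X]) = 2 := map_ofNat C 2
  have hC2m : (C (2 * (m : ℂ) ^ 2) : ℂ[X]) = 2 * C ((m:ℂ)^2) := by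
    rw [C_mul, hC2]
  rw [hC2, hC2m]
  rw [hC2] at h
  linear_combination h

-- step 1: derivative P = C m * G  and first ODE
lemma lemA {P G Q : ℂ[X]} {γ : ℂ} (hγ : γ ≠ 0) {m : ℕ} (hm : 1 ≤ m)
    (hP : P.Monic) (hPd : P.natDegree = m)
    (hG : G.Monic) (hGd : G.natDegree = m - 1)
    (heq : P ^ 2 - C γ = G ^ 2 * Q) :
    derivative P = C (m : ℂ) * G := by
  have hG0 : G ≠ 0 := hG.ne_zero
  -- coprime P G
  have hPδ : IsCoprime P (P ^ 2 - C γ) := by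
    refine ⟨C γ⁻¹ * P, -C γ⁻¹, ?_⟩
    have : C γ⁻¹ * P * P + -C γ⁻¹ * (P ^ 2 - C γ) = C γ⁻¹ * C γ := by ring
    rw [this, ← C_mul, inv_mul_cancel₀ hγ, C_1]
  have hPG : IsCoprime P G := hPδ.of_isCoprime_of_dvd_right ⟨G * Q, by rw [heq]; ring⟩
  -- G divides derivative P
  have hGd' : G ∣ derivative P := by
    have h1 : G ∣ derivative (P ^ 2 - C γ) := by
      rw [heq]
      refine ⟨C 2 * derivative G * Q + G * derivative Q, ?_⟩
      simp only [derivative_mul, derivative_pow]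
      push_cast
      ring
    have h2 : derivative (P ^ 2 - C γ) = P * (C 2 * derivative P) := by
      simp only [derivative_sub, derivative_C, derivative_pow]
      push_cast
      ring
    rw [h2] at h1
    have h3 : G ∣ C 2 * derivative P := (hPG.symm).dvd_of_dvd_mul_left h1
    obtain ⟨w, hw⟩ := h3
    exact ⟨C 2⁻¹ * w, by
      have : derivative P = C 2⁻¹ * (C 2 * derivative P) := by
        rw [← mul_assoc, ← C_mul]; norm_num
      rw [this, hw]; ring⟩
  -- leading coefficient considerations
  have hlead : (derivative P).coeff (m - 1) = (m : ℂ) := by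
    have h0 : m - 1 + 1 = m := Nat.succ_pred_eq_of_pos hm
    have := coeff_derivative P (m - 1)
    rw [h0] at this
    rw [this, ← hPd, hP.coeff_natDegree, one_mul]
    rw [hPd]
    exact_mod_cast congrArg (Nat.cast : ℕ → ℂ) h0
  have hm0 : (m : ℂ) ≠ 0 := Nat.cast_ne_zero.2 (by omega)
  have hP'0 : derivative P ≠ 0 := fun h => by simp [h] at hlead; exact hm0 hlead.symm
  have hP'deg : (derivative P).natDegree = m - 1 := by
    refine le_antisymm ?_ (le_natDegree_of_ne_zero (by rw [hlead]; exact hm0))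
    exact (natDegree_derivative_le P).trans (by rw [hPd])
  obtain ⟨K, hK⟩ := hGd'
  have hK0 : K ≠ 0 := fun h => hP'0 (by rw [hK, h, mul_zero])
  have hKdeg : K.natDegree = 0 := by
    have := natDegree_mul hG0 hK0
    rw [← hK, hP'deg, hGd] at this
    omega
  have hKC : K = C (K.coeff 0) := eq_C_of_natDegree_eq_zero hKdeg
  have hKval : K.coeff 0 = (m : ℂ) := by
    have h1 := congrArg (fun p : ℂ[X] => p.coeff (m - 1)) hK
    rw [hlead, hKC] at h1
    rw [mul_comm, coeff_C_mul, ← hGd, hG.coeff_natDegree, mul_one] at h1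
    exact h1.symm
  rw [hK, hKC, hKval, mul_comm]

lemma lemC {P Q : ℂ[X]} {m : ℕ} {q1 q0 : ℂ}
    (hQform : Q = X ^ 2 + C q1 * X + C q0)
    (ode2 : C 2 * derivative (derivative P) * Q + derivative P * derivative Q
      = C (2 * (m : ℂ) ^ 2) * P) :
    ∀ k : ℕ, 2 * ((m : ℂ) ^ 2 - (k : ℂ) ^ 2) * P.coeff k
      = ((k : ℂ) + 1) * (2 * (k : ℂ) + 1) * q1 * P.coeff (k + 1)
        + 2 * ((k : ℂ) + 2) * ((k : ℂ) + 1) * q0 * P.coeff (k + 2) := by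
  have hC2 : (C 2 : ℂ[X]) = 2 := map_ofNat C 2
  have hQ' : derivative Q = C 2 * X + C q1 := by
    rw [hQform]
    simp only [derivative_add, derivative_C_mul, derivative_C, derivative_X, derivative_X_pow]
    push_cast
    rw [hC2]
    ring
  set P2 := derivative (derivative P) with hP2
  set P1 := derivative P with hP1
  have ode3 : (C 2 * P2) * X ^ 2 + ((C 2 * P2) * (C q1 * X)
      + ((C 2 * P2) * C q0 + (P1 * (C 2 * X) + P1 * C q1)))
      = C (2 * (m : ℂ) ^ 2) * P := by
    rw [← ode2, hQ', hQform]
    ring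
  have hcD1 : ∀ n : ℕ, P1.coeff n = P.coeff (n + 1) * ((n : ℂ) + 1) := by
    intro n; rw [hP1, coeff_derivative]
  have hcD2 : ∀ n : ℕ, P2.coeff n = P.coeff (n + 2) * ((n : ℂ) + 2) * ((n : ℂ) + 1) := by
    intro n
    rw [hP2, coeff_derivative, hcD1 (n + 1)]
    push_cast [add_assoc]
    norm_num
  intro k
  have h := congrArg (fun f : ℂ[X] => f.coeff k) ode3
  match k with
  | 0 =>
      rw [coeff_add, coeff_add, coeff_add, coeff_add,
        coeff_mul_X2_zero, coeff_mul_CX_zero, coeff_mul_C, coeff_mul_CX_zero, coeff_mul_C,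
        coeff_C_mul] at h
      simp only [coeff_C_mul, hcD1, hcD2] at h
      push_cast at h ⊢
      linear_combination -h
  | 1 =>
      have e1 : (C 2 * P2 * (C q1 * X)).coeff 1 = q1 * (C 2 * P2).coeff 0 :=
        coeff_mul_CX (C 2 * P2) q1 0
      have e2 : (P1 * (C 2 * X)).coeff 1 = (2 : ℂ) * P1.coeff 0 := coeff_mul_CX P1 2 0
      rw [coeff_add, coeff_add, coeff_add, coeff_add, coeff_mul_X2_one,
        e1, coeff_mul_C, e2, coeff_mul_C,
        coeff_C_mul] at h
      simp only [coeff_C_mul, hcD1, hcD2, add_assoc] at h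
      push_cast at h ⊢
      linear_combination -h
  | (j + 2) =>
      rw [coeff_add, coeff_add, coeff_add, coeff_add, coeff_mul_X2,
        show j + 2 = (j + 1) + 1 from rfl, coeff_mul_CX, coeff_mul_C, coeff_mul_CX, coeff_mul_C,
        coeff_C_mul] at h
      simp only [coeff_C_mul, hcD1, hcD2, add_assoc] at h
      push_cast at h ⊢
      linear_combination -h

lemma sq_cast_ne {m k : ℕ} (h : k < m) : 2 * ((m : ℂ) ^ 2 - (k : ℂ) ^ 2) ≠ 0 := by
  have h1 : ((k : ℂ)) ^ 2 ≠ ((m : ℂ)) ^ 2 := by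
    have hk : (k : ℂ) ^ 2 = ((k ^ 2 : ℕ) : ℂ) := by push_cast; ring
    have h2 : (m : ℂ) ^ 2 = ((m ^ 2 : ℕ) : ℂ) := by push_cast; ring
    rw [hk, h2]
    have h3 : k ^ 2 ≠ m ^ 2 := (Nat.pow_lt_pow_left h (by norm_num)).ne
    exact fun hc => h3 (Nat.cast_injective hc)
  intro hc
  rcases mul_eq_zero.1 hc with h2 | h2
  · norm_num at h2
  · exact h1 (sub_eq_zero.1 h2).symm

lemma cast1_ne (n : ℕ) : ((n : ℂ)) + 1 ≠ 0 := by
  have : ((n : ℂ)) + 1 = ((n + 1 : ℕ) : ℂ) := by push_cast; ring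
  rw [this]
  exact Nat.cast_ne_zero.2 (by omega)

lemma master {l : ℕ} (hl : 1 ≤ l) {P G Q : ℂ[X]} {γ : ℂ} (hγ : γ ≠ 0)
    (hP : P.Monic) (hPd : P.natDegree = 2 * l + 1) (hPm1 : P.coeff (2 * l) = 0)
    (hG : G.Monic) (hGd : G.natDegree = 2 * l)
    (heq : P ^ 2 - C γ = G ^ 2 * Q) :
    (∀ k : ℕ, 2 * (((2 * l + 1 : ℕ) : ℂ) ^ 2 - (k : ℂ) ^ 2) * P.coeff k
        = 2 * ((k : ℂ) + 2) * ((k : ℂ) + 1) * Q.coeff 0 * P.coeff (k + 2)) ∧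
    (∀ i, i ≤ l → P.coeff (2 * l - 2 * i) = 0) ∧
    (P.coeff 1) ^ 2 * Q.coeff 0 = -(((2 * l + 1 : ℕ) : ℂ)) ^ 2 * γ := by
  have hδm : (P ^ 2 - C γ).Monic := by
    have h1 : (P ^ 2).Monic := hP.pow 2
    have h2 : (P ^ 2 - C γ).natDegree = (P ^ 2).natDegree := natDegree_sub_C
    unfold Monic leadingCoeff
    rw [h2, coeff_sub, coeff_C, if_neg, sub_zero]
    · exact h1.coeff_natDegree
    · rw [natDegree_pow, hPd]; omega
  have hG0 : G ≠ 0 := hG.ne_zero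
  have hQ0 : Q ≠ 0 := by
    intro h
    rw [h, mul_zero] at heq
    exact hδm.ne_zero heq
  have hQd : Q.natDegree = 2 := by
    have h1 : (P ^ 2 - C γ).natDegree = 2 * (2 * l + 1) := by
      rw [natDegree_sub_C, natDegree_pow, hPd]
    have h2 := natDegree_mul (pow_ne_zero 2 hG0) hQ0
    rw [← heq, h1, natDegree_pow, hGd] at h2
    omega
  have hQm : Q.Monic := by
    have h1 := hδm
    rw [heq] at h1
    exact (hG.pow 2).of_mul_monic_left h1
  have hP' : derivative P = C ((2 * l + 1 : ℕ) : ℂ) * G :=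
    lemA hγ (by omega) hP hPd hG (by omega) heq
  have hP'0 : derivative P ≠ 0 := by
    rw [hP']
    apply mul_ne_zero _ hG0
    simp only [ne_eq, C_eq_zero, Nat.cast_eq_zero]
    omega
  have ode1 : (derivative P) ^ 2 * Q = C (((2 * l + 1 : ℕ) : ℂ) ^ 2) * (P ^ 2 - C γ) := by
    rw [hP', heq, mul_pow, ← C_pow]
    ring
  have ode2 := lemB hP'0 ode1
  have hQform : Q = X ^ 2 + C (Q.coeff 1) * X + C (Q.coeff 0) := by
    have hQ2 : Q.coeff 2 = 1 := by rw [← hQd]; exact hQm.coeff_natDegree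
    have hsub : (Q - X ^ 2).natDegree ≤ 1 := by
      rw [natDegree_le_iff_coeff_eq_zero]
      intro j hj
      rw [coeff_sub, coeff_X_pow]
      rcases Nat.lt_or_ge j 3 with h3 | h3
      · interval_cases j
        · rw [hQ2]; norm_num
      · rw [if_neg (by omega), coeff_eq_zero_of_natDegree_lt (by omega), sub_zero]
    have h := eq_X_add_C_of_natDegree_le_one hsub
    have h1 : (Q - X ^ 2).coeff 1 = Q.coeff 1 := by
      rw [coeff_sub, coeff_X_pow, if_neg (by omega), sub_zero]
    have h0 : (Q - X ^ 2).coeff 0 = Q.coeff 0 := by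
      rw [coeff_sub, coeff_X_pow, if_neg (by omega), sub_zero]
    rw [h1, h0] at h
    linear_combination h
  have rec0 := lemC hQform ode2
  have hcm : P.coeff (2 * l + 1) = 1 := by rw [← hPd]; exact hP.coeff_natDegree
  have hcm1 : P.coeff (2 * l + 2) = 0 := coeff_eq_zero_of_natDegree_lt (by rw [hPd]; omega)
  have hq1 : Q.coeff 1 = 0 := by
    have h := rec0 (2 * l)
    rw [hPm1, show 2 * l + 1 + 1 = 2 * l + 2 from rfl, hcm, hcm1] at h
    simp only [mul_zero, zero_mul, mul_one, add_zero, zero_add] at h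
    have hA : ((2 * l : ℕ) : ℂ) + 1 ≠ 0 := cast1_ne _
    have hB : 2 * ((2 * l : ℕ) : ℂ) + 1 ≠ 0 := by
      have he : 2 * ((2 * l : ℕ) : ℂ) + 1 = ((4 * l : ℕ) : ℂ) + 1 := by push_cast; ring
      rw [he]; exact cast1_ne _
    rcases mul_eq_zero.1 h.symm with hc | hc
    · rcases mul_eq_zero.1 hc with hc2 | hc2
      · exact absurd hc2 hA
      · exact absurd hc2 hB
    · exact hc
  have rec1 : ∀ k : ℕ, 2 * (((2 * l + 1 : ℕ) : ℂ) ^ 2 - (k : ℂ) ^ 2) * P.coeff k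
      = 2 * ((k : ℂ) + 2) * ((k : ℂ) + 1) * Q.coeff 0 * P.coeff (k + 2) := by
    intro k
    have h := rec0 k
    rw [hq1] at h
    rw [h]
    ring
  have hev : ∀ i, i ≤ l → P.coeff (2 * l - 2 * i) = 0 := by
    intro i
    induction i with
    | zero => intro _; simpa using hPm1
    | succ i ih =>
        intro hi
        have hk2 : 2 * l - 2 * (i + 1) + 2 = 2 * l - 2 * i := by omega
        have h := rec1 (2 * l - 2 * (i + 1))
        rw [hk2, ih (by omega)] at h
        simp only [mul_zero, zero_mul] at h
        exact (mul_eq_zero.1 h).elim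
          (fun hc => absurd hc (sq_cast_ne (by omega))) id
  refine ⟨rec1, hev, ?_⟩
  have h0 : P.coeff 0 = 0 := by
    have h := hev l le_rfl
    rwa [show 2 * l - 2 * l = 0 by omega] at h
  have he := congrArg (fun f : ℂ[X] => f.eval 0) ode1
  simp only [eval_mul, eval_pow, eval_sub, eval_C] at he
  have hD : (derivative P).eval 0 = P.coeff 1 := by
    rw [← coeff_zero_eq_eval_zero, coeff_derivative]
    norm_num
  have hQ0e : Q.eval 0 = Q.coeff 0 := (coeff_zero_eq_eval_zero Q).symm
  have hP0e : P.eval 0 = 0 := by rw [← coeff_zero_eq_eval_zero]; exact h0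
  rw [hD, hQ0e, hP0e] at he
  rw [he]
  ring

lemma sum_coeff (α : ℕ → ℂ) (n k : ℕ) :
    (∑ j ∈ Finset.range n, C (α j) * X ^ j).coeff k = if k < n then α k else 0 := by
  rw [finset_sum_coeff]
  have h : ∀ j ∈ Finset.range n, (C (α j) * X ^ j).coeff k
      = if j = k then α j else 0 := by
    intro j _
    rw [coeff_C_mul, coeff_X_pow]
    by_cases h : j = k
    · rw [if_pos h, if_pos (by omega), mul_one]
    · rw [if_neg (fun hc => h hc.symm), if_neg h, mul_zero]
  rw [Finset.sum_congr rfl h, Finset.sum_ite_eq' (Finset.range n) k α]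
  simp [Finset.mem_range]

lemma sum_deg_lt (α : ℕ → ℂ) (n m : ℕ) (h : n ≤ m) :
    (∑ j ∈ Finset.range n, C (α j) * X ^ j).degree < ((m : ℕ) : WithBot ℕ) := by
  apply lt_of_le_of_lt (degree_sum_le _ _)
  rw [Finset.sup_lt_iff (by exact_mod_cast WithBot.bot_lt_coe m)]
  intro j hj
  apply lt_of_le_of_lt (degree_C_mul_X_pow_le j (α j))
  exact_mod_cast Finset.mem_range.1 hj |>.trans_le h

lemma Pmonic (α : ℕ → ℂ) (l : ℕ) :
    (X ^ (2 * l + 1) + ∑ j ∈ Finset.range (2 * l), C (α j) * X ^ j).Monic :=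
  monic_X_pow_add (sum_deg_lt α _ _ (by omega))

lemma Pdeg (α : ℕ → ℂ) (l : ℕ) :
    (X ^ (2 * l + 1) + ∑ j ∈ Finset.range (2 * l), C (α j) * X ^ j).natDegree
      = 2 * l + 1 := by
  have h := degree_add_eq_left_of_degree_lt (p := (X : ℂ[X]) ^ (2 * l + 1))
    (q := ∑ j ∈ Finset.range (2 * l), C (α j) * X ^ j) ?_
  · have := natDegree_eq_of_degree_eq h
    rw [this, natDegree_X_pow]
  · rw [degree_X_pow]
    exact sum_deg_lt α _ _ (by omega)

lemma Pcoeff (α : ℕ → ℂ) (l k : ℕ) :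
    (X ^ (2 * l + 1) + ∑ j ∈ Finset.range (2 * l), C (α j) * X ^ j).coeff k
      = (if k = 2 * l + 1 then 1 else 0) + (if k < 2 * l then α k else 0) := by
  rw [coeff_add, sum_coeff, coeff_X_pow]

lemma forward (l : ℕ) (hl : 1 ≤ l) (ν : ℂ[X])
    (hmonic : ν.Monic) (hdeg : ν.natDegree = 2 * l + 1)
    (hodd : ∀ j, Even j → ν.coeff j = 0)
    (h1 : ∃ g h : ℂ[X], g.Monic ∧ g.natDegree = l ∧ h.Monic ∧ h.natDegree = 1 ∧
      Squarefree (g * h) ∧ ν + 1 = g ^ 2 * h)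
    (h2 : ∃ g h : ℂ[X], g.Monic ∧ g.natDegree = l ∧ h.Monic ∧ h.natDegree = 1 ∧
      Squarefree (g * h) ∧ ν - 1 = g ^ 2 * h)
    (α : ℕ → ℂ) (β : ℂ) (hβ : β ≠ 0)
    (G Q : ℂ[X]) (hGm : G.Monic) (hGd : G.natDegree = 2 * l)
    (heq : (X ^ (2 * l + 1) + ∑ j ∈ Finset.range (2 * l), C (α j) * X ^ j) ^ 2
          - C (4 * β) = G ^ 2 * Q) :
    ∃ t : ℂ, t ≠ 0 ∧ β = t ^ (2 * l + 1) / 4 ∧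
        (∀ j, j ≤ 2 * l - 1 → Even j → α j = 0) ∧
        (∀ i, 1 ≤ i → i ≤ l →
          α (2 * l + 1 - 2 * i) = t ^ i * ν.coeff (2 * l + 1 - 2 * i)) := by
  obtain ⟨g1, k1, hg1m, hg1d, hk1m, hk1d, hsf1, e1⟩ := h1
  obtain ⟨g2, k2, hg2m, hg2d, hk2m, hk2d, hsf2, e2⟩ := h2
  set P : ℂ[X] := X ^ (2 * l + 1) + ∑ j ∈ Finset.range (2 * l), C (α j) * X ^ j with hPdef
  have hPm1 : P.coeff (2 * l) = 0 := by
    rw [hPdef, Pcoeff, if_neg (by omega), if_neg (by omega), add_zero]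
  have hPc : ∀ j, j < 2 * l → P.coeff j = α j := by
    intro j hj
    rw [hPdef, Pcoeff, if_neg (by omega), if_pos hj, zero_add]
  have hPtop : P.coeff (2 * l + 1) = 1 := by
    rw [← Pdeg α l]; exact (Pmonic α l).coeff_natDegree
  obtain ⟨recP, hevP, relP⟩ := master hl (mul_ne_zero (by norm_num) hβ)
    (Pmonic α l) (Pdeg α l) hPm1 hGm hGd heq
  -- the ν side
  have hGνm : (g1 * g2).Monic := hg1m.mul hg2m
  have hGνd : (g1 * g2).natDegree = 2 * l := by
    rw [natDegree_mul hg1m.ne_zero hg2m.ne_zero, hg1d, hg2d]; omega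
  have heqν : ν ^ 2 - C 1 = (g1 * g2) ^ 2 * (k1 * k2) := by
    rw [C_1, show ν ^ 2 - 1 = (ν + 1) * (ν - 1) by ring, e1, e2]
    ring
  have hνm1 : ν.coeff (2 * l) = 0 := hodd _ ⟨l, by omega⟩
  obtain ⟨recN, hevN, relN⟩ := master hl one_ne_zero hmonic hdeg hνm1 hGνm hGνd heqν
  have hνtop : ν.coeff (2 * l + 1) = 1 := by rw [← hdeg]; exact hmonic.coeff_natDegree
  -- nonvanishing
  have hm2 : (((2 * l + 1 : ℕ) : ℂ)) ^ 2 ≠ 0 :=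
    pow_ne_zero 2 (Nat.cast_ne_zero.2 (by omega))
  have hrhsN : -(((2 * l + 1 : ℕ) : ℂ)) ^ 2 * 1 ≠ 0 := by
    simpa using hm2
  have hr0 : (k1 * k2).coeff 0 ≠ 0 := by
    intro hc
    rw [hc, mul_zero] at relN
    exact hrhsN relN.symm
  have hc1 : ν.coeff 1 ≠ 0 := by
    intro hc
    apply hm2
    have h5 := relN
    rw [hc] at h5
    linear_combination h5
  have hq0 : Q.coeff 0 ≠ 0 := by
    intro hc
    rw [hc, mul_zero] at relP
    have : -(((2 * l + 1 : ℕ) : ℂ)) ^ 2 * (4 * β) ≠ 0 := by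
      apply mul_ne_zero (by simpa using hm2) (mul_ne_zero (by norm_num) hβ)
    exact this relP.symm
  set t : ℂ := Q.coeff 0 / (k1 * k2).coeff 0 with htdef
  have ht0 : t ≠ 0 := div_ne_zero hq0 hr0
  have hq0t : Q.coeff 0 = t * (k1 * k2).coeff 0 := (div_mul_cancel₀ _ hr0).symm
  clear_value t
  -- comparison of coefficients
  have comp : ∀ i, i ≤ l → P.coeff (2 * l + 1 - 2 * i) = t ^ i * ν.coeff (2 * l + 1 - 2 * i) := by
    intro i
    induction i with
    | zero =>
        intro _
        simpa [hPtop, hνtop] using rfl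
    | succ i ih =>
        intro hi
        have ih2 := ih (by omega)
        have kk : (2 * l + 1 - 2 * (i + 1)) + 2 = 2 * l + 1 - 2 * i := by omega
        set k : ℕ := 2 * l + 1 - 2 * (i + 1) with hkdef
        have hA := sq_cast_ne (m := 2 * l + 1) (k := k) (by omega)
        apply mul_left_cancel₀ hA
        have hP_ := recP k
        have hN_ := recN k
        rw [kk] at hP_ hN_
        calc 2 * (((2 * l + 1 : ℕ) : ℂ) ^ 2 - (k : ℂ) ^ 2) * P.coeff k
            = 2 * ((k : ℂ) + 2) * ((k : ℂ) + 1) * Q.coeff 0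
              * P.coeff (2 * l + 1 - 2 * i) := hP_
          _ = t ^ (i + 1) * (2 * ((k : ℂ) + 2) * ((k : ℂ) + 1) * ((k1 * k2).coeff 0)
              * ν.coeff (2 * l + 1 - 2 * i)) := by rw [ih2, hq0t]; ring
          _ = t ^ (i + 1) * (2 * (((2 * l + 1 : ℕ) : ℂ) ^ 2 - (k : ℂ) ^ 2) * ν.coeff k) := by
              rw [← hN_]
          _ = 2 * (((2 * l + 1 : ℕ) : ℂ) ^ 2 - (k : ℂ) ^ 2) * (t ^ (i + 1) * ν.coeff k) := by
              ring
  -- β formula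
  have hp1 : P.coeff 1 = t ^ l * ν.coeff 1 := by
    have h := comp l le_rfl
    rwa [show 2 * l + 1 - 2 * l = 1 by omega] at h
  have hβt : β = t ^ (2 * l + 1) / 4 := by
    have e3 : t ^ (2 * l + 1) * ((ν.coeff 1) ^ 2 * (k1 * k2).coeff 0)
        = (P.coeff 1) ^ 2 * Q.coeff 0 := by
      rw [hp1, hq0t, pow_succ, pow_mul]
      ring
    rw [relN, relP] at e3
    have h6 : t ^ (2 * l + 1) = 4 * β := by
      apply mul_left_cancel₀ hm2
      linear_combination -e3
    rw [h6]
    field_simp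
  refine ⟨t, ht0, hβt, ?_, ?_⟩
  · intro j hj hje
    obtain ⟨r, hr⟩ := hje
    have hjl : j < 2 * l := by omega
    rw [← hPc j hjl]
    have h := hevP (l - r) (by omega)
    rwa [show 2 * l - 2 * (l - r) = j by omega] at h
  · intro i hi1 hil
    have hidx : 2 * l + 1 - 2 * i < 2 * l := by omega
    rw [← hPc _ hidx]
    exact comp i hil

lemma scaled_deg {f : ℂ[X]} {s : ℂ} (hs : s ≠ 0) (hf : f ≠ 0) (d : ℕ) (hd : f.natDegree = d) :
    (C (s ^ d) * f.comp (C s⁻¹ * X)).natDegree = d := by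
  have hσ : (C s⁻¹ * X : ℂ[X]).natDegree = 1 := by
    rw [natDegree_C_mul (inv_ne_zero hs), natDegree_X]
  rw [natDegree_C_mul (pow_ne_zero _ hs), natDegree_comp, hσ, hd, mul_one]

lemma scaled_monic {f : ℂ[X]} {s : ℂ} (hs : s ≠ 0) (hf : f.Monic) (d : ℕ)
    (hd : f.natDegree = d) :
    (C (s ^ d) * f.comp (C s⁻¹ * X)).Monic := by
  have hσ : (C s⁻¹ * X : ℂ[X]).natDegree = 1 := by
    rw [natDegree_C_mul (inv_ne_zero hs), natDegree_X]
  unfold Monic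
  rw [leadingCoeff_mul, leadingCoeff_C, leadingCoeff_comp (by rw [hσ]; omega)]
  have hσl : (C s⁻¹ * X : ℂ[X]).leadingCoeff = s⁻¹ := by
    rw [leadingCoeff_mul, leadingCoeff_C, leadingCoeff_X, mul_one]
  rw [hσl, hf.leadingCoeff, one_mul, hd]
  field_simp
  rw [one_div, ← mul_pow, mul_inv_cancel₀ hs, one_pow]

lemma backward (l : ℕ) (hl : 1 ≤ l) (ν : ℂ[X])
    (hmonic : ν.Monic) (hdeg : ν.natDegree = 2 * l + 1)
    (hodd : ∀ j, Even j → ν.coeff j = 0)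
    (h1 : ∃ g h : ℂ[X], g.Monic ∧ g.natDegree = l ∧ h.Monic ∧ h.natDegree = 1 ∧
      Squarefree (g * h) ∧ ν + 1 = g ^ 2 * h)
    (h2 : ∃ g h : ℂ[X], g.Monic ∧ g.natDegree = l ∧ h.Monic ∧ h.natDegree = 1 ∧
      Squarefree (g * h) ∧ ν - 1 = g ^ 2 * h)
    (α : ℕ → ℂ) (β : ℂ) (hβ : β ≠ 0)
    (t : ℂ) (ht0 : t ≠ 0) (hβt : β = t ^ (2 * l + 1) / 4)
    (hα0 : ∀ j, j ≤ 2 * l - 1 → Even j → α j = 0)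
    (hαt : ∀ i, 1 ≤ i → i ≤ l →
      α (2 * l + 1 - 2 * i) = t ^ i * ν.coeff (2 * l + 1 - 2 * i)) :
    ∃ G Q : ℂ[X],
        G.Monic ∧ Squarefree G ∧ G.natDegree = 2 * l ∧
        Q.Monic ∧ Squarefree Q ∧ Q.natDegree = 2 ∧ IsCoprime G Q ∧
        (X ^ (2 * l + 1) + ∑ j ∈ Finset.range (2 * l), C (α j) * X ^ j) ^ 2
          - C (4 * β) = G ^ 2 * Q := by
  obtain ⟨g1, k1, hg1m, hg1d, hk1m, hk1d, hsf1, e1⟩ := h1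
  obtain ⟨g2, k2, hg2m, hg2d, hk2m, hk2d, hsf2, e2⟩ := h2
  obtain ⟨s, hst⟩ : ∃ s : ℂ, s ^ 2 = t :=
    IsAlgClosed.exists_pow_nat_eq t (by norm_num : (0:ℕ) < 2)
  have hs0 : s ≠ 0 := fun h => ht0 (by rw [← hst, h]; ring)
  -- P equals scaled ν
  have hPeq : (X ^ (2 * l + 1) + ∑ j ∈ Finset.range (2 * l), C (α j) * X ^ j)
      = C (s ^ (2 * l + 1)) * ν.comp (C s⁻¹ * X) := by
    ext j
    rw [Pcoeff, coeff_C_mul, coeff_comp_CX]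
    rcases lt_trichotomy j (2 * l + 1) with hj | hj | hj
    · rw [if_neg (by omega)]
      rcases Nat.even_or_odd j with hje | hjo
      · have hν0 : ν.coeff j = 0 := hodd j hje
        rw [hν0, zero_mul, mul_zero, zero_add]
        rcases Nat.lt_or_ge j (2 * l) with h | h
        · rw [if_pos h, hα0 j (by omega) hje]
        · rw [if_neg (by omega)]
      · -- j odd, j < 2l+1 so j ≤ 2l - 1
        have hj2 : j < 2 * l := by
          rcases hjo with ⟨r, hr⟩; omega
        rw [if_pos hj2, zero_add]
        obtain ⟨r, hr⟩ := hjo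
        have hi1 : 1 ≤ l - r := by omega
        have hi2 : l - r ≤ l := by omega
        have hidx : 2 * l + 1 - 2 * (l - r) = j := by omega
        have h := hαt (l - r) hi1 hi2
        rw [hidx] at h
        rw [h]
        have hpow : s ^ (2 * l + 1) * (ν.coeff j * (s⁻¹) ^ j)
            = ν.coeff j * (s ^ (2 * l + 1 - j) ) := by
          rw [show 2 * l + 1 - j = 2 * l + 1 - j from rfl]
          have hsplit : s ^ (2 * l + 1) = s ^ (2 * l + 1 - j) * s ^ j := by
            rw [← pow_add]
            congr 1
            omega
          rw [hsplit]
          field_simp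
          rw [mul_right_comm, ← mul_pow]
          simp only [one_div, mul_inv_cancel₀ hs0, one_pow, one_mul]
        rw [hpow]
        have : s ^ (2 * l + 1 - j) = t ^ (l - r) := by
          rw [← hst, ← pow_mul]
          congr 1
          omega
        rw [this]
        ring
    · subst hj
      rw [if_pos rfl, if_neg (by omega), add_zero,
        show ν.coeff (2 * l + 1) = 1 from by rw [← hdeg]; exact hmonic.coeff_natDegree, one_mul]
      rw [inv_pow, eq_comm, mul_inv_eq_iff_eq_mul₀ (pow_ne_zero _ hs0), one_mul]
    · rw [if_neg (by omega), if_neg (by omega), coeff_eq_zero_of_natDegree_lt (by omega),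
        zero_mul, mul_zero, add_zero]
  -- coprimality infrastructure
  have hC2 : (C 2 : ℂ[X]) = 2 := map_ofNat C 2
  have hcopν : IsCoprime (ν + 1) (ν - 1) := by
    refine ⟨C (1/2), -C (1/2), ?_⟩
    have h : C ((1:ℂ)/2) * (ν + 1) + -C ((1:ℂ)/2) * (ν - 1) = C ((1:ℂ)/2) * 2 := by ring
    rw [h, ← hC2, ← C_mul]
    norm_num
  have dg1 : g1 ∣ ν + 1 := ⟨g1 * k1, by rw [e1]; ring⟩
  have dk1 : k1 ∣ ν + 1 := ⟨g1 ^ 2, by rw [e1]; ring⟩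
  have dg2 : g2 ∣ ν - 1 := ⟨g2 * k2, by rw [e2]; ring⟩
  have dk2 : k2 ∣ ν - 1 := ⟨g2 ^ 2, by rw [e2]; ring⟩
  have cop_g1g2 : IsCoprime g1 g2 :=
    (hcopν.of_isCoprime_of_dvd_left dg1).of_isCoprime_of_dvd_right dg2
  have cop_g1k2 : IsCoprime g1 k2 :=
    (hcopν.of_isCoprime_of_dvd_left dg1).of_isCoprime_of_dvd_right dk2
  have cop_k1g2 : IsCoprime k1 g2 :=
    (hcopν.of_isCoprime_of_dvd_left dk1).of_isCoprime_of_dvd_right dg2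
  have cop_k1k2 : IsCoprime k1 k2 :=
    (hcopν.of_isCoprime_of_dvd_left dk1).of_isCoprime_of_dvd_right dk2
  obtain ⟨rp1, sfg1, sfk1⟩ := squarefree_mul_iff.1 hsf1
  obtain ⟨rp2, sfg2, sfk2⟩ := squarefree_mul_iff.1 hsf2
  have cop_g1k1 : IsCoprime g1 k1 := rp1.isCoprime
  have cop_g2k2 : IsCoprime g2 k2 := rp2.isCoprime
  have sfG : Squarefree (g1 * g2) :=
    squarefree_mul_iff.2 ⟨cop_g1g2.isRelPrime, sfg1, sfg2⟩
  have sfQ : Squarefree (k1 * k2) :=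
    squarefree_mul_iff.2 ⟨cop_k1k2.isRelPrime, sfk1, sfk2⟩
  have copGQ : IsCoprime (g1 * g2) (k1 * k2) :=
    IsCoprime.mul_left (cop_g1k1.mul_right cop_g1k2) (cop_k1g2.symm.mul_right cop_g2k2)
  -- the witnesses
  refine ⟨C (s ^ (2 * l)) * ((g1 * g2).comp (C s⁻¹ * X)),
    C (s ^ 2) * ((k1 * k2).comp (C s⁻¹ * X)), ?_, ?_, ?_, ?_, ?_, ?_, ?_, ?_⟩
  · exact scaled_monic hs0 (hg1m.mul hg2m) _
      (by rw [natDegree_mul hg1m.ne_zero hg2m.ne_zero, hg1d, hg2d]; omega)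
  · exact squarefree_C_mul (pow_ne_zero _ hs0) (squarefree_comp_CX (inv_ne_zero hs0) sfG)
  · exact scaled_deg hs0 (hg1m.mul hg2m).ne_zero _
      (by rw [natDegree_mul hg1m.ne_zero hg2m.ne_zero, hg1d, hg2d]; omega)
  · exact scaled_monic hs0 (hk1m.mul hk2m) _
      (by rw [natDegree_mul hk1m.ne_zero hk2m.ne_zero, hk1d, hk2d])
  · exact squarefree_C_mul (pow_ne_zero _ hs0) (squarefree_comp_CX (inv_ne_zero hs0) sfQ)
  · exact scaled_deg hs0 (hk1m.mul hk2m).ne_zero _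
      (by rw [natDegree_mul hk1m.ne_zero hk2m.ne_zero, hk1d, hk2d])
  · apply (isCoprime_mul_unit_left_left (isUnit_C.2 (pow_ne_zero (2*l) hs0).isUnit) _ _).2
    apply (isCoprime_mul_unit_left_right (isUnit_C.2 (pow_ne_zero 2 hs0).isUnit) _ _).2
    exact isCoprime_comp_CX _ copGQ
  · -- the main equation
    have hC4β : (C (4 * β) : ℂ[X]) = (C (s ^ (2 * l + 1))) ^ 2 := by
      rw [← C_pow]
      congr 1
      rw [hβt, ← hst]
      field_simp
      ring
    have hkey : ν ^ 2 - 1 = g1 ^ 2 * k1 * (g2 ^ 2 * k2) := by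
      rw [← e1, ← e2]; ring
    have hcomp : (ν.comp (C s⁻¹ * X)) ^ 2 - 1
        = (g1.comp (C s⁻¹ * X)) ^ 2 * k1.comp (C s⁻¹ * X)
          * ((g2.comp (C s⁻¹ * X)) ^ 2 * k2.comp (C s⁻¹ * X)) := by
      have h := congrArg (fun f : ℂ[X] => f.comp (C s⁻¹ * X)) hkey
      simpa only [sub_comp, pow_comp, mul_comp, one_comp] using h
    rw [hPeq, hC4β]
    have hCC : (C (s ^ (2 * l + 1)) : ℂ[X]) ^ 2
        = (C (s ^ (2 * l))) ^ 2 * C (s ^ 2) := by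
      have hs : (s ^ (2 * l + 1)) ^ 2 = (s ^ (2 * l)) ^ 2 * s ^ 2 := by
        rw [← pow_mul, ← pow_mul, ← pow_add]
        congr 1
        omega
      rw [← C_pow, hs, C_mul, C_pow]
    calc (C (s ^ (2 * l + 1)) * ν.comp (C s⁻¹ * X)) ^ 2 - C (s ^ (2 * l + 1)) ^ 2
        = C (s ^ (2 * l + 1)) ^ 2 * ((ν.comp (C s⁻¹ * X)) ^ 2 - 1) := by ring
      _ = C (s ^ (2 * l + 1)) ^ 2 * ((g1.comp (C s⁻¹ * X)) ^ 2 * k1.comp (C s⁻¹ * X)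
          * ((g2.comp (C s⁻¹ * X)) ^ 2 * k2.comp (C s⁻¹ * X))) := by rw [hcomp]
      _ = (C (s ^ (2 * l))) ^ 2 * C (s ^ 2) * ((g1.comp (C s⁻¹ * X)) ^ 2 * k1.comp (C s⁻¹ * X)
          * ((g2.comp (C s⁻¹ * X)) ^ 2 * k2.comp (C s⁻¹ * X))) := by rw [hCC]
      _ = (C (s ^ (2 * l)) * ((g1 * g2).comp (C s⁻¹ * X))) ^ 2
          * (C (s ^ 2) * ((k1 * k2).comp (C s⁻¹ * X))) := by
          simp only [mul_comp]
          ring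

/-- Odd case (`m = 2ℓ+1`): with `ν₀` the special odd monic polynomial of degree `m`
(`ν₀ ± 1 = gᵢ² hᵢ` with `gᵢ` monic of degree `ℓ`, `hᵢ` monic of degree `1`, `gᵢ · hᵢ`
squarefree), a discriminant `δ = (xᵐ + α_{m−2}x^{m−2} + ⋯ + α₀)² − 4β` with `β ≠ 0` has
exactly `m−1` double roots and two simple roots iff `β = tᵐ/4`, `α_j = 0` for even `j`,
and `α_{m−2i} = tⁱ c_{m−2i}` for some `t ≠ 0`. -/
theorem stmt11 (ℓ : ℕ) (hℓ : 1 ≤ ℓ) (ν₀ : ℂ[X])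
    (hmonic : ν₀.Monic) (hdeg : ν₀.natDegree = 2 * ℓ + 1)
    (hodd : ∀ j, Even j → ν₀.coeff j = 0)
    (h1 : ∃ g h : ℂ[X], g.Monic ∧ g.natDegree = ℓ ∧ h.Monic ∧ h.natDegree = 1 ∧
      Squarefree (g * h) ∧ ν₀ + 1 = g ^ 2 * h)
    (h2 : ∃ g h : ℂ[X], g.Monic ∧ g.natDegree = ℓ ∧ h.Monic ∧ h.natDegree = 1 ∧
      Squarefree (g * h) ∧ ν₀ - 1 = g ^ 2 * h)
    (α : ℕ → ℂ) (β : ℂ) (hβ : β ≠ 0) :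
    (∃ G Q : ℂ[X],
        G.Monic ∧ Squarefree G ∧ G.natDegree = 2 * ℓ ∧
        Q.Monic ∧ Squarefree Q ∧ Q.natDegree = 2 ∧ IsCoprime G Q ∧
        (X ^ (2 * ℓ + 1) + ∑ j ∈ Finset.range (2 * ℓ), C (α j) * X ^ j) ^ 2
          - C (4 * β) = G ^ 2 * Q)
    ↔ (∃ t : ℂ, t ≠ 0 ∧ β = t ^ (2 * ℓ + 1) / 4 ∧
        (∀ j, j ≤ 2 * ℓ - 1 → Even j → α j = 0) ∧
        (∀ i, 1 ≤ i → i ≤ ℓ →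
          α (2 * ℓ + 1 - 2 * i) = t ^ i * ν₀.coeff (2 * ℓ + 1 - 2 * i))) := by
  constructor
  · rintro ⟨G, Q, hGm, _, hGd, _, _, _, _, heq⟩
    exact forward ℓ hℓ ν₀ hmonic hdeg hodd h1 h2 α β hβ G Q hGm hGd heq
  · rintro ⟨t, ht0, hβt, hα0, hαt⟩
    exact backward ℓ hℓ ν₀ hmonic hdeg hodd h1 h2 α β hβ t ht0 hβt hα0 hαt
end

section
/- Let ℓ ≥ 1 and m = 2ℓ. Let ν₀ = x^m + c_{m−2}x^{m−2} + c_{m−4}x^{m−4} + ⋯ + c₀ ∈ ℂ[x] be an even monic polynomial of degree m (only even powers of x occur) such that ν₀ + 1 = g² for some monic squarefree g of degree ℓ, and ν₀ − 1 = h²·q with h monic of degree ℓ−1, q monic of degree 2, and h·q squarefree. Then there exist complex numbers λ₁, …, λ_{ℓ−1} and μ such that, identically in the two complex variables x and t, (x^m + c_{m−2}·t·x^{m−2} + c_{m−4}·t²·x^{m−4} + ⋯ + c₀·t^ℓ)² − t^m = x² · ∏_{i=1}^{ℓ−1}(x² − λᵢ·t)² · (x² − μ·t). -/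
open Polynomial


/-- Sum over an even-supported family equals sum over even indices. -/
lemma sum_even_aux (N : ℕ) (a : ℕ → ℂ) (h : ∀ n, Odd n → a n = 0) :
    ∑ n ∈ Finset.range (2 * N + 1), a n = ∑ j ∈ Finset.range (N + 1), a (2 * j) := by
  induction N with
  | zero => simp
  | succ N ih =>
      have : 2 * (N + 1) + 1 = (2 * N + 1) + 1 + 1 := by ring
      rw [this, Finset.sum_range_succ, Finset.sum_range_succ, ih,
        Finset.sum_range_succ (n := N + 1)]
      have ho : a (2 * N + 1) = 0 := h _ ⟨N, by ring⟩
      have : 2 * N + 1 + 1 = 2 * (N + 1) := by ring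
      rw [ho, this]; ring

/-- Any monic polynomial over ℂ factors (at the level of evaluations) into linear factors. -/
lemma splits_aux : ∀ (n : ℕ) (W : ℂ[X]), W.Monic → W.natDegree = n →
    ∃ r : ℕ → ℂ, ∀ z : ℂ, W.eval z = ∏ j ∈ Finset.range n, (z - r j) := by
  intro n
  induction n with
  | zero =>
      intro W hW hd
      refine ⟨fun _ => 0, fun z => ?_⟩
      rw [Monic.natDegree_eq_zero hW |>.mp hd]
      simp
  | succ n ih =>
      intro W hW hd
      obtain ⟨a, ha⟩ := IsAlgClosed.exists_root W (by
        rw [degree_eq_natDegree hW.ne_zero, hd]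
        exact_mod_cast Nat.succ_ne_zero n)
      obtain ⟨V, hV⟩ := Polynomial.dvd_iff_isRoot.mpr ha
      have hVm : V.Monic := (monic_X_sub_C a).of_mul_monic_left (hV ▸ hW)
      have hVne : V ≠ 0 := hVm.ne_zero
      have hVd : V.natDegree = n := by
        have := hd
        rw [hV, natDegree_mul (X_sub_C_ne_zero a) hVne, natDegree_X_sub_C] at this
        omega
      obtain ⟨r, hr⟩ := ih V hVm hVd
      refine ⟨fun j => if j < n then r j else a, fun z => ?_⟩
      rw [Finset.prod_range_succ]
      have : ∏ j ∈ Finset.range n, (z - if j < n then r j else a)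
          = ∏ j ∈ Finset.range n, (z - r j) :=
        Finset.prod_congr rfl fun j hj => by simp [Finset.mem_range.mp hj]
      rw [this, hV]
      simp only [lt_irrefl n, if_false, eval_mul, eval_sub, eval_X, eval_C, hr z]
      ring


/-- Even case (`m = 2ℓ`): for the special even monic polynomial
`ν₀ = xᵐ + c_{m−2}x^{m−2} + ⋯ + c₀`, there are constants `λ₁, …, λ_{ℓ−1}, μ` with
`(xᵐ + c_{m−2} t x^{m−2} + ⋯ + c₀ tˡ)² − tᵐ = x² ∏ᵢ (x² − λᵢ t)² · (x² − μ t)`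
for all complex `x, t`. -/
theorem stmt12 (ℓ : ℕ) (hℓ : 1 ≤ ℓ) (ν₀ : ℂ[X])
    (hmonic : ν₀.Monic) (hdeg : ν₀.natDegree = 2 * ℓ)
    (heven : ∀ j, Odd j → ν₀.coeff j = 0)
    (h1 : ∃ g : ℂ[X], g.Monic ∧ Squarefree g ∧ g.natDegree = ℓ ∧ ν₀ + 1 = g ^ 2)
    (h2 : ∃ h q : ℂ[X], h.Monic ∧ h.natDegree = ℓ - 1 ∧ q.Monic ∧ q.natDegree = 2 ∧
      Squarefree (h * q) ∧ ν₀ - 1 = h ^ 2 * q) :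
    ∃ (lam : ℕ → ℂ) (mu : ℂ), ∀ x t : ℂ,
      (x ^ (2 * ℓ) + ∑ i ∈ Finset.Icc 1 ℓ,
          ν₀.coeff (2 * ℓ - 2 * i) * t ^ i * x ^ (2 * ℓ - 2 * i)) ^ 2 - t ^ (2 * ℓ)
        = x ^ 2 * (∏ i ∈ Finset.Icc 1 (ℓ - 1), (x ^ 2 - lam i * t) ^ 2)
          * (x ^ 2 - mu * t) := by
  obtain ⟨k, rfl⟩ : ∃ k, ℓ = k + 1 := ⟨ℓ - 1, by omega⟩
  obtain ⟨g, hgm, -, hgdeg, hgeq⟩ := h1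
  obtain ⟨h, q, hhm, hhdeg, hqm, hqdeg, -, hheq⟩ := h2
  simp only [Nat.add_sub_cancel] at hhdeg ⊢
  set D : ℂ[X] := g * h with hD
  have hDm : D.Monic := hgm.mul hhm
  have hDdeg : D.natDegree = 2 * k + 1 := by
    rw [hD, natDegree_mul hgm.ne_zero hhm.ne_zero, hgdeg, hhdeg]; ring
  -- top coefficient
  have ctop : ν₀.coeff (2 * (k + 1)) = 1 := by
    have := hmonic.coeff_natDegree; rwa [hdeg] at this
  -- the key factorization ν₀² - 1 = D² q
  have hpm : ν₀ ^ 2 - 1 = D ^ 2 * q := by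
    rw [hD]
    linear_combination (ν₀ - 1) * hgeq + g ^ 2 * hheq
  -- derivative facts
  have e1 : derivative ν₀ = C 2 * g * derivative g := by
    have := congrArg derivative hgeq
    simpa [derivative_pow] using this
  have e2 : derivative ν₀ = C 2 * h * derivative h * q + h ^ 2 * derivative q := by
    have := congrArg derivative hheq
    simpa [derivative_mul, derivative_pow] using this
  have hder1 : g ∣ derivative ν₀ := ⟨C 2 * derivative g, by rw [e1]; ring⟩
  have hder2 : h ∣ derivative ν₀ :=
    ⟨C 2 * derivative h * q + h * derivative q, by rw [e2]; ring⟩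
  have hcop : IsCoprime g h := by
    classical
    refine EuclideanDomain.gcd_isUnit_iff.mp (isUnit_of_dvd_unit ?_
      (by exact isUnit_C.mpr (isUnit_iff_ne_zero.mpr (two_ne_zero)) : IsUnit (C (2:ℂ))))
    have d1 : EuclideanDomain.gcd g h ∣ ν₀ + 1 :=
      (EuclideanDomain.gcd_dvd_left g h).trans (hgeq ▸ dvd_pow_self g two_ne_zero)
    have d2 : EuclideanDomain.gcd g h ∣ ν₀ - 1 :=
      (EuclideanDomain.gcd_dvd_right g h).trans (hheq ▸ ⟨h * q, by ring⟩)
    have := dvd_sub d1 d2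
    have e : (ν₀ + 1) - (ν₀ - 1) = C 2 := by
      rw [show (C (2:ℂ)) = (2:ℂ[X]) from map_ofNat C 2]; ring
    rwa [e] at this
  have hdvd : D ∣ derivative ν₀ := hcop.mul_dvd hder1 hder2
  have hdcoeff : ∀ n : ℕ, Even n → (derivative ν₀).coeff n = 0 := by
    intro n hn
    rw [coeff_derivative, heven (n + 1) (Even.add_one hn), zero_mul]
  have hcoefftop : (derivative ν₀).coeff (2 * k + 1) = ((2 * k + 2 : ℕ) : ℂ) := by
    rw [coeff_derivative, show 2 * k + 1 + 1 = 2 * (k + 1) by ring, ctop]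
    push_cast; ring
  have hdne : derivative ν₀ ≠ 0 := by
    intro h0
    rw [h0, coeff_zero] at hcoefftop
    exact Nat.cast_ne_zero.mpr (by omega) hcoefftop.symm
  -- derivative ν₀ = D * C c
  obtain ⟨c, hc, hcd⟩ : ∃ c : ℂ, c ≠ 0 ∧ derivative ν₀ = D * C c := by
    obtain ⟨cp, hcp⟩ := hdvd
    have hcpne : cp ≠ 0 := by
      intro h0; rw [h0, mul_zero] at hcp; exact hdne hcp
    have hle : (derivative ν₀).natDegree ≤ 2 * k + 1 := by
      have := natDegree_derivative_lt (show ν₀.natDegree ≠ 0 by omega)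
      omega
    rw [hcp, natDegree_mul hDm.ne_zero hcpne, hDdeg] at hle
    have hcp0 : cp = C (cp.coeff 0) := eq_C_of_natDegree_eq_zero (by omega)
    refine ⟨cp.coeff 0, ?_, by rw [hcp]; exact congrArg (D * ·) hcp0⟩
    intro h0
    rw [h0, map_zero] at hcp0
    exact hcpne hcp0
  -- D has only odd-degree coefficients
  have hDodd : ∀ n : ℕ, Even n → D.coeff n = 0 := by
    intro n hn
    have := hdcoeff n hn
    rw [hcd, coeff_mul_C] at this
    exact (mul_eq_zero.mp this).resolve_right hc
  -- D = X * F
  obtain ⟨F, hF⟩ : X ∣ D := X_dvd_iff.mpr (hDodd 0 Even.zero)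
  have hFm : F.Monic := monic_X.of_mul_monic_left (hF ▸ hDm)
  have hFdeg : F.natDegree = 2 * k := by
    have := hDdeg
    rw [hF, natDegree_mul X_ne_zero hFm.ne_zero, natDegree_X] at this
    omega
  have hFodd : ∀ n : ℕ, Odd n → F.coeff n = 0 := by
    intro n hn
    have : D.coeff (n + 1) = 0 := hDodd (n + 1) (Odd.add_one hn)
    rwa [hF, coeff_X_mul] at this
  -- the even companion W of F
  set W : ℂ[X] := ∑ j ∈ Finset.range (k + 1), C (F.coeff (2 * j)) * X ^ j with hW
  have hWcoeff : ∀ j, W.coeff j = if j ≤ k then F.coeff (2 * j) else 0 := by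
    intro j
    rw [hW, finset_sum_coeff]
    simp only [coeff_C_mul_X_pow]
    rw [Finset.sum_ite_eq (Finset.range (k + 1)) j (fun j' => F.coeff (2 * j'))]
    simp [Nat.lt_succ_iff]
  have hWk : W.coeff k = 1 := by
    rw [hWcoeff k, if_pos le_rfl, ← hFdeg]
    exact hFm.coeff_natDegree
  have hWdle : W.natDegree ≤ k := by
    refine natDegree_le_iff_coeff_eq_zero.mpr fun N hN => ?_
    rw [hWcoeff N, if_neg (by omega)]
  have hWdeg : W.natDegree = k :=
    le_antisymm hWdle (le_natDegree_of_ne_zero (hWk ▸ one_ne_zero))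
  have hWm : W.Monic := by
    have : W.leadingCoeff = 1 := by rw [leadingCoeff, hWdeg, hWk]
    exact this
  have hFW : ∀ z : ℂ, F.eval z = W.eval (z ^ 2) := by
    intro z
    rw [eval_eq_sum_range, hFdeg,
      sum_even_aux k _ (fun n hn => by rw [hFodd n hn, zero_mul]),
      hW, eval_finset_sum]
    refine Finset.sum_congr rfl fun j hj => ?_
    rw [eval_mul, eval_C, eval_pow, eval_X, ← pow_mul]
  obtain ⟨r, hr⟩ := splits_aux k W hWm hWdeg
  -- evenness of evaluations of ν₀ and oddness for D
  have hNeval : ∀ y : ℂ, ν₀.eval (-y) = ν₀.eval y := by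
    intro y
    rw [eval_eq_sum_range, eval_eq_sum_range (p := ν₀) y]
    refine Finset.sum_congr rfl fun n _ => ?_
    rcases Nat.even_or_odd n with hn | hn
    · rw [hn.neg_pow]
    · rw [heven n hn, zero_mul, zero_mul]
  have hDeval : ∀ y : ℂ, D.eval (-y) = -D.eval y := by
    intro y
    rw [eval_eq_sum_range, eval_eq_sum_range (p := D) y, ← Finset.sum_neg_distrib]
    refine Finset.sum_congr rfl fun n _ => ?_
    rcases Nat.even_or_odd n with hn | hn
    · rw [hDodd n hn, zero_mul, zero_mul, neg_zero]
    · rw [hn.neg_pow]; ring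
  -- structure of q
  set μ : ℂ := -q.coeff 0 with hμ
  have hq2 : q.coeff 2 = 1 := by rw [← hqdeg]; exact hqm.coeff_natDegree
  have hqe : ∀ z : ℂ, q.eval z = q.coeff 0 + q.coeff 1 * z + z ^ 2 := by
    intro z
    rw [eval_eq_sum_range, hqdeg, Finset.sum_range_succ, Finset.sum_range_succ,
      Finset.sum_range_one, hq2]
    ring
  have hq1 : q.coeff 1 = 0 := by
    obtain ⟨y, hy⟩ : ∃ y : ℂ, y * D.eval y ≠ 0 := by
      by_contra hcon
      push_neg at hcon
      have : (X : ℂ[X]) * D = 0 := Polynomial.funext fun y => by simpa using hcon y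
      exact (monic_X.mul hDm).ne_zero this
    have hy0 : y ≠ 0 := fun h0 => hy (by rw [h0, zero_mul])
    have hDy : D.eval y ≠ 0 := fun h0 => hy (by rw [h0, mul_zero])
    have E1 : ν₀.eval y ^ 2 - 1 = D.eval y ^ 2 * q.eval y := by
      have := congrArg (eval y) hpm
      simpa using this
    have E2 : ν₀.eval y ^ 2 - 1 = D.eval y ^ 2 * q.eval (-y) := by
      have := congrArg (eval (-y)) hpm
      simp only [eval_sub, eval_pow, eval_one, eval_mul] at this
      rwa [hNeval y, hDeval y, neg_pow, Even.neg_one_pow (by decide), one_mul] at this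
    have hqq : q.eval (-y) = q.eval y :=
      mul_left_cancel₀ (pow_ne_zero 2 hDy) (E2.symm.trans E1)
    rw [hqe y, hqe (-y)] at hqq
    have : q.coeff 1 * y = 0 := by linear_combination (-1/2 : ℂ) * hqq
    exact (mul_eq_zero.mp this).resolve_right hy0
  have hqeval : ∀ z : ℂ, q.eval z = z ^ 2 - μ := by
    intro z
    rw [hqe z, hq1, hμ]
    ring
  refine ⟨fun i => r (i - 1), μ, fun x t => ?_⟩
  beta_reduce
  rcases eq_or_ne t 0 with rfl | ht
  · have hsum0 : ∑ i ∈ Finset.Icc 1 (k + 1),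
        ν₀.coeff (2 * (k + 1) - 2 * i) * (0 : ℂ) ^ i * x ^ (2 * (k + 1) - 2 * i) = 0 :=
      Finset.sum_eq_zero fun i hi => by
        rw [zero_pow (Nat.one_le_iff_ne_zero.mp (Finset.mem_Icc.mp hi).1), mul_zero, zero_mul]
    rw [hsum0, add_zero, zero_pow (show 2 * (k + 1) ≠ 0 by omega)]
    simp only [mul_zero, sub_zero]
    rw [Finset.prod_const, Nat.card_Icc, Nat.add_sub_cancel]
    ring
  · obtain ⟨s, hs⟩ := IsAlgClosed.exists_pow_nat_eq t (n := 2) (by norm_num)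
    have hsne : s ≠ 0 := by
      intro h0; apply ht; rw [← hs, h0]; ring
    set u : ℂ := x / s with hu
    have hx : x = s * u := by rw [hu]; field_simp
    set E : ℂ := ν₀.eval u with hE
    set A : ℂ := ∏ j ∈ Finset.range k, (u ^ 2 - r j) with hA
    have hEsum : E = ∑ j ∈ Finset.range (k + 1 + 1), ν₀.coeff (2 * j) * u ^ (2 * j) := by
      rw [hE, eval_eq_sum_range, hdeg]
      exact sum_even_aux (k + 1) _ (fun n hn => by rw [heven n hn, zero_mul])
    have hterm : ∀ j ∈ Finset.range (k + 1 + 1),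
        s ^ (2 * (k + 1)) * u ^ (2 * j) = t ^ (k + 1 - j) * x ^ (2 * j) := by
      intro j hj
      have hjle : j ≤ k + 1 := by simpa [Nat.lt_succ_iff] using hj
      rw [hu, div_pow, ← hs, show 2 * (k + 1) = 2 * j + 2 * (k + 1 - j) by omega, pow_add]
      field_simp
      ring
    have hS : x ^ (2 * (k + 1)) + ∑ i ∈ Finset.Icc 1 (k + 1),
        ν₀.coeff (2 * (k + 1) - 2 * i) * t ^ i * x ^ (2 * (k + 1) - 2 * i)
        = s ^ (2 * (k + 1)) * E := by
      have step : s ^ (2 * (k + 1)) * E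
          = ∑ j ∈ Finset.range (k + 1 + 1), ν₀.coeff (2 * j) * t ^ (k + 1 - j) * x ^ (2 * j) := by
        rw [hEsum, Finset.mul_sum]
        refine Finset.sum_congr rfl fun j hj => ?_
        linear_combination ν₀.coeff (2 * j) * hterm j hj
      rw [step, Finset.sum_range_succ]
      simp only [ctop, Nat.sub_self, pow_zero, one_mul, mul_one]
      rw [add_comm]
      congr 1
      refine (Finset.sum_nbij' (fun j => k + 1 - j) (fun i => k + 1 - i) ?_ ?_ ?_ ?_ ?_).symm
      · intro a ha; simp only [Finset.mem_range] at ha; simp only [Finset.mem_Icc]; omega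
      · intro a ha; simp only [Finset.mem_Icc] at ha; simp only [Finset.mem_range]; omega
      · intro a ha; simp only [Finset.mem_range] at ha
        show k + 1 - (k + 1 - a) = a; omega
      · intro a ha; simp only [Finset.mem_Icc] at ha
        show k + 1 - (k + 1 - a) = a; omega
      · intro a ha
        simp only [Finset.mem_range] at ha
        have e1 : 2 * (k + 1) - 2 * (k + 1 - a) = 2 * a := by omega
        have e2 : k + 1 - a ≤ k + 1 := by omega
        rw [e1]
    have hprod : ∏ i ∈ Finset.Icc 1 k, (x ^ 2 - r (i - 1) * t) ^ 2 = (t ^ k * A) ^ 2 := by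
      rw [Finset.prod_pow]
      have p1 : ∏ i ∈ Finset.Icc 1 k, (x ^ 2 - r (i - 1) * t)
          = ∏ j ∈ Finset.range k, (x ^ 2 - r j * t) := by
        refine Finset.prod_nbij' (fun i => i - 1) (fun j => j + 1) ?_ ?_ ?_ ?_ ?_
        · intro a ha; simp only [Finset.mem_Icc] at ha; simp only [Finset.mem_range]; omega
        · intro a ha; simp only [Finset.mem_range] at ha; simp only [Finset.mem_Icc]; omega
        · intro a ha; simp only [Finset.mem_Icc] at ha; show a - 1 + 1 = a; omega
        · intro a ha; show a + 1 - 1 = a; omega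
        · intro a _; rfl
      have p2 : ∏ j ∈ Finset.range k, (x ^ 2 - r j * t) = t ^ k * A := by
        calc ∏ j ∈ Finset.range k, (x ^ 2 - r j * t)
            = ∏ j ∈ Finset.range k, (t * (u ^ 2 - r j)) :=
              Finset.prod_congr rfl fun j _ => by rw [hx, ← hs]; ring
          _ = (∏ _j ∈ Finset.range k, t) * ∏ j ∈ Finset.range k, (u ^ 2 - r j) :=
              Finset.prod_mul_distrib
          _ = t ^ k * A := by rw [Finset.prod_const, Finset.card_range]
      rw [p1, p2]
    have hDu : D.eval u = u * F.eval u := by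
      rw [hF, eval_mul, eval_X]
    have key : E ^ 2 - 1 = (u * A) ^ 2 * (u ^ 2 - μ) := by
      have hpmu := congrArg (eval u) hpm
      simp only [eval_sub, eval_pow, eval_one, eval_mul] at hpmu
      rw [hDu, hFW u, hr (u ^ 2), hqeval u] at hpmu
      rw [hE, hA]
      linear_combination hpmu
    rw [hS, hprod, hx, ← hs]
    linear_combination ((s : ℂ) ^ 2) ^ (2 * (k + 1)) * key
end
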